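/- arXiv:1409.4250 — 2 statements merged into one kernel-verified Lean document; each statement's English description precedes it below -/
import Mathlib

section
/- Let α < 1 and c ≥ 0, set z := (1,1) ∈ ℤ², and define the smooth functions X^{n,c}(x) := c^{1/2} 2^{n+1} cos(2^n⟨z,x⟩) on 𝕋². Then (1) ‖X^{n,c}‖_{α−2} → 0 as n → ∞, and (2) ‖X^{n,c}∘KX^{n,c} − c‖_{2α−2} → 0 as n → ∞. Quantitatively, ‖X^{n,c}‖_{α−2} ≲ c^{1/2} max(2^{−n(1−α)}, 2^n χ(2^n z)) and ‖X^{n,c}∘KX^{n,c} − c‖_{2α−2} ≲ c max(2^{−2n(1−α)}, χ(2^n z)). -/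
noncomputable section

open MeasureTheory ProbabilityTheory Filter Topology

namespace GPAM

/-- Frequencies: the dual lattice `ℤ²` of the two-dimensional torus `𝕋²`. -/
abbrev Freq : Type := ℤ × ℤ

/-- A periodic distribution on `𝕋²`, represented by its Fourier coefficients. -/
abbrev Dist : Type := Freq → ℂ

def toR (k : Freq) : ℝ × ℝ := ((k.1 : ℝ), (k.2 : ℝ))

/-- Euclidean norm on `ℝ²`. -/
def enorm2 (x : ℝ × ℝ) : ℝ := Real.sqrt (x.1 ^ 2 + x.2 ^ 2)

/-- `|k|` for a frequency `k ∈ ℤ²`. -/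
def freqNorm (k : Freq) : ℝ := enorm2 (toR k)

/-- Evaluation of a Fourier series at a point `x` of (a fundamental domain of) `𝕋²`. -/
def eval (a : Dist) (x : ℝ × ℝ) : ℂ :=
  ∑' k : Freq, a k * Complex.exp (Complex.I * (((k.1 : ℝ) * x.1 + (k.2 : ℝ) * x.2 : ℝ) : ℂ))

/-- The `L^∞` norm of (the function represented by) `a`. -/
def supNorm (a : Dist) : ℝ := ⨆ x : ℝ × ℝ, ‖eval a x‖

/-- A Littlewood–Paley pair `(χ, ρ)` on `ℝ²`. -/
structure LP where
  chi : ℝ × ℝ → ℝ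
  rho : ℝ × ℝ → ℝ
  chi_smooth : ContDiff ℝ (⊤ : ℕ∞) chi
  rho_smooth : ContDiff ℝ (⊤ : ℕ∞) rho
  chi_nonneg : ∀ x, 0 ≤ chi x
  rho_nonneg : ∀ x, 0 ≤ rho x
  chi_radial : ∀ x y, enorm2 x = enorm2 y → chi x = chi y
  rho_radial : ∀ x y, enorm2 x = enorm2 y → rho x = rho y
  chi_ball : ∃ R : ℝ, 0 < R ∧ ∀ x, R ≤ enorm2 x → chi x = 0
  rho_annulus : ∃ r R : ℝ, 0 < r ∧ r < R ∧ ∀ x, enorm2 x < r ∨ R < enorm2 x → rho x = 0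
  partition : ∀ x, chi x + ∑' j : ℕ, rho ((2 : ℝ) ^ (-(j : ℤ)) • x) = 1
  disj_chi_rho : ∀ j : ℕ, 1 ≤ j → ∀ x, chi x * rho ((2 : ℝ) ^ (-(j : ℤ)) • x) = 0
  disj_rho_rho : ∀ i j : ℕ, 1 < |(i : ℤ) - (j : ℤ)| →
    ∀ x, rho ((2 : ℝ) ^ (-(i : ℤ)) • x) * rho ((2 : ℝ) ^ (-(j : ℤ)) • x) = 0

/-- The Littlewood–Paley block `Δ_j`, `j ≥ -1`, acting on Fourier coefficients. -/
def LP.block (L : LP) (j : ℤ) (a : Dist) : Dist := fun k =>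
  if j = -1 then (L.chi (toR k) : ℂ) * a k
  else ((L.rho ((2 : ℝ) ^ (-j) • toR k) : ℝ) : ℂ) * a k

/-- The Besov–Hölder norm `‖a‖_β = sup_{j ≥ -1} 2^{jβ} ‖Δ_j a‖_{L^∞}` of `𝒞^β = B^β_{∞,∞}`. -/
def LP.besov (L : LP) (β : ℝ) (a : Dist) : ℝ :=
  ⨆ j : ℕ, (2 : ℝ) ^ (β * ((j : ℝ) - 1)) * supNorm (L.block ((j : ℤ) - 1) a)

/-- Membership in `𝒞^β(𝕋²)`: the quantities defining the Besov norm are bounded. -/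
def LP.memBesov (L : LP) (β : ℝ) (a : Dist) : Prop :=
  BddAbove (Set.range fun j : ℕ =>
    (2 : ℝ) ^ (β * ((j : ℝ) - 1)) * supNorm (L.block ((j : ℤ) - 1) a))

/-- Product of two periodic distributions (convolution of Fourier coefficients). -/
def mulD (a b : Dist) : Dist := fun k => ∑' p : Freq, a p * b (k - p)

/-- The resonant product `f ∘ g = Σ_{|i-j| ≤ 1} Δ_i f Δ_j g`. -/
def LP.reson (L : LP) (f g : Dist) : Dist := fun k =>
  ∑' ij : ℤ × ℤ,
    if -1 ≤ ij.1 ∧ -1 ≤ ij.2 ∧ |ij.1 - ij.2| ≤ 1 then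
      mulD (L.block ij.1 f) (L.block ij.2 g) k
    else 0

/-- The paraproduct `f ≺ g = Σ_j Σ_{i < j-1} Δ_i f Δ_j g`. -/
def LP.para (L : LP) (f g : Dist) : Dist := fun k =>
  ∑' ij : ℤ × ℤ,
    if -1 ≤ ij.1 ∧ -1 ≤ ij.2 ∧ ij.1 < ij.2 - 1 then
      mulD (L.block ij.1 f) (L.block ij.2 g) k
    else 0

/-- `K = (-Δ)⁻¹`, acting on zero-mean distributions via `ℱ(Kθ)(k) = |k|⁻² ℱθ(k)`. -/
def Kop (a : Dist) : Dist := fun k => if k = 0 then 0 else a k / ((freqNorm k ^ 2 : ℝ) : ℂ)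

/-- The constant function `c` on the torus, as a distribution. -/
def constD (c : ℝ) : Dist := fun k => if k = 0 then (c : ℂ) else 0

/-- The canonical enhancement `(θ, θ ∘ Kθ - c)` of a (nice) distribution `θ`. -/
def lift (L : LP) (θ : Dist) (c : ℝ) : Dist × Dist := (θ, L.reson θ (Kop θ) - constD c)

/-- Distance in `ℋ^α = 𝒞^{α-2} × 𝒞^{2α-2}` (sum norm). -/
def hDist (L : LP) (α : ℝ) (Ξ Ξ' : Dist × Dist) : ℝ :=
  L.besov (α - 2) (Ξ.1 - Ξ'.1) + L.besov (2 * α - 2) (Ξ.2 - Ξ'.2)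

/-- Closure of a set of pairs with respect to the `ℋ^α` distance. -/
def clos (L : LP) (α : ℝ) (S : Set (Dist × Dist)) : Set (Dist × Dist) :=
  {Ξ | ∀ δ : ℝ, 0 < δ → ∃ Ξ' ∈ S, hDist L α Ξ Ξ' < δ}

/-- `θ` is a real zero-mean `L²` function (an element of the Cameron–Martin space `ℋ`). -/
def IsZeroMeanL2 (a : Dist) : Prop :=
  a 0 = 0 ∧ Summable (fun k : Freq => ‖a k‖ ^ 2) ∧ ∀ k, star (a k) = a (-k)

/-- The `L²(𝕋²)`-norm. -/
def l2norm (a : Dist) : ℝ := Real.sqrt (∑' k : Freq, ‖a k‖ ^ 2)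

/-- `a` is a real smooth function on `𝕋²` (rapidly decaying coefficients). -/
def IsSmoothD (a : Dist) : Prop :=
  (∀ k, star (a k) = a (-k)) ∧
    ∀ n : ℕ, ∃ C : ℝ, ∀ k : Freq, ‖a k‖ * (1 + freqNorm k) ^ n ≤ C

/-- `a` is a real smooth function with zero mean on `𝕋²`. -/
def IsSmoothZeroMean (a : Dist) : Prop := a 0 = 0 ∧ IsSmoothD a

/-- The space `𝒳^α`: closure in `ℋ^α` of the canonical enhancements of smooth
zero-mean functions. -/
def Xspace (L : LP) (α : ℝ) : Set (Dist × Dist) :=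
  clos L α {Ξ | ∃ θ : Dist, ∃ c : ℝ, IsSmoothZeroMean θ ∧ Ξ = lift L θ c}

/-- Membership in `𝒞^{0,β}(𝕋²)`, the closure of smooth functions in `𝒞^β(𝕋²)`. -/
def MemC0 (L : LP) (β : ℝ) (a : Dist) : Prop :=
  ∀ δ : ℝ, 0 < δ → ∃ b : Dist, IsSmoothD b ∧ L.besov β (a - b) < δ

/-- Membership in `Č^{0,β}(𝕋²)`, the closure of smooth zero-mean functions in `𝒞^β(𝕋²)`. -/
def MemC0check (L : LP) (β : ℝ) (a : Dist) : Prop :=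
  ∀ δ : ℝ, 0 < δ → ∃ b : Dist, IsSmoothZeroMean b ∧ L.besov β (a - b) < δ

/-- The translation operator `T_h Ξ = (Ξ¹ + h, Ξ² + h∘Kh + h∘KΞ¹ + Ξ¹∘Kh)`. -/
def Th (L : LP) (h : Dist) (Ξ : Dist × Dist) : Dist × Dist :=
  (Ξ.1 + h, Ξ.2 + L.reson h (Kop h) + L.reson h (Kop Ξ.1) + L.reson Ξ.1 (Kop h))

/-- An admissible mollifier `ψ`. -/
structure IsMollifier (ψ : ℝ × ℝ → ℝ) : Prop where
  radial : ∀ x y, enorm2 x = enorm2 y → ψ x = ψ y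
  bounded : ∃ C : ℝ, ∀ x, |ψ x| ≤ C
  compactSupp : ∃ R : ℝ, 0 < R ∧ ∀ x, R ≤ enorm2 x → ψ x = 0
  contAtZero : ContinuousAt ψ 0
  oneAtZero : ψ 0 = 1

/-- Mollification: `ξ^ε = Σ_{k ≠ 0} ψ(εk) ξ̂(k) e_k`. -/
def mollify (ψ : ℝ × ℝ → ℝ) (ε : ℝ) (a : Dist) : Dist := fun k =>
  if k = 0 then 0 else ((ψ (ε • toR k) : ℝ) : ℂ) * a k

/-- The renormalisation constant `c_ε = Σ_{k ≠ 0} |ψ(εk)|² / |k|²`. -/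
def cEps (ψ : ℝ × ℝ → ℝ) (ε : ℝ) : ℝ :=
  ∑' k : Freq, if k = 0 then 0 else ψ (ε • toR k) ^ 2 / freqNorm k ^ 2

/-- The constant `b_ε = Σ_{k ≠ 0} ψ(εk) / |k|²`. -/
def bEps (ψ : ℝ × ℝ → ℝ) (ε : ℝ) : ℝ :=
  ∑' k : Freq, if k = 0 then 0 else ψ (ε • toR k) / freqNorm k ^ 2

/-- Choice of "positive" frequencies: one from each pair `{k, -k}`, `k ≠ 0`. -/
def posFreq (k : Freq) : Prop := 0 < k.1 ∨ (k.1 = 0 ∧ 0 < k.2)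

/-- `ξ` is a zero-mean spatial white noise on `𝕋²` under the probability measure `P`:
its Fourier coefficients `ξ̂(k)`, `k ≠ 0`, form a family of standard complex Gaussians
(independent real and imaginary parts of variance 1/2, independent over a choice of
half-lattice), `ξ̂(0) = 0` and `ξ̂(-k) = conj ξ̂(k)`. -/
structure IsWhiteNoise {Ω : Type} [MeasurableSpace Ω] (P : Measure Ω) (ξ : Ω → Dist) :
    Prop where
  meas : ∀ k : Freq, Measurable fun ω => ξ ω k
  zeroMean : ∀ᵐ ω ∂P, ξ ω 0 = 0
  isReal : ∀ᵐ ω ∂P, ∀ k, star (ξ ω k) = ξ ω (-k)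
  gaussRe : ∀ k : Freq, posFreq k → P.map (fun ω => (ξ ω k).re) = gaussianReal 0 (1 / 2)
  gaussIm : ∀ k : Freq, posFreq k → P.map (fun ω => (ξ ω k).im) = gaussianReal 0 (1 / 2)
  indep : iIndepFun
    (fun (p : {k : Freq // posFreq k} × Bool) (ω : Ω) =>
      if p.2 then (ξ ω p.1.1).re else (ξ ω p.1.1).im) P

/-- `Ξ` lies in the support of the law of `X : Ω → ℋ^α`. -/
def inSupp {Ω : Type} [MeasurableSpace Ω] (P : Measure Ω) (L : LP) (α : ℝ)
    (X : Ω → Dist × Dist) (Ξ : Dist × Dist) : Prop :=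
  ∀ δ : ℝ, 0 < δ → 0 < P {ω | hDist L α (X ω) Ξ < δ}

/-- `x` lies in the support of the law of `X : Ω → 𝒞^β`. -/
def inSupp1 {Ω : Type} [MeasurableSpace Ω] (P : Measure Ω) (L : LP) (β : ℝ)
    (X : Ω → Dist) (x : Dist) : Prop :=
  ∀ δ : ℝ, 0 < δ → 0 < P {ω | L.besov β (X ω - x) < δ}

/-- The heat semigroup `P_t = e^{tΔ}` on Fourier coefficients. -/
def heat (t : ℝ) (a : Dist) : Dist := fun k =>
  ((Real.exp (-t * freqNorm k ^ 2) : ℝ) : ℂ) * a k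

/-- Fourier coefficients of a function on `𝕋² = (ℝ/2πℤ)²`. -/
def fourierCoeff2 (u : ℝ × ℝ → ℂ) (k : Freq) : ℂ :=
  ((1 / (2 * Real.pi) ^ 2 : ℝ) : ℂ) *
    ∫ x in Set.Icc (0 : ℝ) (2 * Real.pi) ×ˢ Set.Icc (0 : ℝ) (2 * Real.pi),
      u x * Complex.exp (-Complex.I * (((k.1 : ℝ) * x.1 + (k.2 : ℝ) * x.2 : ℝ) : ℂ))

/-- Composition of a real nonlinearity `f` with (the function represented by) `a`,
as a distribution: the Fourier coefficients of `x ↦ f(a(x))`. -/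
def compF (f : ℝ → ℝ) (a : Dist) : Dist := fun k =>
  fourierCoeff2 (fun x => ((f ((eval a x).re) : ℝ) : ℂ)) k

/-- Mild solution of `∂ₜ v - Δ v = f(v) h - c f'(v) f(v)`, `v(0) = u₀`, i.e.
`v_t = P_t u₀ + ∫₀ᵗ P_{t-s}(f(v_s) h) ds - c ∫₀ᵗ P_{t-s}(f'(v_s) f(v_s)) ds`. -/
def IsMildSol (f : ℝ → ℝ) (h : Dist) (c : ℝ) (u0 : Dist) (v : ℝ → Dist) : Prop :=
  ∀ t : ℝ, 0 ≤ t → ∀ k : Freq,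
    v t k =
      heat t u0 k
        + (∫ s in (0 : ℝ)..t, heat (t - s) (mulD (compF f (v s)) h) k)
        - (c : ℂ) * ∫ s in (0 : ℝ)..t,
            heat (t - s) (compF (fun y => deriv f y * f y) (v s)) k

/-- The distance of `C([0,T], 𝒞^β(𝕋²))`. -/
def cBesovDist (L : LP) (β T : ℝ) (v w : ℝ → Dist) : ℝ :=
  ⨆ t : Set.Icc (0 : ℝ) T, L.besov β (v t - w t)

/-- Closure of a set of time-dependent distributions in `C([0,T], 𝒞^β(𝕋²))`. -/
def closC (L : LP) (β T : ℝ) (S : Set (ℝ → Dist)) : Set (ℝ → Dist) :=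
  {v | ∀ δ : ℝ, 0 < δ → ∃ w ∈ S, cBesovDist L β T v w < δ}

/-- The distance of `C([0,T], L²(𝕋²))`. -/
def cL2dist (T : ℝ) (v w : ℝ → Dist) : ℝ :=
  ⨆ t : Set.Icc (0 : ℝ) T, l2norm (v t - w t)

/-- `a` is a real `L²(𝕋²)` function. -/
def IsL2 (a : Dist) : Prop :=
  Summable (fun k : Freq => ‖a k‖ ^ 2) ∧ ∀ k, star (a k) = a (-k)

/-- Continuity in time with values in `L²(𝕋²)`, on `[0,T]`. -/
def ContL2 (T : ℝ) (v : ℝ → Dist) : Prop :=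
  ∀ t ∈ Set.Icc (0 : ℝ) T, ∀ ε : ℝ, 0 < ε → ∃ δ : ℝ, 0 < δ ∧
    ∀ s ∈ Set.Icc (0 : ℝ) T, |s - t| < δ → l2norm (v s - v t) < ε

/-- `f ∈ C³_b(ℝ)`: three times continuously differentiable with bounded derivatives. -/
def C3b (f : ℝ → ℝ) : Prop :=
  ContDiff ℝ 3 f ∧ ∀ i : ℕ, i ≤ 3 → ∃ C : ℝ, ∀ x : ℝ, |iteratedDeriv i f x| ≤ C

/-- The inhomogeneous Sobolev "square norm" `Σ_k (1+|k|²)^γ |û(k)|²` of `H^γ(𝕋²)`. -/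
def sobSum (γ : ℝ) (a : Dist) : ℝ := ∑' k : Freq, (1 + freqNorm k ^ 2) ^ γ * ‖a k‖ ^ 2

/-- The highly oscillatory functions `X^{n,c}(x) = √c 2^{n+1} cos(2ⁿ ⟨(1,1), x⟩)`. -/
def Xosc (n : ℕ) (c : ℝ) : Dist := fun k =>
  if k = ((2 ^ n : ℤ), (2 ^ n : ℤ)) ∨ k = (-(2 ^ n : ℤ), -(2 ^ n : ℤ)) then
    ((Real.sqrt c * 2 ^ n : ℝ) : ℂ)
  else 0

/-- Truncation of a distribution to frequencies `0 < |k| ≤ ν 2ⁿ`. -/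
def truncD (ν : ℝ) (n : ℕ) (a : Dist) : Dist := fun k =>
  if k ≠ 0 ∧ freqNorm k ≤ ν * 2 ^ n then a k else 0

/-- The constant `c_n = Σ_{0 < |k| ≤ ν 2ⁿ} |k|⁻²`. -/
def cTrunc (ν : ℝ) (n : ℕ) : ℝ :=
  ∑' k : Freq, if k ≠ 0 ∧ freqNorm k ≤ ν * 2 ^ n then 1 / freqNorm k ^ 2 else 0

end GPAM

namespace OscAux
open GPAM

lemma enorm2_diag (t : ℝ) : enorm2 (t, t) = |t| * Real.sqrt 2 := by
  unfold enorm2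
  have h : (t, t).1 ^ 2 + (t, t).2 ^ 2 = t ^ 2 * 2 := by ring
  rw [h, Real.sqrt_mul (sq_nonneg t), Real.sqrt_sq_eq_abs]

lemma smul_diag (u t : ℝ) : u • ((t : ℝ), t) = ((u * t : ℝ), (u * t : ℝ)) := by
  simp [Prod.smul_mk, smul_eq_mul]

lemma supNorm_nonneg (a : Dist) : 0 ≤ supNorm a :=
  Real.iSup_nonneg fun _ => norm_nonneg _

lemma besov_nonneg (L : LP) (β : ℝ) (a : Dist) : 0 ≤ L.besov β a :=
  Real.iSup_nonneg fun _ =>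
    mul_nonneg (Real.rpow_nonneg (by norm_num) _) (supNorm_nonneg _)

lemma norm_exp_eval (r : ℝ) : ‖Complex.exp (Complex.I * (r : ℂ))‖ = 1 := by
  rw [Complex.norm_exp]
  simp [Complex.mul_re]

lemma supNorm_two_point (a : Dist) (p q : Freq)
    (h : ∀ k, k ≠ p → k ≠ q → a k = 0) :
    supNorm a ≤ ‖a p‖ + ‖a q‖ := by
  refine ciSup_le fun x => ?_
  have hsum : eval a x = ∑ k ∈ ({p, q} : Finset Freq),
      a k * Complex.exp (Complex.I * (((k.1 : ℝ) * x.1 + (k.2 : ℝ) * x.2 : ℝ) : ℂ)) := by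
    refine tsum_eq_sum fun k hk => ?_
    simp only [Finset.mem_insert, Finset.mem_singleton, not_or] at hk
    rw [h k hk.1 hk.2, zero_mul]
  rw [eval] at hsum
  calc ‖eval a x‖ = ‖∑ k ∈ ({p, q} : Finset Freq),
      a k * Complex.exp (Complex.I * (((k.1 : ℝ) * x.1 + (k.2 : ℝ) * x.2 : ℝ) : ℂ))‖ := by
        rw [eval, hsum]
    _ ≤ ∑ k ∈ ({p, q} : Finset Freq), ‖a k * Complex.exp
        (Complex.I * (((k.1 : ℝ) * x.1 + (k.2 : ℝ) * x.2 : ℝ) : ℂ))‖ := norm_sum_le _ _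
    _ = ∑ k ∈ ({p, q} : Finset Freq), ‖a k‖ := by
        refine Finset.sum_congr rfl fun k _ => ?_
        rw [norm_mul, norm_exp_eval, mul_one]
    _ ≤ ‖a p‖ + ‖a q‖ := by
        by_cases hpq : p = q
        · subst hpq
          simp only [Finset.insert_eq_self.mpr (Finset.mem_singleton_self p),
            Finset.sum_singleton]
          linarith [norm_nonneg (a p)]
        · rw [Finset.sum_pair hpq]

lemma norm_le_enorm2 (x : ℝ × ℝ) : ‖x‖ ≤ enorm2 x := by
  rw [Prod.norm_def]
  unfold enorm2
  apply max_le
  · rw [Real.norm_eq_abs, ← Real.sqrt_sq_eq_abs]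
    exact Real.sqrt_le_sqrt (by nlinarith [sq_nonneg x.2])
  · rw [Real.norm_eq_abs, ← Real.sqrt_sq_eq_abs]
    exact Real.sqrt_le_sqrt (by nlinarith [sq_nonneg x.1])

lemma bdd_of_vanish (f : ℝ × ℝ → ℝ) (hf : Continuous f) (R : ℝ)
    (hv : ∀ x, R ≤ enorm2 x → f x = 0) : ∃ M, 0 ≤ M ∧ ∀ x, f x ≤ M := by
  obtain ⟨C, hC⟩ := (isCompact_closedBall (0 : ℝ × ℝ) R).exists_bound_of_continuousOn
    hf.continuousOn
  refine ⟨max C 0, le_max_right _ _, fun x => ?_⟩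
  by_cases hx : x ∈ Metric.closedBall (0 : ℝ × ℝ) R
  · exact le_trans (le_trans (le_abs_self _) (hC x hx)) (le_max_left _ _)
  · rw [hv x ?_]
    · exact le_max_right _ _
    · have hxx : R < ‖x‖ := by
        simpa [Metric.mem_closedBall, dist_zero_right] using hx
      exact le_trans hxx.le (norm_le_enorm2 x)

lemma block_apply (L : LP) (m : ℤ) (a : Dist) (k : Freq) :
    L.block m a k =
      (if m = -1 then ((L.chi (toR k) : ℝ) : ℂ)
        else ((L.rho ((2 : ℝ) ^ (-m) • toR k) : ℝ) : ℂ)) * a k := by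
  simp only [LP.block]
  rw [ite_mul]


lemma one_le_sqrt_two : (1 : ℝ) ≤ Real.sqrt 2 := by
  rw [show (1:ℝ) = Real.sqrt 1 by rw [Real.sqrt_one]]
  exact Real.sqrt_le_sqrt one_le_two

lemma rpow_nat_sub (s : ℕ) (m : ℕ) :
    (2 : ℝ) ^ (-(m : ℤ)) * (2 : ℝ) ^ s = (2 : ℝ) ^ ((s : ℝ) - (m : ℝ)) := by
  rw [← Real.rpow_natCast 2 s, ← Real.rpow_intCast 2 (-(m : ℤ)), ← Real.rpow_add two_pos]
  push_cast
  ring_nf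

lemma besov_le (L : LP) (β : ℝ) (hβ : β < 0) (Mρ Rρ : ℝ)
    (hMρ : ∀ x, L.rho x ≤ Mρ) (hRρ : 0 < Rρ)
    (hann : ∀ x, Rρ < enorm2 x → L.rho x = 0)
    (s : ℕ) (v : ℝ) (hv : 0 ≤ v) (a : Dist)
    (hsupp : ∀ k, k ≠ ((2 ^ s : ℤ), (2 ^ s : ℤ)) → k ≠ (-(2 ^ s : ℤ), -(2 ^ s : ℤ)) → a k = 0)
    (h1 : ‖a ((2 ^ s : ℤ), (2 ^ s : ℤ))‖ ≤ v)
    (h2 : ‖a (-(2 ^ s : ℤ), -(2 ^ s : ℤ))‖ ≤ v) :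
    L.besov β a ≤
      max ((2 : ℝ) ^ (-β) * ((2 * v) * L.chi ((2 : ℝ) ^ s • ((1 : ℝ), (1 : ℝ)))))
        (Mρ * (2 * v) * (Rρ ^ (-β) * (2 : ℝ) ^ (β * (s : ℝ)))) := by
  have hMρ0 : 0 ≤ Mρ := le_trans (L.rho_nonneg 0) (hMρ 0)
  have harg2 : 0 ≤ Mρ * (2 * v) * (Rρ ^ (-β) * (2 : ℝ) ^ (β * (s : ℝ))) := by positivity
  set p : Freq := ((2 ^ s : ℤ), (2 ^ s : ℤ)) with hp
  set q : Freq := (-(2 ^ s : ℤ), -(2 ^ s : ℤ)) with hq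
  have htoRp : toR p = (((2 : ℝ) ^ s : ℝ), ((2 : ℝ) ^ s : ℝ)) := by
    simp [toR, hp]
  have htoRq : toR q = ((-(2 : ℝ) ^ s : ℝ), (-(2 : ℝ) ^ s : ℝ)) := by
    simp [toR, hq]
  have hsm : (2 : ℝ) ^ s • ((1 : ℝ), (1 : ℝ)) = (((2 : ℝ) ^ s : ℝ), ((2 : ℝ) ^ s : ℝ)) := by
    rw [show ((1 : ℝ), (1 : ℝ)) = (((1:ℝ)), ((1:ℝ))) from rfl, smul_diag]
    norm_num
  rw [LP.besov]
  refine ciSup_le fun j => ?_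
  cases j with
  | zero =>
    have h0 : ((0 : ℕ) : ℤ) - 1 = (-1 : ℤ) := by norm_num
    have he : β * (((0 : ℕ) : ℝ) - 1) = -β := by push_cast; ring
    rw [h0, he]
    refine le_trans ?_ (le_max_left _ _)
    have hbl : ∀ k, k ≠ p → k ≠ q → L.block (-1) a k = 0 := fun k hkp hkq => by
      rw [block_apply, hsupp k hkp hkq, mul_zero]
    have hradial : L.chi (toR q) = L.chi (toR p) := by
      apply L.chi_radial
      rw [htoRp, htoRq, enorm2_diag, enorm2_diag, abs_neg]
    have hchi0 : 0 ≤ L.chi (toR p) := L.chi_nonneg _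
    have hbp : ‖L.block (-1) a p‖ ≤ L.chi (toR p) * v := by
      rw [block_apply, if_pos rfl, norm_mul, Complex.norm_real, Real.norm_eq_abs,
        abs_of_nonneg hchi0]
      exact mul_le_mul_of_nonneg_left h1 hchi0
    have hbq : ‖L.block (-1) a q‖ ≤ L.chi (toR p) * v := by
      rw [block_apply, if_pos rfl, norm_mul, Complex.norm_real, Real.norm_eq_abs, hradial,
        abs_of_nonneg hchi0]
      exact mul_le_mul_of_nonneg_left h2 hchi0
    have hsup : supNorm (L.block (-1) a) ≤ 2 * v * L.chi ((2 : ℝ) ^ s • ((1 : ℝ), (1 : ℝ))) := by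
      refine le_trans (supNorm_two_point _ p q hbl) ?_
      rw [hsm, ← htoRp]
      linarith
    calc (2 : ℝ) ^ (-β) * supNorm (L.block (-1) a)
        ≤ (2 : ℝ) ^ (-β) * (2 * v * L.chi ((2 : ℝ) ^ s • ((1 : ℝ), (1 : ℝ)))) :=
          mul_le_mul_of_nonneg_left hsup (Real.rpow_nonneg (by norm_num) _)
      _ = (2 : ℝ) ^ (-β) * (2 * v * L.chi ((2 : ℝ) ^ s • ((1 : ℝ), (1 : ℝ)))) := rfl
  | succ m =>
    have h0 : ((m + 1 : ℕ) : ℤ) - 1 = (m : ℤ) := by push_cast; ring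
    have he : β * (((m + 1 : ℕ) : ℝ) - 1) = β * (m : ℝ) := by push_cast; ring
    rw [h0, he]
    have hm1 : (m : ℤ) ≠ -1 := by omega
    set ρ : ℝ := L.rho ((2 : ℝ) ^ (-(m : ℤ)) • toR p) with hρ
    have hρ0 : 0 ≤ ρ := L.rho_nonneg _
    have hbl : ∀ k, k ≠ p → k ≠ q → L.block (m : ℤ) a k = 0 := fun k hkp hkq => by
      rw [block_apply, hsupp k hkp hkq, mul_zero]
    have hradial : L.rho ((2 : ℝ) ^ (-(m : ℤ)) • toR q) = ρ := by
      apply L.rho_radial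
      rw [htoRp, htoRq, smul_diag, smul_diag, enorm2_diag, enorm2_diag, mul_neg, abs_neg]
    have hbp : ‖L.block (m : ℤ) a p‖ ≤ ρ * v := by
      rw [block_apply, if_neg hm1, norm_mul, Complex.norm_real, Real.norm_eq_abs,
        ← hρ, abs_of_nonneg hρ0]
      exact mul_le_mul_of_nonneg_left h1 hρ0
    have hbq : ‖L.block (m : ℤ) a q‖ ≤ ρ * v := by
      rw [block_apply, if_neg hm1, norm_mul, Complex.norm_real, Real.norm_eq_abs,
        hradial, abs_of_nonneg hρ0]
      exact mul_le_mul_of_nonneg_left h2 hρ0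
    have hsup : supNorm (L.block (m : ℤ) a) ≤ 2 * v * ρ := by
      refine le_trans (supNorm_two_point _ p q hbl) ?_
      linarith
    by_cases hρz : ρ = 0
    · refine le_trans ?_ (le_max_right _ _)
      refine le_trans ?_ harg2
      have : supNorm (L.block (m : ℤ) a) ≤ 0 := by rw [hρz] at hsup; linarith
      have hs0 : supNorm (L.block (m : ℤ) a) = 0 :=
        le_antisymm this (supNorm_nonneg _)
      rw [hs0, mul_zero]
    · -- ρ ≠ 0 : frequency is in the annulus
      have hen : enorm2 ((2 : ℝ) ^ (-(m : ℤ)) • toR p) ≤ Rρ := by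
        by_contra hcon
        exact hρz (hann _ (lt_of_not_ge hcon))
      have henval : enorm2 ((2 : ℝ) ^ (-(m : ℤ)) • toR p)
          = (2 : ℝ) ^ (-(m : ℤ)) * (2 : ℝ) ^ s * Real.sqrt 2 := by
        rw [htoRp, smul_diag, enorm2_diag, abs_of_nonneg (by positivity)]
      have hkey : (2 : ℝ) ^ ((s : ℝ) - (m : ℝ)) ≤ Rρ := by
        rw [← rpow_nat_sub s m]
        nlinarith [one_le_sqrt_two, zpow_pos (two_pos (α := ℝ)) (-(m : ℤ)),
          pow_pos (two_pos (α := ℝ)) s, henval ▸ hen]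
      have hkey2 : (2 : ℝ) ^ (((s : ℝ) - (m : ℝ)) * (-β)) ≤ Rρ ^ (-β) := by
        rw [Real.rpow_mul (by norm_num : (0:ℝ) ≤ 2)]
        exact Real.rpow_le_rpow (Real.rpow_nonneg (by norm_num) _) hkey (by linarith)
      have hkey3 : (2 : ℝ) ^ (β * (m : ℝ)) ≤ Rρ ^ (-β) * (2 : ℝ) ^ (β * (s : ℝ)) := by
        have hpos : (0 : ℝ) < (2 : ℝ) ^ (β * (s : ℝ)) := Real.rpow_pos_of_pos two_pos _
        have := mul_le_mul_of_nonneg_right hkey2 hpos.le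
        rw [← Real.rpow_add two_pos] at this
        rw [show β * (m : ℝ) = ((s : ℝ) - (m : ℝ)) * (-β) + β * (s : ℝ) by ring]
        exact this
      refine le_trans ?_ (le_max_right _ _)
      calc (2 : ℝ) ^ (β * (m : ℝ)) * supNorm (L.block (m : ℤ) a)
          ≤ (Rρ ^ (-β) * (2 : ℝ) ^ (β * (s : ℝ))) * (2 * v * Mρ) := by
            apply mul_le_mul hkey3 (le_trans hsup ?_) (supNorm_nonneg _) (by positivity)
            have : ρ ≤ Mρ := hMρ _
            nlinarith
        _ = Mρ * (2 * v) * (Rρ ^ (-β) * (2 : ℝ) ^ (β * (s : ℝ))) := by ring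


def zn (n : ℕ) : Freq := ((2 ^ n : ℤ), (2 ^ n : ℤ))
def mzn (n : ℕ) : Freq := (-(2 ^ n : ℤ), -(2 ^ n : ℤ))
def p2 (n : ℕ) : Freq := ((2 ^ (n+1) : ℤ), (2 ^ (n+1) : ℤ))
def mp2 (n : ℕ) : Freq := (-(2 ^ (n+1) : ℤ), -(2 ^ (n+1) : ℤ))
def x0 (n : ℕ) : ℝ × ℝ := toR (zn n)
def W (n : ℕ) (c : ℝ) : ℝ := Real.sqrt c * 2 ^ n
def Q (n : ℕ) : ℝ := 2 * ((2 : ℝ) ^ n) ^ 2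
def bR (L : LP) (n : ℕ) : ℤ → ℝ := fun i =>
  if i = -1 then L.chi (x0 n) else L.rho ((2 : ℝ) ^ (-i) • x0 n)
def fR (L : LP) (n : ℕ) : ℤ → ℝ := fun i => if -1 ≤ i then bR L n i else 0
def Y (n : ℕ) (c : ℝ) : Dist := fun k =>
  if k = p2 n ∨ k = mp2 n then ((c / 2 : ℝ) : ℂ) else 0

lemma Xosc_apply (n : ℕ) (c : ℝ) (k : Freq) :
    Xosc n c k = if k = zn n ∨ k = mzn n then ((W n c : ℝ) : ℂ) else 0 := rfl

lemma Xosc_eq_zero (n : ℕ) (c : ℝ) (k : Freq) (h1 : k ≠ zn n) (h2 : k ≠ mzn n) :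
    Xosc n c k = 0 := by
  rw [Xosc_apply, if_neg (by tauto)]

lemma Xosc_zn (n : ℕ) (c : ℝ) : Xosc n c (zn n) = ((W n c : ℝ) : ℂ) := by
  rw [Xosc_apply, if_pos (Or.inl rfl)]

lemma Xosc_mzn (n : ℕ) (c : ℝ) : Xosc n c (mzn n) = ((W n c : ℝ) : ℂ) := by
  rw [Xosc_apply, if_pos (Or.inr rfl)]

lemma toR_zn (n : ℕ) : toR (zn n) = (((2 : ℝ) ^ n : ℝ), ((2 : ℝ) ^ n : ℝ)) := by
  simp [toR, zn]

lemma toR_mzn (n : ℕ) : toR (mzn n) = ((-(2 : ℝ) ^ n : ℝ), (-(2 : ℝ) ^ n : ℝ)) := by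
  simp [toR, mzn]

lemma chi_x0 (L : LP) (n : ℕ) (k : Freq) (hk : k = zn n ∨ k = mzn n) :
    L.chi (toR k) = L.chi (x0 n) := by
  rcases hk with h | h <;> subst h
  · rfl
  · apply L.chi_radial
    rw [toR_mzn, show x0 n = toR (zn n) from rfl, toR_zn, enorm2_diag, enorm2_diag, abs_neg]

lemma rho_x0 (L : LP) (n : ℕ) (m : ℤ) (k : Freq) (hk : k = zn n ∨ k = mzn n) :
    L.rho ((2 : ℝ) ^ (-m) • toR k) = L.rho ((2 : ℝ) ^ (-m) • x0 n) := by
  rcases hk with h | h <;> subst h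
  · rfl
  · apply L.rho_radial
    rw [toR_mzn, show x0 n = toR (zn n) from rfl, toR_zn, smul_diag, smul_diag,
      enorm2_diag, enorm2_diag, mul_neg, abs_neg]

lemma block_mulXosc (L : LP) (n : ℕ) (c : ℝ) (wt : ℂ) (a : Dist)
    (ha : ∀ k, a k = wt * Xosc n c k) (m : ℤ) (k : Freq) :
    L.block m a k = (bR L n m : ℂ) * wt * Xosc n c k := by
  rw [block_apply, ha k]
  by_cases hk : k = zn n ∨ k = mzn n
  · rw [show (if m = -1 then ((L.chi (toR k) : ℝ) : ℂ)
        else ((L.rho ((2 : ℝ) ^ (-m) • toR k) : ℝ) : ℂ)) = (bR L n m : ℂ) by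
      by_cases hm : m = -1
      · rw [if_pos hm, bR]; simp only [if_pos hm]; rw [chi_x0 L n k hk]
      · rw [if_neg hm, bR]; simp only [if_neg hm]; rw [rho_x0 L n m k hk]]
    ring
  · rw [Xosc_eq_zero n c k (fun h => hk (Or.inl h)) (fun h => hk (Or.inr h))]
    ring

lemma zn_ne_zero (n : ℕ) : zn n ≠ 0 := by
  simp only [zn, Prod.ext_iff, ne_eq, not_and_or]
  left
  positivity

lemma mzn_ne_zero (n : ℕ) : mzn n ≠ 0 := by
  simp only [mzn, Prod.ext_iff, ne_eq, not_and_or]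
  left
  simp only [Prod.fst_zero, neg_eq_zero]
  positivity

lemma freqNorm_sq_zn (n : ℕ) : freqNorm (zn n) ^ 2 = Q n := by
  rw [freqNorm, toR_zn, enorm2_diag, mul_pow, Real.sq_sqrt (by norm_num : (0:ℝ) ≤ 2),
    sq_abs, Q]
  ring

lemma freqNorm_sq_mzn (n : ℕ) : freqNorm (mzn n) ^ 2 = Q n := by
  rw [freqNorm, toR_mzn, enorm2_diag, mul_pow, Real.sq_sqrt (by norm_num : (0:ℝ) ≤ 2),
    sq_abs, Q]
  ring

lemma Q_pos (n : ℕ) : 0 < Q n := by rw [Q]; positivity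

lemma kop_Xosc (n : ℕ) (c : ℝ) (k : Freq) :
    Kop (Xosc n c) k = ((Q n : ℝ) : ℂ)⁻¹ * Xosc n c k := by
  rw [Kop]
  by_cases hk : k = zn n ∨ k = mzn n
  · have hk0 : k ≠ 0 := by rcases hk with h | h <;> subst h
      <;> [exact zn_ne_zero n; exact mzn_ne_zero n]
    rw [if_neg hk0]
    have hfn : freqNorm k ^ 2 = Q n := by
      rcases hk with h | h <;> subst h
      · exact freqNorm_sq_zn n
      · exact freqNorm_sq_mzn n
    rw [hfn, div_eq_inv_mul]
  · rw [Xosc_eq_zero n c k (fun h => hk (Or.inl h)) (fun h => hk (Or.inr h)), mul_zero]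
    split <;> simp

lemma zn_ne_mzn (n : ℕ) : zn n ≠ mzn n := by
  have : (0:ℤ) < 2 ^ n := by positivity
  simp only [zn, mzn, ne_eq, Prod.ext_iff, not_and_or]
  omega

lemma mulD_XX (n : ℕ) (c : ℝ) (k : Freq) :
    mulD (Xosc n c) (Xosc n c) k =
      if k = 0 then 2 * ((W n c : ℝ) : ℂ) ^ 2
      else if k = p2 n ∨ k = mp2 n then ((W n c : ℝ) : ℂ) ^ 2 else 0 := by
  have hsum : mulD (Xosc n c) (Xosc n c) k
      = Xosc n c (zn n) * Xosc n c (k - zn n) + Xosc n c (mzn n) * Xosc n c (k - mzn n) := by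
    rw [mulD, tsum_eq_sum (s := {zn n, mzn n}) (fun p hp => by
      have hp' : p ≠ zn n ∧ p ≠ mzn n := by
        simpa [Finset.mem_insert, Finset.mem_singleton, not_or] using hp
      rw [Xosc_eq_zero n c p hp'.1 hp'.2, zero_mul]),
      Finset.sum_pair (zn_ne_mzn n)]
  rw [hsum, Xosc_zn, Xosc_mzn]
  have ht : (0:ℤ) < 2 ^ n := by positivity
  obtain ⟨k1, k2⟩ := k
  by_cases h0 : ((k1, k2) : Freq) = 0
  · rw [if_pos h0]
    obtain ⟨h1, h2⟩ : k1 = 0 ∧ k2 = 0 := Prod.ext_iff.mp h0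
    subst h1; subst h2
    have e1 : ((0, 0) : Freq) - zn n = mzn n := by
      simp [zn, mzn, Prod.ext_iff]
    have e2 : ((0, 0) : Freq) - mzn n = zn n := by
      simp [zn, mzn, Prod.ext_iff]
    rw [e1, e2, Xosc_zn, Xosc_mzn]
    ring
  · rw [if_neg h0]
    by_cases hp : ((k1, k2) : Freq) = p2 n
    · rw [if_pos (Or.inl hp)]
      obtain ⟨h1, h2⟩ : k1 = 2 ^ (n+1) ∧ k2 = 2 ^ (n+1) := Prod.ext_iff.mp hp
      subst h1; subst h2
      have e1 : ((2 ^ (n+1), 2 ^ (n+1)) : Freq) - zn n = zn n := by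
        simp only [zn, Prod.mk_sub_mk, Prod.ext_iff]
        constructor <;> ring
      have e2 : Xosc n c (((2 ^ (n+1), 2 ^ (n+1)) : Freq) - mzn n) = 0 := by
        apply Xosc_eq_zero <;>
          simp only [zn, mzn, Prod.mk_sub_mk, Prod.ext_iff, ne_eq, not_and_or] <;>
          left <;> omega
      rw [e1, e2, Xosc_zn]
      ring
    · by_cases hm : ((k1, k2) : Freq) = mp2 n
      · rw [if_pos (Or.inr hm)]
        obtain ⟨h1, h2⟩ : k1 = -2 ^ (n+1) ∧ k2 = -2 ^ (n+1) := Prod.ext_iff.mp hm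
        subst h1; subst h2
        have e1 : Xosc n c (((-2 ^ (n+1), -2 ^ (n+1)) : Freq) - zn n) = 0 := by
          apply Xosc_eq_zero <;>
            simp only [zn, mzn, Prod.mk_sub_mk, Prod.ext_iff, ne_eq, not_and_or] <;>
            left <;> omega
        have e2 : ((-2 ^ (n+1), -2 ^ (n+1)) : Freq) - mzn n = mzn n := by
          simp only [zn, mzn, Prod.mk_sub_mk, Prod.ext_iff]
          constructor <;> ring
        rw [e1, e2, Xosc_mzn]
        ring
      · rw [if_neg (by tauto)]
        have h0' : ¬(k1 = 0 ∧ k2 = 0) := fun h => h0 (Prod.ext_iff.mpr h)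
        have hp' : ¬(k1 = 2 ^ (n+1) ∧ k2 = 2 ^ (n+1)) := fun h => hp (Prod.ext_iff.mpr h)
        have hm' : ¬(k1 = -2 ^ (n+1) ∧ k2 = -2 ^ (n+1)) := fun h => hm (Prod.ext_iff.mpr h)
        have hpow : (2:ℤ) ^ (n+1) = 2 * 2 ^ n := by ring
        have e1 : Xosc n c (((k1, k2) : Freq) - zn n) = 0 := by
          apply Xosc_eq_zero <;>
            simp only [zn, mzn, Prod.mk_sub_mk, Prod.ext_iff, ne_eq, not_and_or] <;> omega
        have e2 : Xosc n c (((k1, k2) : Freq) - mzn n) = 0 := by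
          apply Xosc_eq_zero <;>
            simp only [zn, mzn, Prod.mk_sub_mk, Prod.ext_iff, ne_eq, not_and_or] <;> omega
        rw [e1, e2]
        ring


lemma x0_enorm (n : ℕ) : enorm2 (x0 n) = (2 : ℝ) ^ n * Real.sqrt 2 := by
  rw [show x0 n = toR (zn n) from rfl, toR_zn, enorm2_diag, abs_of_nonneg (by positivity)]

lemma exists_window (L : LP) (n : ℕ) :
    ∃ N : ℤ, 0 ≤ N ∧ ∀ i : ℤ, N < i → bR L n i = 0 := by
  obtain ⟨r, R, hr, hrR, hann⟩ := L.rho_annulus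
  set e0 : ℝ := (2 : ℝ) ^ n * Real.sqrt 2 with he0def
  have he0 : 0 < e0 := by positivity
  obtain ⟨N, hN⟩ := exists_pow_lt_of_lt_one (div_pos hr he0) (by norm_num : (1/2 : ℝ) < 1)
  refine ⟨(N : ℤ), Int.natCast_nonneg N, fun i hi => ?_⟩
  have hi' : ¬ i = -1 := by omega
  rw [bR]
  simp only [if_neg hi']
  apply hann
  left
  have hsm : enorm2 ((2 : ℝ) ^ (-i) • x0 n) = (2 : ℝ) ^ (-i) * e0 := by
    rw [show x0 n = toR (zn n) from rfl, toR_zn, smul_diag, enorm2_diag,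
      abs_of_nonneg (by positivity), he0def]
    ring
  rw [hsm]
  have h1 : (2 : ℝ) ^ (-i) ≤ (2 : ℝ) ^ (-(N : ℤ)) :=
    zpow_le_zpow_right₀ one_le_two (by omega)
  have h2 : (2 : ℝ) ^ (-(N : ℤ)) = (1/2 : ℝ) ^ N := by
    rw [one_div, inv_pow, ← zpow_natCast (2:ℝ) N, ← zpow_neg]
  have h3 : (2 : ℝ) ^ (-(N : ℤ)) < r / e0 := by rw [h2]; exact hN
  calc (2 : ℝ) ^ (-i) * e0 ≤ (2 : ℝ) ^ (-(N : ℤ)) * e0 :=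
        mul_le_mul_of_nonneg_right h1 he0.le
    _ < r := by rw [← lt_div_iff₀ he0]; exact h3

lemma fR_eq_zero_of_lt (L : LP) (n : ℕ) (i : ℤ) (h : i < -1) : fR L n i = 0 := by
  rw [fR]; simp only [if_neg (by omega : ¬ (-1:ℤ) ≤ i)]

lemma fR_eq_bR (L : LP) (n : ℕ) (i : ℤ) (h : -1 ≤ i) : fR L n i = bR L n i := by
  rw [fR]; simp only [if_pos h]

lemma tsum_fR (L : LP) (n : ℕ) : ∑' i : ℤ, fR L n i = 1 := by
  obtain ⟨N, hN0, hN⟩ := exists_window L n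
  have hfz : ∀ i : ℤ, N < i → fR L n i = 0 := fun i hi => by
    rw [fR]
    split
    · exact hN i hi
    · rfl
  have hgz : ∀ j : ℕ, N.toNat + 2 ≤ j → fR L n ((j : ℤ) - 1) = 0 := fun j hj => by
    have : N < (j : ℤ) - 1 := by omega
    exact hfz _ this
  have hsg : Summable (fun j : ℕ => fR L n ((j : ℤ) - 1)) :=
    summable_of_ne_finset_zero (s := Finset.range (N.toNat + 2)) fun j hj =>
      hgz j (by simp only [Finset.mem_range] at hj; omega)
  have h1 : ∑' j : ℕ, fR L n ((j : ℤ) - 1) = ∑' i : ℤ, fR L n i := by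
    refine Function.Injective.tsum_eq (g := fun j : ℕ => (j : ℤ) - 1) ?_ ?_
    · intro a b hab
      simpa using hab
    · intro i hi
      rcases le_or_gt (-1 : ℤ) i with h | h
      · exact ⟨(i + 1).toNat, by simp; omega⟩
      · exact absurd (fR_eq_zero_of_lt L n i h) hi
  rw [← h1, Summable.tsum_eq_zero_add hsg]
  have hg0 : fR L n (((0:ℕ) : ℤ) - 1) = L.chi (x0 n) := by
    simp only [Nat.cast_zero, zero_sub, fR, bR]
    norm_num
  have hgs : ∀ j : ℕ, fR L n (((j + 1 : ℕ) : ℤ) - 1) = L.rho ((2 : ℝ) ^ (-(j : ℤ)) • x0 n) := by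
    intro j
    have hcast : ((j + 1 : ℕ) : ℤ) - 1 = (j : ℤ) := by push_cast; ring
    simp only [hcast, fR, bR]
    rw [if_pos (by omega : (-1:ℤ) ≤ (j:ℤ)), if_neg (by omega : ¬ (j:ℤ) = -1)]
  rw [hg0, tsum_congr hgs]
  exact L.partition (x0 n)

lemma bR_disj (L : LP) (n : ℕ) (i j : ℤ) (hi : -1 ≤ i) (hj : -1 ≤ j)
    (h : 1 < |i - j|) : bR L n i * bR L n j = 0 := by
  have h' : 1 < i - j ∨ 1 < -(i - j) := lt_abs.mp h
  rcases eq_or_lt_of_le hi with hi1 | hi0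
  · have hj1 : 1 ≤ j := by omega
    rw [bR, bR]
    simp only [if_pos hi1.symm, if_neg (by omega : ¬ j = -1)]
    have hd := L.disj_chi_rho j.toNat (by omega) (x0 n)
    rwa [Int.toNat_of_nonneg (by omega : (0:ℤ) ≤ j)] at hd
  · rcases eq_or_lt_of_le hj with hj1 | hj0
    · have hi1 : 1 ≤ i := by omega
      rw [bR, bR]
      simp only [if_neg (by omega : ¬ i = -1), if_pos hj1.symm]
      rw [mul_comm]
      have hd := L.disj_chi_rho i.toNat (by omega) (x0 n)
      rwa [Int.toNat_of_nonneg (by omega : (0:ℤ) ≤ i)] at hd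
    · rw [bR, bR]
      simp only [if_neg (by omega : ¬ i = -1), if_neg (by omega : ¬ j = -1)]
      have hd := L.disj_rho_rho i.toNat j.toNat
        (by rw [Int.toNat_of_nonneg (by omega : (0:ℤ) ≤ i),
              Int.toNat_of_nonneg (by omega : (0:ℤ) ≤ j)]; exact h) (x0 n)
      rwa [Int.toNat_of_nonneg (by omega : (0:ℤ) ≤ i),
        Int.toNat_of_nonneg (by omega : (0:ℤ) ≤ j)] at hd

lemma S_eq_one (L : LP) (n : ℕ) :
    (∑' ij : ℤ × ℤ, if -1 ≤ ij.1 ∧ -1 ≤ ij.2 ∧ |ij.1 - ij.2| ≤ 1 then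
        ((bR L n ij.1 : ℝ) : ℂ) * ((bR L n ij.2 : ℝ) : ℂ) else 0) = 1 := by
  have key : ∀ ij : ℤ × ℤ,
      (if -1 ≤ ij.1 ∧ -1 ≤ ij.2 ∧ |ij.1 - ij.2| ≤ 1 then
        ((bR L n ij.1 : ℝ) : ℂ) * ((bR L n ij.2 : ℝ) : ℂ) else 0)
      = ((fR L n ij.1 : ℝ) : ℂ) * ((fR L n ij.2 : ℝ) : ℂ) := by
    intro ij
    by_cases hP : -1 ≤ ij.1 ∧ -1 ≤ ij.2 ∧ |ij.1 - ij.2| ≤ 1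
    · rw [if_pos hP, fR_eq_bR L n _ hP.1, fR_eq_bR L n _ hP.2.1]
    · rw [if_neg hP]
      rcases le_or_gt (-1 : ℤ) ij.1 with h1 | h1
      · rcases le_or_gt (-1 : ℤ) ij.2 with h2 | h2
        · have h3 : 1 < |ij.1 - ij.2| := by
            rcases lt_or_ge 1 |ij.1 - ij.2| with h | h
            · exact h
            · exact absurd ⟨h1, h2, h⟩ hP
          rw [fR_eq_bR L n _ h1, fR_eq_bR L n _ h2, ← Complex.ofReal_mul,
            bR_disj L n _ _ h1 h2 h3, Complex.ofReal_zero]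
        · rw [fR_eq_zero_of_lt L n _ h2, Complex.ofReal_zero, mul_zero]
      · rw [fR_eq_zero_of_lt L n _ h1, Complex.ofReal_zero, zero_mul]
  rw [tsum_congr key]
  obtain ⟨N, hN0, hN⟩ := exists_window L n
  set s : Finset ℤ := Finset.Icc (-1 : ℤ) N with hs
  have hfsupp : ∀ i : ℤ, i ∉ s → fR L n i = 0 := by
    intro i hi
    rw [hs, Finset.mem_Icc] at hi
    push_neg at hi
    rcases lt_or_ge i (-1 : ℤ) with h | h
    · exact fR_eq_zero_of_lt L n i h
    · rw [fR_eq_bR L n i h]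
      exact hN i (hi h)
  have hprod : ∀ ij : ℤ × ℤ, ij ∉ s ×ˢ s →
      ((fR L n ij.1 : ℝ) : ℂ) * ((fR L n ij.2 : ℝ) : ℂ) = 0 := by
    intro ij hij
    rw [Finset.mem_product, not_and_or] at hij
    rcases hij with h | h
    · rw [hfsupp _ h, Complex.ofReal_zero, zero_mul]
    · rw [hfsupp _ h, Complex.ofReal_zero, mul_zero]
  have hone : (∑ i ∈ s, ((fR L n i : ℝ) : ℂ)) = 1 := by
    have h2 : ∑' i : ℤ, fR L n i = ∑ i ∈ s, fR L n i := tsum_eq_sum hfsupp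
    have h3 : ∑ i ∈ s, fR L n i = 1 := by rw [← h2, tsum_fR L n]
    rw [← Complex.ofReal_sum, h3, Complex.ofReal_one]
  rw [tsum_eq_sum hprod,
    show (∑ ij ∈ s ×ˢ s, ((fR L n ij.1 : ℝ) : ℂ) * ((fR L n ij.2 : ℝ) : ℂ))
      = (∑ i ∈ s, ((fR L n i : ℝ) : ℂ)) * (∑ j ∈ s, ((fR L n j : ℝ) : ℂ)) from by
      rw [Finset.sum_mul_sum]
      exact Finset.sum_product _ _ _,
    hone, one_mul]


lemma mulD_block (L : LP) (n : ℕ) (c : ℝ) (i j : ℤ) (k : Freq) :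
    mulD (L.block i (Xosc n c)) (L.block j (Kop (Xosc n c))) k
      = ((bR L n i : ℝ) : ℂ) * ((bR L n j : ℝ) : ℂ) * ((Q n : ℝ) : ℂ)⁻¹
          * mulD (Xosc n c) (Xosc n c) k := by
  have hX : ∀ k', Xosc n c k' = (1 : ℂ) * Xosc n c k' := fun k' => (one_mul _).symm
  have hbi : ∀ k', L.block i (Xosc n c) k' = (bR L n i : ℂ) * 1 * Xosc n c k' :=
    block_mulXosc L n c 1 (Xosc n c) hX i
  have hbj : ∀ k', L.block j (Kop (Xosc n c)) k'
      = (bR L n j : ℂ) * ((Q n : ℝ) : ℂ)⁻¹ * Xosc n c k' :=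
    block_mulXosc L n c (((Q n : ℝ) : ℂ)⁻¹) (Kop (Xosc n c)) (kop_Xosc n c) j
  rw [mulD, mulD, ← tsum_mul_left]
  apply tsum_congr
  intro p
  rw [hbi p, hbj (k - p)]
  ring

lemma reson_eq (L : LP) (n : ℕ) (c : ℝ) (k : Freq) :
    L.reson (Xosc n c) (Kop (Xosc n c)) k
      = ((Q n : ℝ) : ℂ)⁻¹ * mulD (Xosc n c) (Xosc n c) k := by
  rw [LP.reson]
  have key : ∀ ij : ℤ × ℤ,
      (if -1 ≤ ij.1 ∧ -1 ≤ ij.2 ∧ |ij.1 - ij.2| ≤ 1 then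
        mulD (L.block ij.1 (Xosc n c)) (L.block ij.2 (Kop (Xosc n c))) k else 0)
      = (if -1 ≤ ij.1 ∧ -1 ≤ ij.2 ∧ |ij.1 - ij.2| ≤ 1 then
          ((bR L n ij.1 : ℝ) : ℂ) * ((bR L n ij.2 : ℝ) : ℂ) else 0)
        * (((Q n : ℝ) : ℂ)⁻¹ * mulD (Xosc n c) (Xosc n c) k) := by
    intro ij
    by_cases hP : -1 ≤ ij.1 ∧ -1 ≤ ij.2 ∧ |ij.1 - ij.2| ≤ 1
    · rw [if_pos hP, if_pos hP, mulD_block]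
      ring
    · rw [if_neg hP, if_neg hP, zero_mul]
  rw [tsum_congr key, tsum_mul_right, S_eq_one, one_mul]

lemma p2_ne_zero (n : ℕ) : p2 n ≠ 0 := by
  have : (0:ℤ) < 2 ^ (n+1) := by positivity
  simp only [p2, ne_eq, Prod.ext_iff, not_and_or]
  left
  simp only [Prod.fst_zero]
  omega

lemma mp2_ne_zero (n : ℕ) : mp2 n ≠ 0 := by
  have : (0:ℤ) < 2 ^ (n+1) := by positivity
  simp only [mp2, ne_eq, Prod.ext_iff, not_and_or]
  left
  simp only [Prod.fst_zero]
  omega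

lemma Wsq (n : ℕ) (c : ℝ) (hc : 0 ≤ c) :
    ((W n c : ℝ) : ℂ) ^ 2 = ((c * ((2:ℝ) ^ n) ^ 2 : ℝ) : ℂ) := by
  rw [← Complex.ofReal_pow, W, mul_pow, Real.sq_sqrt hc]

lemma reson_sub (L : LP) (n : ℕ) (c : ℝ) (hc : 0 ≤ c) :
    L.reson (Xosc n c) (Kop (Xosc n c)) - constD c = Y n c := by
  funext k
  rw [Pi.sub_apply, reson_eq L n c k, mulD_XX n c k]
  have hQ : ((Q n : ℝ) : ℂ) ≠ 0 := by
    exact_mod_cast ne_of_gt (Q_pos n)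
  by_cases hk0 : k = 0
  · subst hk0
    rw [if_pos rfl, constD, if_pos rfl, Y,
      if_neg (by push_neg; exact ⟨(p2_ne_zero n).symm ∘ Eq.symm ∘ Eq.symm, fun h => (mp2_ne_zero n) h.symm⟩)]
    rw [Wsq n c hc, Q]
    push_cast
    field_simp
    ring
  · rw [if_neg hk0, constD, if_neg hk0, sub_zero]
    by_cases hk : k = p2 n ∨ k = mp2 n
    · rw [if_pos hk, Y, if_pos hk, Wsq n c hc, Q]
      push_cast
      have h2n : ((2:ℂ) ^ n) ≠ 0 := pow_ne_zero _ two_ne_zero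
      field_simp
    · rw [if_neg hk, Y, if_neg hk, mul_zero]


lemma E1 (L : LP) (α : ℝ) (hα : α < 1) (c : ℝ) (hc : 0 ≤ c) :
    ∃ C1 : ℝ, 0 < C1 ∧ ∀ n : ℕ, L.besov (α - 2) (Xosc n c)
      ≤ C1 * Real.sqrt c * max ((2 : ℝ) ^ (-(n : ℝ) * (1 - α)))
          ((2 : ℝ) ^ (n : ℕ) * L.chi ((2 : ℝ) ^ (n : ℕ) • ((1 : ℝ), (1 : ℝ)))) := by
  obtain ⟨r, Rρ, hr, hrR, hann⟩ := L.rho_annulus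
  have hann' : ∀ x, Rρ < enorm2 x → L.rho x = 0 := fun x hx => hann x (Or.inr hx)
  have hRρpos : 0 < Rρ := lt_trans hr hrR
  obtain ⟨Mρ, hMρ0, hMρ⟩ := bdd_of_vanish L.rho L.rho_smooth.continuous (Rρ + 1)
    (fun x hx => hann' x (by linarith))
  have hβ : α - 2 < 0 := by linarith
  refine ⟨(2 : ℝ) ^ (-(α - 2)) * 2 + 2 * Mρ * Rρ ^ (-(α - 2)) + 1, by positivity, fun n => ?_⟩
  set C1 : ℝ := (2 : ℝ) ^ (-(α - 2)) * 2 + 2 * Mρ * Rρ ^ (-(α - 2)) + 1 with hC1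
  have hC1pos : 0 < C1 := by rw [hC1]; positivity
  have hv : (0 : ℝ) ≤ W n c := by rw [W]; positivity
  have happ := besov_le L (α - 2) hβ Mρ Rρ hMρ hRρpos hann' n (W n c) hv (Xosc n c)
    (fun k h1 h2 => Xosc_eq_zero n c k h1 h2)
    (by show ‖Xosc n c (zn n)‖ ≤ W n c
        rw [Xosc_zn, Complex.norm_real, Real.norm_eq_abs, abs_of_nonneg hv])
    (by show ‖Xosc n c (mzn n)‖ ≤ W n c
        rw [Xosc_mzn, Complex.norm_real, Real.norm_eq_abs, abs_of_nonneg hv])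
  refine le_trans happ (max_le ?_ ?_)
  · -- chi part
    have hchi0 : 0 ≤ L.chi ((2 : ℝ) ^ (n : ℕ) • ((1 : ℝ), (1 : ℝ))) := L.chi_nonneg _
    have hA : (2 : ℝ) ^ (-(α - 2)) * ((2 * W n c) * L.chi ((2 : ℝ) ^ (n : ℕ) • ((1 : ℝ), (1 : ℝ))))
        = ((2 : ℝ) ^ (-(α - 2)) * 2) * (Real.sqrt c
            * ((2 : ℝ) ^ (n : ℕ) * L.chi ((2 : ℝ) ^ (n : ℕ) • ((1 : ℝ), (1 : ℝ))))) := by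
      rw [W]; ring
    rw [hA]
    have hfac : 0 ≤ Real.sqrt c
        * ((2 : ℝ) ^ (n : ℕ) * L.chi ((2 : ℝ) ^ (n : ℕ) • ((1 : ℝ), (1 : ℝ)))) :=
      mul_nonneg (Real.sqrt_nonneg c) (mul_nonneg (by positivity) hchi0)
    have h1 : ((2 : ℝ) ^ (-(α - 2)) * 2) * (Real.sqrt c
          * ((2 : ℝ) ^ (n : ℕ) * L.chi ((2 : ℝ) ^ (n : ℕ) • ((1 : ℝ), (1 : ℝ)))))
        ≤ C1 * (Real.sqrt c
          * ((2 : ℝ) ^ (n : ℕ) * L.chi ((2 : ℝ) ^ (n : ℕ) • ((1 : ℝ), (1 : ℝ))))) := by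
      apply mul_le_mul_of_nonneg_right _ hfac
      rw [hC1]
      nlinarith [Real.rpow_nonneg (by norm_num : (0:ℝ) ≤ 2) (-(α - 2)),
        Real.rpow_nonneg hRρpos.le (-(α - 2)), mul_nonneg hMρ0 (Real.rpow_nonneg hRρpos.le (-(α - 2)))]
    refine le_trans h1 ?_
    rw [show C1 * (Real.sqrt c
        * ((2 : ℝ) ^ (n : ℕ) * L.chi ((2 : ℝ) ^ (n : ℕ) • ((1 : ℝ), (1 : ℝ)))))
      = C1 * Real.sqrt c * ((2 : ℝ) ^ (n : ℕ) * L.chi ((2 : ℝ) ^ (n : ℕ) • ((1 : ℝ), (1 : ℝ)))) by ring]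
    exact mul_le_mul_of_nonneg_left (le_max_right _ _)
      (mul_nonneg hC1pos.le (Real.sqrt_nonneg c))
  · -- rho part
    have hpow : (2 : ℝ) ^ (n : ℕ) * (2 : ℝ) ^ ((α - 2) * (n : ℝ))
        = (2 : ℝ) ^ (-(n : ℝ) * (1 - α)) := by
      rw [← Real.rpow_natCast 2 n, ← Real.rpow_add two_pos]
      congr 1
      ring
    have hB : Mρ * (2 * W n c) * (Rρ ^ (-(α - 2)) * (2 : ℝ) ^ ((α - 2) * (n : ℝ)))
        = (2 * Mρ * Rρ ^ (-(α - 2))) * Real.sqrt c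
            * ((2 : ℝ) ^ (n : ℕ) * (2 : ℝ) ^ ((α - 2) * (n : ℝ))) := by
      rw [W]; ring
    rw [hB, hpow]
    have hM1 : (0:ℝ) ≤ (2 : ℝ) ^ (-(n : ℝ) * (1 - α)) := Real.rpow_nonneg (by norm_num) _
    have h2 : (2 * Mρ * Rρ ^ (-(α - 2))) * Real.sqrt c * ((2 : ℝ) ^ (-(n : ℝ) * (1 - α)))
        ≤ C1 * Real.sqrt c * ((2 : ℝ) ^ (-(n : ℝ) * (1 - α))) := by
      apply mul_le_mul_of_nonneg_right _ hM1
      apply mul_le_mul_of_nonneg_right _ (Real.sqrt_nonneg c)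
      rw [hC1]
      nlinarith [Real.rpow_pos_of_pos (two_pos (α := ℝ)) (-(α - 2))]
    refine le_trans h2 ?_
    exact mul_le_mul_of_nonneg_left (le_max_left _ _)
      (mul_nonneg hC1pos.le (Real.sqrt_nonneg c))

lemma E2 (L : LP) (α : ℝ) (hα : α < 1) (c : ℝ) (hc : 0 ≤ c) :
    ∃ C2 : ℝ, 0 < C2 ∧ ∀ n : ℕ,
      L.besov (2 * α - 2) (L.reson (Xosc n c) (Kop (Xosc n c)) - constD c)
        ≤ C2 * c * max ((2 : ℝ) ^ (-2 * (n : ℝ) * (1 - α)))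
            (L.chi ((2 : ℝ) ^ (n : ℕ) • ((1 : ℝ), (1 : ℝ)))) := by
  obtain ⟨r, Rρ, hr, hrR, hann⟩ := L.rho_annulus
  have hann' : ∀ x, Rρ < enorm2 x → L.rho x = 0 := fun x hx => hann x (Or.inr hx)
  have hRρpos : 0 < Rρ := lt_trans hr hrR
  obtain ⟨Mρ, hMρ0, hMρ⟩ := bdd_of_vanish L.rho L.rho_smooth.continuous (Rρ + 1)
    (fun x hx => hann' x (by linarith))
  obtain ⟨Rχ, hRχpos, hχball⟩ := L.chi_ball
  obtain ⟨Mχ, hMχ0, hMχ⟩ := bdd_of_vanish L.chi L.chi_smooth.continuous Rχ hχball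
  have hβ : 2 * α - 2 < 0 := by linarith
  refine ⟨(2 : ℝ) ^ (-(2 * α - 2)) * Mχ * Rχ ^ (2 * (1 - α)) + Mρ * Rρ ^ (-(2 * α - 2)) + 1,
    by positivity, fun n => ?_⟩
  set C2 : ℝ := (2 : ℝ) ^ (-(2 * α - 2)) * Mχ * Rχ ^ (2 * (1 - α)) + Mρ * Rρ ^ (-(2 * α - 2)) + 1
    with hC2
  have hC2pos : 0 < C2 := by rw [hC2]; positivity
  have hv : (0 : ℝ) ≤ c / 2 := by linarith
  have hM1pos : (0:ℝ) < (2 : ℝ) ^ (-2 * (n : ℝ) * (1 - α)) := Real.rpow_pos_of_pos two_pos _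
  have hmax0 : (0:ℝ) ≤ max ((2 : ℝ) ^ (-2 * (n : ℝ) * (1 - α)))
      (L.chi ((2 : ℝ) ^ (n : ℕ) • ((1 : ℝ), (1 : ℝ)))) :=
    le_trans hM1pos.le (le_max_left _ _)
  have hrhs0 : (0:ℝ) ≤ C2 * c * max ((2 : ℝ) ^ (-2 * (n : ℝ) * (1 - α)))
      (L.chi ((2 : ℝ) ^ (n : ℕ) • ((1 : ℝ), (1 : ℝ)))) :=
    mul_nonneg (mul_nonneg hC2pos.le hc) hmax0
  rw [reson_sub L n c hc]
  have hYsupp : ∀ k : Freq, k ≠ ((2 ^ (n+1) : ℤ), (2 ^ (n+1) : ℤ)) →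
      k ≠ (-(2 ^ (n+1) : ℤ), -(2 ^ (n+1) : ℤ)) → Y n c k = 0 := by
    intro k h1 h2
    rw [Y, if_neg]
    push_neg
    exact ⟨h1, h2⟩
  have hYnorm : ‖((c / 2 : ℝ) : ℂ)‖ = c / 2 := by
    rw [Complex.norm_real, Real.norm_eq_abs, abs_of_nonneg hv]
  have happ := besov_le L (2 * α - 2) hβ Mρ Rρ hMρ hRρpos hann' (n + 1) (c / 2) hv (Y n c)
    hYsupp
    (by rw [show Y n c ((2 ^ (n+1) : ℤ), (2 ^ (n+1) : ℤ)) = ((c / 2 : ℝ) : ℂ) from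
          if_pos (Or.inl rfl), hYnorm])
    (by rw [show Y n c (-(2 ^ (n+1) : ℤ), -(2 ^ (n+1) : ℤ)) = ((c / 2 : ℝ) : ℂ) from
          if_pos (Or.inr rfl), hYnorm])
  refine le_trans happ (max_le ?_ ?_)
  · -- chi part at scale n+1
    by_cases hchi : L.chi ((2 : ℝ) ^ (n + 1) • ((1 : ℝ), (1 : ℝ))) = 0
    · rw [hchi, mul_zero, mul_zero]
      exact hrhs0
    · have henorm : enorm2 ((2 : ℝ) ^ (n + 1) • ((1 : ℝ), (1 : ℝ))) < Rχ := by
        by_contra hcon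
        exact hchi (hχball _ (not_lt.mp hcon))
      have henval : enorm2 ((2 : ℝ) ^ (n + 1) • ((1 : ℝ), (1 : ℝ)))
          = (2 : ℝ) ^ (n + 1) * Real.sqrt 2 := by
        rw [smul_diag ((2:ℝ) ^ (n+1)) 1, enorm2_diag, mul_one,
          abs_of_nonneg (by positivity)]
      have h2n : (2 : ℝ) ^ n < Rχ := by
        rw [henval] at henorm
        nlinarith [one_le_sqrt_two, pow_pos (two_pos (α := ℝ)) n,
          pow_pos (two_pos (α := ℝ)) (n+1), pow_succ (2:ℝ) n]
      have hkey : (1 : ℝ) ≤ Rχ ^ (2 * (1 - α)) * (2 : ℝ) ^ (-2 * (n : ℝ) * (1 - α)) := by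
        have ha : ((2 : ℝ) ^ n) ^ (2 * (1 - α)) ≤ Rχ ^ (2 * (1 - α)) :=
          Real.rpow_le_rpow (by positivity) h2n.le (by linarith)
        have hb : ((2 : ℝ) ^ n : ℝ) ^ (2 * (1 - α)) = (2 : ℝ) ^ ((n : ℝ) * (2 * (1 - α))) := by
          rw [← Real.rpow_natCast 2 n, ← Real.rpow_mul (by norm_num : (0:ℝ) ≤ 2)]
        have hc1 : (2 : ℝ) ^ ((n : ℝ) * (2 * (1 - α))) * (2 : ℝ) ^ (-2 * (n : ℝ) * (1 - α))
            = 1 := by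
          rw [← Real.rpow_add two_pos, show (n : ℝ) * (2 * (1 - α)) + -2 * (n : ℝ) * (1 - α)
            = 0 by ring, Real.rpow_zero]
        calc (1 : ℝ) = (2 : ℝ) ^ ((n : ℝ) * (2 * (1 - α)))
              * (2 : ℝ) ^ (-2 * (n : ℝ) * (1 - α)) := hc1.symm
          _ ≤ Rχ ^ (2 * (1 - α)) * (2 : ℝ) ^ (-2 * (n : ℝ) * (1 - α)) := by
              apply mul_le_mul_of_nonneg_right _ (Real.rpow_nonneg (by norm_num) _)
              rw [← hb]; exact ha
      have hchub : L.chi ((2 : ℝ) ^ (n + 1) • ((1 : ℝ), (1 : ℝ))) ≤ Mχ := hMχ _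
      have hchinn : 0 ≤ L.chi ((2 : ℝ) ^ (n + 1) • ((1 : ℝ), (1 : ℝ))) := L.chi_nonneg _
      have hstep1 : (2 : ℝ) ^ (-(2 * α - 2))
            * ((2 * (c / 2)) * L.chi ((2 : ℝ) ^ (n + 1) • ((1 : ℝ), (1 : ℝ))))
          ≤ (2 : ℝ) ^ (-(2 * α - 2)) * Mχ * c := by
        have := mul_le_mul_of_nonneg_left hchub hc
        nlinarith [Real.rpow_pos_of_pos (two_pos (α := ℝ)) (-(2 * α - 2)), hchinn]
      refine le_trans hstep1 ?_
      have hstep2 : (2 : ℝ) ^ (-(2 * α - 2)) * Mχ * c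
          ≤ ((2 : ℝ) ^ (-(2 * α - 2)) * Mχ * Rχ ^ (2 * (1 - α))) * c
              * ((2 : ℝ) ^ (-2 * (n : ℝ) * (1 - α))) := by
        have hfac : (0:ℝ) ≤ (2 : ℝ) ^ (-(2 * α - 2)) * Mχ * c :=
          mul_nonneg (mul_nonneg (Real.rpow_nonneg (by norm_num) _) hMχ0) hc
        calc (2 : ℝ) ^ (-(2 * α - 2)) * Mχ * c
            = ((2 : ℝ) ^ (-(2 * α - 2)) * Mχ * c) * 1 := by ring
          _ ≤ ((2 : ℝ) ^ (-(2 * α - 2)) * Mχ * c)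
              * (Rχ ^ (2 * (1 - α)) * (2 : ℝ) ^ (-2 * (n : ℝ) * (1 - α))) :=
              mul_le_mul_of_nonneg_left hkey hfac
          _ = ((2 : ℝ) ^ (-(2 * α - 2)) * Mχ * Rχ ^ (2 * (1 - α))) * c
              * ((2 : ℝ) ^ (-2 * (n : ℝ) * (1 - α))) := by ring
      refine le_trans hstep2 ?_
      have hKC : (2 : ℝ) ^ (-(2 * α - 2)) * Mχ * Rχ ^ (2 * (1 - α)) ≤ C2 := by
        rw [hC2]
        nlinarith [mul_nonneg hMρ0 (Real.rpow_nonneg hRρpos.le (-(2 * α - 2)))]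
      calc ((2 : ℝ) ^ (-(2 * α - 2)) * Mχ * Rχ ^ (2 * (1 - α))) * c
              * ((2 : ℝ) ^ (-2 * (n : ℝ) * (1 - α)))
          ≤ C2 * c * ((2 : ℝ) ^ (-2 * (n : ℝ) * (1 - α))) := by
            apply mul_le_mul_of_nonneg_right _ hM1pos.le
            exact mul_le_mul_of_nonneg_right hKC hc
        _ ≤ C2 * c * max ((2 : ℝ) ^ (-2 * (n : ℝ) * (1 - α)))
              (L.chi ((2 : ℝ) ^ (n : ℕ) • ((1 : ℝ), (1 : ℝ)))) :=
            mul_le_mul_of_nonneg_left (le_max_left _ _) (mul_nonneg hC2pos.le hc)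
  · -- rho part at scale n+1
    have hsplit : (2 : ℝ) ^ ((2 * α - 2) * ((n + 1 : ℕ) : ℝ))
        = (2 : ℝ) ^ (-2 * (n : ℝ) * (1 - α)) * (2 : ℝ) ^ (2 * α - 2) := by
      rw [← Real.rpow_add two_pos]
      congr 1
      push_cast
      ring
    have h2β : (2 : ℝ) ^ (2 * α - 2) ≤ 1 :=
      Real.rpow_le_one_of_one_le_of_nonpos one_le_two hβ.le
    have h2βpos : (0:ℝ) < (2 : ℝ) ^ (2 * α - 2) := Real.rpow_pos_of_pos two_pos _
    have hstep : Mρ * (2 * (c / 2)) * (Rρ ^ (-(2 * α - 2))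
          * (2 : ℝ) ^ ((2 * α - 2) * ((n + 1 : ℕ) : ℝ)))
        ≤ (Mρ * Rρ ^ (-(2 * α - 2))) * c * ((2 : ℝ) ^ (-2 * (n : ℝ) * (1 - α))) := by
      rw [hsplit]
      have hRβ : (0:ℝ) ≤ Rρ ^ (-(2 * α - 2)) := Real.rpow_nonneg hRρpos.le _
      nlinarith [mul_nonneg (mul_nonneg hMρ0 hRβ) hc,
        mul_nonneg (mul_nonneg (mul_nonneg hMρ0 hRβ) hc) hM1pos.le]
    refine le_trans hstep ?_
    have hKC : Mρ * Rρ ^ (-(2 * α - 2)) ≤ C2 := by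
      rw [hC2]
      nlinarith [mul_nonneg (mul_nonneg (Real.rpow_nonneg (by norm_num : (0:ℝ) ≤ 2)
        (-(2 * α - 2))) hMχ0) (Real.rpow_nonneg hRχpos.le (2 * (1 - α)))]
    calc (Mρ * Rρ ^ (-(2 * α - 2))) * c * ((2 : ℝ) ^ (-2 * (n : ℝ) * (1 - α)))
        ≤ C2 * c * ((2 : ℝ) ^ (-2 * (n : ℝ) * (1 - α))) := by
          apply mul_le_mul_of_nonneg_right _ hM1pos.le
          exact mul_le_mul_of_nonneg_right hKC hc
      _ ≤ C2 * c * max ((2 : ℝ) ^ (-2 * (n : ℝ) * (1 - α)))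
            (L.chi ((2 : ℝ) ^ (n : ℕ) • ((1 : ℝ), (1 : ℝ)))) :=
          mul_le_mul_of_nonneg_left (le_max_left _ _) (mul_nonneg hC2pos.le hc)


lemma tend_aux (γ : ℝ) (hγ : γ < 0) :
    Tendsto (fun n : ℕ => (2 : ℝ) ^ (γ * (n : ℝ))) atTop (nhds 0) := by
  have hb0 : (0 : ℝ) ≤ (2 : ℝ) ^ (γ : ℝ) := Real.rpow_nonneg (by norm_num) _
  have hb1 : (2 : ℝ) ^ (γ : ℝ) < 1 := Real.rpow_lt_one_of_one_lt_of_neg one_lt_two hγ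
  have h := tendsto_pow_atTop_nhds_zero_of_lt_one hb0 hb1
  refine h.congr fun n => ?_
  rw [← Real.rpow_natCast ((2 : ℝ) ^ (γ : ℝ)) n, ← Real.rpow_mul (by norm_num : (0:ℝ) ≤ 2),
    mul_comm]

lemma chi_eventually_zero (L : LP) :
    ∀ᶠ n : ℕ in atTop, L.chi ((2 : ℝ) ^ (n : ℕ) • ((1 : ℝ), (1 : ℝ))) = 0 := by
  obtain ⟨Rχ, hRχpos, hχball⟩ := L.chi_ball
  have h2 : Tendsto (fun n : ℕ => (2 : ℝ) ^ n) atTop atTop :=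
    tendsto_pow_atTop_atTop_of_one_lt one_lt_two
  filter_upwards [h2.eventually_ge_atTop Rχ] with n hn
  apply hχball
  rw [smul_diag ((2 : ℝ) ^ n) 1, mul_one, enorm2_diag, abs_of_nonneg (by positivity)]
  nlinarith [one_le_sqrt_two, pow_pos (two_pos (α := ℝ)) n]

end OscAux



/-- **Lemma 3.4 (pure-area-type oscillatory approximations)**: for `α < 1`, `c ≥ 0`, the
functions `X^{n,c}(x) = √c 2^{n+1} cos(2ⁿ⟨(1,1),x⟩)` satisfy `‖X^{n,c}‖_{α-2} → 0` and
`‖X^{n,c}∘KX^{n,c} - c‖_{2α-2} → 0`, with the quantitative bounds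
`‖X^{n,c}‖_{α-2} ≲ √c max(2^{-n(1-α)}, 2ⁿ χ(2ⁿz))` and
`‖X^{n,c}∘KX^{n,c} - c‖_{2α-2} ≲ c max(2^{-2n(1-α)}, χ(2ⁿz))`. -/
theorem oscillatory_approximation
    (L : GPAM.LP) (α : ℝ) (hα : α < 1) (c : ℝ) (hc : 0 ≤ c) :
    Tendsto (fun n : ℕ => L.besov (α - 2) (GPAM.Xosc n c)) atTop (nhds 0) ∧
    Tendsto (fun n : ℕ =>
        L.besov (2 * α - 2)
          (L.reson (GPAM.Xosc n c) (GPAM.Kop (GPAM.Xosc n c)) - GPAM.constD c))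
      atTop (nhds 0) ∧
    ∃ C : ℝ, 0 < C ∧ ∀ n : ℕ,
      L.besov (α - 2) (GPAM.Xosc n c)
          ≤ C * Real.sqrt c *
            max ((2 : ℝ) ^ (-(n : ℝ) * (1 - α)))
              ((2 : ℝ) ^ (n : ℕ) * L.chi ((2 : ℝ) ^ (n : ℕ) • ((1 : ℝ), (1 : ℝ)))) ∧
        L.besov (2 * α - 2)
            (L.reson (GPAM.Xosc n c) (GPAM.Kop (GPAM.Xosc n c)) - GPAM.constD c)
          ≤ C * c *
            max ((2 : ℝ) ^ (-2 * (n : ℝ) * (1 - α)))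
              (L.chi ((2 : ℝ) ^ (n : ℕ) • ((1 : ℝ), (1 : ℝ)))) := by
  classical
  obtain ⟨C1, hC1pos, hE1⟩ := OscAux.E1 L α hα c hc
  obtain ⟨C2, hC2pos, hE2⟩ := OscAux.E2 L α hα c hc
  have hev := OscAux.chi_eventually_zero L
  have hT1 : Tendsto (fun n : ℕ => C1 * Real.sqrt c *
      max ((2 : ℝ) ^ (-(n : ℝ) * (1 - α)))
        ((2 : ℝ) ^ (n : ℕ) * L.chi ((2 : ℝ) ^ (n : ℕ) • ((1 : ℝ), (1 : ℝ)))))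
      atTop (nhds 0) := by
    have base := (OscAux.tend_aux (-(1 - α)) (by linarith)).const_mul (C1 * Real.sqrt c)
    rw [mul_zero] at base
    refine base.congr' ?_
    filter_upwards [hev] with n hn
    rw [hn, mul_zero, max_eq_left (Real.rpow_nonneg (by norm_num) _),
      show (-(1 - α)) * (n : ℝ) = -(n : ℝ) * (1 - α) by ring]
  have hT2 : Tendsto (fun n : ℕ => C2 * c *
      max ((2 : ℝ) ^ (-2 * (n : ℝ) * (1 - α)))
        (L.chi ((2 : ℝ) ^ (n : ℕ) • ((1 : ℝ), (1 : ℝ)))))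
      atTop (nhds 0) := by
    have base := (OscAux.tend_aux (-2 * (1 - α)) (by linarith)).const_mul (C2 * c)
    rw [mul_zero] at base
    refine base.congr' ?_
    filter_upwards [hev] with n hn
    rw [hn, max_eq_left (Real.rpow_nonneg (by norm_num) _),
      show (-2 * (1 - α)) * (n : ℝ) = -2 * (n : ℝ) * (1 - α) by ring]
  refine ⟨?_, ?_, C1 + C2, by positivity, fun n => ⟨?_, ?_⟩⟩
  · exact squeeze_zero (fun n => OscAux.besov_nonneg L _ _) (fun n => hE1 n) hT1
  · exact squeeze_zero (fun n => OscAux.besov_nonneg L _ _) (fun n => hE2 n) hT2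
  · refine le_trans (hE1 n) ?_
    have hmax : (0:ℝ) ≤ max ((2 : ℝ) ^ (-(n : ℝ) * (1 - α)))
        ((2 : ℝ) ^ (n : ℕ) * L.chi ((2 : ℝ) ^ (n : ℕ) • ((1 : ℝ), (1 : ℝ)))) :=
      le_trans (Real.rpow_nonneg (by norm_num) _) (le_max_left _ _)
    nlinarith [mul_nonneg (mul_nonneg hC2pos.le (Real.sqrt_nonneg c)) hmax]
  · refine le_trans (hE2 n) ?_
    have hmax : (0:ℝ) ≤ max ((2 : ℝ) ^ (-2 * (n : ℝ) * (1 - α)))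
        (L.chi ((2 : ℝ) ^ (n : ℕ) • ((1 : ℝ), (1 : ℝ)))) :=
      le_trans (Real.rpow_nonneg (by norm_num) _) (le_max_left _ _)
    nlinarith [mul_nonneg (mul_nonneg hC1pos.le hc) hmax]
end
end

section
/- Let α ∈ (2/3,1). The closure in ℋ^α of the set {(h, h∘Kh) : h ∈ ℋ} is strictly contained in 𝒳^α; in particular (0,−1) ∈ 𝒳^α, but there is no sequence (h_n) in ℋ with (h_n, h_n∘Kh_n) → (0,−1) in ℋ^α. -/
noncomputable section

open MeasureTheory ProbabilityTheory Filter Topology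

namespace GPAM

section Helpers

lemma enorm2_eq_abs (x : ℝ × ℝ) : enorm2 x = ‖(⟨x.1, x.2⟩ : ℂ)‖ := by
  rw [Complex.norm_def, Complex.normSq_mk, enorm2, pow_two, pow_two]

lemma enorm2_nonneg (x : ℝ × ℝ) : 0 ≤ enorm2 x := Real.sqrt_nonneg _

lemma enorm2_zero : enorm2 (0 : ℝ × ℝ) = 0 := by
  simp [enorm2]

lemma enorm2_smul (c : ℝ) (x : ℝ × ℝ) : enorm2 (c • x) = |c| * enorm2 x := by
  simp only [enorm2, Prod.smul_fst, Prod.smul_snd, smul_eq_mul, mul_pow]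
  rw [← mul_add, Real.sqrt_mul (sq_nonneg c), Real.sqrt_sq_eq_abs]

lemma toR_neg (k : Freq) : toR (-k) = -toR k := by
  simp [toR, Prod.ext_iff]

lemma toR_zero : toR 0 = 0 := by simp [toR, Prod.ext_iff]

lemma freqNorm_nonneg (k : Freq) : 0 ≤ freqNorm k := enorm2_nonneg _

lemma freqNorm_neg (k : Freq) : freqNorm (-k) = freqNorm k := by
  rw [freqNorm, toR_neg, freqNorm]
  simp [enorm2]

lemma freqNorm_zero : freqNorm 0 = 0 := by
  rw [freqNorm, toR_zero, enorm2_zero]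

lemma freqNorm_triangle (p q : Freq) : freqNorm (p + q) ≤ freqNorm p + freqNorm q := by
  have h : ∀ k : Freq, freqNorm k = ‖(⟨(k.1 : ℝ), (k.2 : ℝ)⟩ : ℂ)‖ := by
    intro k; rw [freqNorm, enorm2_eq_abs]; rfl
  rw [h, h, h]
  have : (⟨((p+q).1 : ℝ), ((p+q).2 : ℝ)⟩ : ℂ) = ⟨(p.1 : ℝ), (p.2 : ℝ)⟩ + ⟨(q.1 : ℝ), (q.2 : ℝ)⟩ := by
    apply Complex.ext <;> simp <;> push_cast <;> ring
  rw [this]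
  exact norm_add_le _ _

lemma one_le_freqNorm {k : Freq} (hk : k ≠ 0) : 1 ≤ freqNorm k := by
  have h1 : (1 : ℤ) ≤ k.1 ^ 2 + k.2 ^ 2 := by
    have hk' : k.1 ≠ 0 ∨ k.2 ≠ 0 := by
      by_contra hc
      push_neg at hc
      exact hk (Prod.ext hc.1 hc.2)
    rcases hk' with h | h
    · have := Int.one_le_abs (by simpa using h)
      nlinarith [sq_nonneg k.2, sq_abs k.1]
    · have := Int.one_le_abs (by simpa using h)
      nlinarith [sq_nonneg k.1, sq_abs k.2]
  have h2 : (1 : ℝ) ≤ (k.1 : ℝ) ^ 2 + (k.2 : ℝ) ^ 2 := by exact_mod_cast h1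
  calc (1 : ℝ) = Real.sqrt 1 := by rw [Real.sqrt_one]
  _ ≤ freqNorm k := Real.sqrt_le_sqrt h2

lemma abs_fst_le_freqNorm (k : Freq) : |(k.1 : ℝ)| ≤ freqNorm k := by
  rw [freqNorm, enorm2, ← Real.sqrt_sq_eq_abs]
  exact Real.sqrt_le_sqrt (by simp [toR]; nlinarith [sq_nonneg ((k.2:ℝ))])

lemma abs_snd_le_freqNorm (k : Freq) : |(k.2 : ℝ)| ≤ freqNorm k := by
  rw [freqNorm, enorm2, ← Real.sqrt_sq_eq_abs]
  exact Real.sqrt_le_sqrt (by simp [toR]; nlinarith [sq_nonneg ((k.1:ℝ))])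

/-- Square finset of frequencies. -/
def sqF (m : ℕ) : Finset Freq := Finset.Icc (-(m:ℤ)) m ×ˢ Finset.Icc (-(m:ℤ)) m

lemma mem_sqF {m : ℕ} {k : Freq} : k ∈ sqF m ↔ |k.1| ≤ (m:ℤ) ∧ |k.2| ≤ (m:ℤ) := by
  simp [sqF, Finset.mem_product, Finset.mem_Icc, abs_le]

lemma mem_sqF_of_freqNorm {m : ℕ} {k : Freq} (h : freqNorm k ≤ m) : k ∈ sqF m := by
  rw [mem_sqF]
  constructor
  · have : |(k.1 : ℝ)| ≤ (m : ℝ) := le_trans (abs_fst_le_freqNorm k) h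
    exact_mod_cast (by push_cast at this ⊢; exact this : |(k.1:ℝ)| ≤ ((m:ℤ):ℝ))
  · have : |(k.2 : ℝ)| ≤ (m : ℝ) := le_trans (abs_snd_le_freqNorm k) h
    exact_mod_cast (by push_cast at this ⊢; exact this : |(k.2:ℝ)| ≤ ((m:ℤ):ℝ))

lemma card_sqF (m : ℕ) : (sqF m).card = (2*m+1)^2 := by
  rw [sqF, Finset.card_product, Int.card_Icc]
  have : ((m:ℤ) + 1 - -(m:ℤ)).toNat = 2*m+1 := by omega
  rw [this, pow_two]

end Helpers

section SupNorm

lemma norm_exp_I_real (t : ℝ) : ‖Complex.exp (Complex.I * (t : ℂ))‖ = 1 := by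
  rw [Complex.norm_exp]
  simp [Complex.mul_re]

lemma eval_eq_sum {u : Dist} {s : Finset Freq} (hs : ∀ k ∉ s, u k = 0) (x : ℝ × ℝ) :
    eval u x = ∑ k ∈ s, u k * Complex.exp (Complex.I * (((k.1 : ℝ) * x.1 + (k.2 : ℝ) * x.2 : ℝ) : ℂ)) := by
  exact tsum_eq_sum (fun k hk => by rw [hs k hk, zero_mul])

lemma norm_eval_le_sum {u : Dist} {s : Finset Freq} (hs : ∀ k ∉ s, u k = 0) (x : ℝ × ℝ) :
    ‖eval u x‖ ≤ ∑ k ∈ s, ‖u k‖ := by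
  rw [eval_eq_sum hs x]
  refine le_trans (norm_sum_le _ _) (Finset.sum_le_sum fun k _ => ?_)
  rw [norm_mul, norm_exp_I_real, mul_one]

lemma supNorm_nonneg (u : Dist) : 0 ≤ supNorm u :=
  Real.iSup_nonneg fun _ => norm_nonneg _

lemma supNorm_le_sum {u : Dist} {s : Finset Freq} (hs : ∀ k ∉ s, u k = 0) :
    supNorm u ≤ ∑ k ∈ s, ‖u k‖ :=
  Real.iSup_le (fun x => norm_eval_le_sum hs x) (Finset.sum_nonneg fun _ _ => norm_nonneg _)

lemma bddAbove_eval {u : Dist} {s : Finset Freq} (hs : ∀ k ∉ s, u k = 0) :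
    BddAbove (Set.range fun x : ℝ × ℝ => ‖eval u x‖) := by
  refine ⟨∑ k ∈ s, ‖u k‖, ?_⟩
  rintro _ ⟨x, rfl⟩
  exact norm_eval_le_sum hs x

lemma norm_eval_le_supNorm {u : Dist} {s : Finset Freq} (hs : ∀ k ∉ s, u k = 0) (x : ℝ × ℝ) :
    ‖eval u x‖ ≤ supNorm u :=
  le_ciSup (bddAbove_eval hs) x

lemma supNorm_zero : supNorm (0 : Dist) = 0 := by
  have : ∀ x : ℝ × ℝ, ‖eval (0 : Dist) x‖ = 0 := by
    intro x
    have : eval (0 : Dist) x = 0 := by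
      rw [eval]
      simp
    rw [this, norm_zero]
  rw [supNorm]
  simp only [this]
  exact ciSup_const

end SupNorm

section Averaging

def expA (N : ℕ) (c : ℤ) (a : ℕ) : ℂ :=
  Complex.exp (Complex.I * (((c : ℝ) * (2 * Real.pi * a / N) : ℝ) : ℂ))

lemma expA_zero (N : ℕ) (a : ℕ) : expA N 0 a = 1 := by
  simp [expA]

lemma expA_sum_eq_zero {N : ℕ} {c : ℤ} (hc : c ≠ 0) (h : c.natAbs < N) :
    ∑ a ∈ Finset.range N, expA N c a = 0 := by
  have hNpos : 0 < N := lt_of_le_of_lt (Nat.zero_le _) h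
  have hNne : (N : ℂ) ≠ 0 := Nat.cast_ne_zero.mpr hNpos.ne'
  set ζ := Complex.exp (2 * Real.pi * Complex.I * c / N) with hζdef
  have hE : ∀ a : ℕ, expA N c a = ζ ^ a := by
    intro a
    rw [hζdef, ← Complex.exp_nat_mul, expA]
    congr 1
    push_cast
    field_simp
  have hζN : ζ ^ N = 1 := by
    rw [hζdef, ← Complex.exp_nat_mul]
    have harg : (N : ℂ) * (2 * Real.pi * Complex.I * c / N) = (c : ℂ) * (2 * Real.pi * Complex.I) := by
      field_simp
    rw [harg]
    exact_mod_cast Complex.exp_int_mul_two_pi_mul_I c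
  have hζ1 : ζ ≠ 1 := by
    intro hone
    obtain ⟨n, hn⟩ := Complex.exp_eq_one_iff.mp (hζdef ▸ hone)
    have h2 : (2 * (Real.pi : ℂ) * Complex.I) ≠ 0 := by
      have : (Real.pi : ℂ) ≠ 0 := Complex.ofReal_ne_zero.mpr Real.pi_ne_zero
      simp [this, Complex.I_ne_zero]
    have hc' : (c : ℂ) = (n : ℂ) * N := by
      field_simp at hn
      apply mul_left_cancel₀ h2
      linear_combination (2 * (Real.pi : ℂ) * Complex.I) * hn
    have hcz : c = n * N := by exact_mod_cast hc'
    have hna : c.natAbs = n.natAbs * N := by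
      rw [hcz, Int.natAbs_mul, Int.natAbs_natCast]
    have hn0 : n.natAbs ≠ 0 := by
      intro h0
      apply hc
      rw [hcz, Int.natAbs_eq_zero.mp h0, zero_mul]
    have hle : N ≤ c.natAbs := by
      rw [hna]
      calc N = 1 * N := (one_mul N).symm
      _ ≤ n.natAbs * N := Nat.mul_le_mul_right N (Nat.one_le_iff_ne_zero.mpr hn0)
    omega
  calc ∑ a ∈ Finset.range N, expA N c a = ∑ a ∈ Finset.range N, ζ ^ a := by
        exact Finset.sum_congr rfl fun a _ => hE a
  _ = (ζ ^ N - 1) / (ζ - 1) := geom_sum_eq hζ1 N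
  _ = 0 := by rw [hζN, sub_self, zero_div]

lemma coeff_zero_le_supNorm {u : Dist} {s : Finset Freq} (hs : ∀ k ∉ s, u k = 0) :
    ‖u 0‖ ≤ supNorm u := by
  set N := (s.sup fun k => k.1.natAbs ⊔ k.2.natAbs) + 1 with hNdef
  have hNpos : 0 < N := Nat.succ_pos _
  have hkN : ∀ k ∈ s, k.1.natAbs < N ∧ k.2.natAbs < N := by
    intro k hk
    have h1 : k.1.natAbs ⊔ k.2.natAbs ≤ s.sup fun k => k.1.natAbs ⊔ k.2.natAbs :=
      Finset.le_sup (f := fun k => k.1.natAbs ⊔ k.2.natAbs) hk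
    have h2 : k.1.natAbs ≤ s.sup fun k => k.1.natAbs ⊔ k.2.natAbs :=
      le_trans (le_max_left _ _) h1
    have h3 : k.2.natAbs ≤ s.sup fun k => k.1.natAbs ⊔ k.2.natAbs :=
      le_trans (le_max_right _ _) h1
    omega
  have hev : ∀ a b : ℕ,
      eval u (2 * Real.pi * a / N, 2 * Real.pi * b / N)
        = ∑ k ∈ s, u k * (expA N k.1 a * expA N k.2 b) := by
    intro a b
    rw [eval_eq_sum hs]
    refine Finset.sum_congr rfl fun k _ => ?_
    congr 1
    rw [expA, expA, ← Complex.exp_add, ← mul_add, ← Complex.ofReal_add]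
  have key : ∑ a ∈ Finset.range N, ∑ b ∈ Finset.range N,
      eval u (2 * Real.pi * a / N, 2 * Real.pi * b / N) = u 0 * ((N : ℂ) * (N : ℂ)) := by
    have expand : ∀ k : Freq,
        u k * ((∑ a ∈ Finset.range N, expA N k.1 a) * (∑ b ∈ Finset.range N, expA N k.2 b))
          = ∑ a ∈ Finset.range N, ∑ b ∈ Finset.range N, u k * (expA N k.1 a * expA N k.2 b) := by
      intro k
      rw [Finset.sum_mul_sum, Finset.mul_sum]
      exact Finset.sum_congr rfl fun a _ => by rw [Finset.mul_sum]
    have swap : ∑ k ∈ s,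
        u k * ((∑ a ∈ Finset.range N, expA N k.1 a) * (∑ b ∈ Finset.range N, expA N k.2 b))
          = ∑ a ∈ Finset.range N, ∑ b ∈ Finset.range N,
              eval u (2 * Real.pi * a / N, 2 * Real.pi * b / N) := by
      simp only [expand, hev]
      rw [Finset.sum_comm]
      exact Finset.sum_congr rfl fun a _ => Finset.sum_comm
    rw [← swap]
    rw [Finset.sum_eq_single 0]
    · simp only [Prod.fst_zero, Prod.snd_zero, expA_zero, Finset.sum_const,
        Finset.card_range, nsmul_eq_mul, mul_one]
    · intro k hk hk0
      have hk' : k.1 ≠ 0 ∨ k.2 ≠ 0 := by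
        by_contra hcon
        push_neg at hcon
        exact hk0 (Prod.ext hcon.1 hcon.2)
      rcases hk' with h | h
      · rw [expA_sum_eq_zero h (hkN k hk).1, zero_mul, mul_zero]
      · rw [expA_sum_eq_zero h (hkN k hk).2, mul_zero, mul_zero]
    · intro h0
      rw [hs 0 h0, zero_mul]
  have hbound : ‖u 0‖ * ((N : ℝ) * (N : ℝ)) ≤ (N : ℝ) * (N : ℝ) * supNorm u := by
    have hL : ‖u 0 * ((N : ℂ) * (N : ℂ))‖ = ‖u 0‖ * ((N : ℝ) * (N : ℝ)) := by
      rw [norm_mul, norm_mul]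
      simp [Complex.norm_natCast]
    have hR : ‖∑ a ∈ Finset.range N, ∑ b ∈ Finset.range N,
        eval u (2 * Real.pi * a / N, 2 * Real.pi * b / N)‖ ≤ (N : ℝ) * (N : ℝ) * supNorm u := by
      refine le_trans (norm_sum_le _ _) ?_
      have : ∀ a ∈ Finset.range N, ‖∑ b ∈ Finset.range N,
          eval u (2 * Real.pi * a / N, 2 * Real.pi * b / N)‖ ≤ (N : ℝ) * supNorm u := by
        intro a _
        refine le_trans (norm_sum_le _ _) ?_
        have : ∀ b ∈ Finset.range N,
            ‖eval u (2 * Real.pi * a / N, 2 * Real.pi * b / N)‖ ≤ supNorm u := fun b _ =>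
          norm_eval_le_supNorm hs _
        refine le_trans (Finset.sum_le_sum this) ?_
        rw [Finset.sum_const, Finset.card_range, nsmul_eq_mul]
      refine le_trans (Finset.sum_le_sum this) ?_
      rw [Finset.sum_const, Finset.card_range, nsmul_eq_mul, mul_assoc]
    calc ‖u 0‖ * ((N : ℝ) * (N : ℝ)) = ‖u 0 * ((N : ℂ) * (N : ℂ))‖ := hL.symm
    _ = ‖∑ a ∈ Finset.range N, ∑ b ∈ Finset.range N,
          eval u (2 * Real.pi * a / N, 2 * Real.pi * b / N)‖ := by rw [key]
    _ ≤ (N : ℝ) * (N : ℝ) * supNorm u := hR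
  have hN2 : (0 : ℝ) < (N : ℝ) * (N : ℝ) := by positivity
  nlinarith [hbound, hN2]

end Averaging

section PackSec

lemma abs_fst_le_enorm2 (x : ℝ × ℝ) : |x.1| ≤ enorm2 x := by
  rw [enorm2, ← Real.sqrt_sq_eq_abs]
  exact Real.sqrt_le_sqrt (by nlinarith [sq_nonneg x.2])

lemma abs_snd_le_enorm2 (x : ℝ × ℝ) : |x.2| ≤ enorm2 x := by
  rw [enorm2, ← Real.sqrt_sq_eq_abs]
  exact Real.sqrt_le_sqrt (by nlinarith [sq_nonneg x.1])

lemma norm_le_enorm2 (x : ℝ × ℝ) : ‖x‖ ≤ enorm2 x := by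
  rw [Prod.norm_def]
  exact max_le (by rw [Real.norm_eq_abs]; exact abs_fst_le_enorm2 x)
    (by rw [Real.norm_eq_abs]; exact abs_snd_le_enorm2 x)

/-- A bundle of constants attached to a Littlewood–Paley pair. -/
structure Pack (L : LP) where
  Rchi : ℝ
  r : ℝ
  Rrho : ℝ
  Cb : ℝ
  B : ℝ
  hRchi : 0 < Rchi
  chi_zero : ∀ x, Rchi ≤ enorm2 x → L.chi x = 0
  hr : 0 < r
  hrR : r < Rrho
  rho_zero : ∀ x, enorm2 x < r ∨ Rrho < enorm2 x → L.rho x = 0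
  hCb : 1 ≤ Cb
  chi_le : ∀ x, L.chi x ≤ Cb
  rho_le : ∀ x, L.rho x ≤ Cb
  hB1 : 1 ≤ B
  hBchi : 2 * Rchi ≤ B
  hBrho : Rrho ≤ B
  D : ℕ
  hD : 6 * B ≤ r * 2 ^ D

lemma exists_pack (L : LP) : Nonempty (Pack L) := by
  obtain ⟨Rchi, hRchi, hchi⟩ := L.chi_ball
  obtain ⟨r, Rrho, hr, hrR, hrho⟩ := L.rho_annulus
  have hcs_chi : HasCompactSupport L.chi := by
    apply HasCompactSupport.intro (isCompact_closedBall (0 : ℝ × ℝ) Rchi)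
    intro x hx
    apply hchi
    have : Rchi < ‖x‖ := by
      simpa [Metric.mem_closedBall, dist_zero_right, not_le] using hx
    exact le_trans this.le (norm_le_enorm2 x)
  have hcs_rho : HasCompactSupport L.rho := by
    apply HasCompactSupport.intro (isCompact_closedBall (0 : ℝ × ℝ) Rrho)
    intro x hx
    apply hrho
    right
    have : Rrho < ‖x‖ := by
      simpa [Metric.mem_closedBall, dist_zero_right, not_le] using hx
    exact lt_of_lt_of_le this (norm_le_enorm2 x)
  obtain ⟨C1, hC1⟩ := L.chi_smooth.continuous.bounded_above_of_compact_support hcs_chi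
  obtain ⟨C2, hC2⟩ := L.rho_smooth.continuous.bounded_above_of_compact_support hcs_rho
  obtain ⟨D, hD⟩ := pow_unbounded_of_one_lt (6 * max 1 (max (2 * Rchi) Rrho) / r) one_lt_two
  have hD' : 6 * max 1 (max (2 * Rchi) Rrho) ≤ r * 2 ^ D := by
    rw [div_lt_iff₀ hr] at hD
    nlinarith
  refine ⟨⟨Rchi, r, Rrho, max 1 (max C1 C2), max 1 (max (2 * Rchi) Rrho),
    hRchi, hchi, hr, hrR, hrho, le_max_left _ _, ?_, ?_, le_max_left _ _, ?_, ?_, D, hD'⟩⟩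
  · intro x
    refine le_trans ?_ (le_trans (le_max_left C1 C2) (le_max_right 1 _))
    exact le_trans (le_abs_self _) (hC1 x)
  · intro x
    refine le_trans ?_ (le_trans (le_max_right C1 C2) (le_max_right 1 _))
    exact le_trans (le_abs_self _) (hC2 x)
  · exact le_trans (le_max_left _ _) (le_max_right 1 _)
  · exact le_trans (le_max_right _ _) (le_max_right 1 _)

variable {L : LP} (P : Pack L)

lemma Pack.hB0 : 0 < P.B := lt_of_lt_of_le one_pos P.hB1
lemma Pack.hCb0 : 0 < P.Cb := lt_of_lt_of_le one_pos P.hCb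

lemma block_coeff_norm_le (j : ℤ) (a : Dist) (k : Freq) :
    ‖L.block j a k‖ ≤ P.Cb * ‖a k‖ := by
  rw [LP.block]
  split_ifs
  · rw [norm_mul, Complex.norm_real, Real.norm_eq_abs, abs_of_nonneg (L.chi_nonneg _)]
    exact mul_le_mul_of_nonneg_right (P.chi_le _) (norm_nonneg _)
  · rw [norm_mul, Complex.norm_real, Real.norm_eq_abs, abs_of_nonneg (L.rho_nonneg _)]
    exact mul_le_mul_of_nonneg_right (P.rho_le _) (norm_nonneg _)

lemma block_ne_upper {j : ℤ} (hj : -1 ≤ j) {a : Dist} {k : Freq}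
    (h : L.block j a k ≠ 0) : freqNorm k ≤ P.B * 2 ^ j := by
  rw [LP.block] at h
  split_ifs at h with hcase
  · subst hcase
    have hchi : L.chi (toR k) ≠ 0 := fun h0 => h (by rw [h0, Complex.ofReal_zero, zero_mul])
    have h1 : enorm2 (toR k) < P.Rchi := by
      by_contra hcon
      exact hchi (P.chi_zero _ (not_lt.mp hcon))
    have h2 : (2 : ℝ) ^ (-1 : ℤ) = 2⁻¹ := by norm_num
    rw [h2]
    have := P.hBchi
    rw [freqNorm]
    nlinarith [P.hRchi]
  · have hj0 : 0 ≤ j := by omega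
    have hrho : L.rho ((2 : ℝ) ^ (-j) • toR k) ≠ 0 :=
      fun h0 => h (by rw [h0, Complex.ofReal_zero, zero_mul])
    have h1 : enorm2 ((2 : ℝ) ^ (-j) • toR k) ≤ P.Rrho := by
      by_contra hcon
      exact hrho (P.rho_zero _ (Or.inr (not_le.mp hcon)))
    rw [enorm2_smul] at h1
    have hpow : (0 : ℝ) < (2 : ℝ) ^ (-j) := zpow_pos two_pos _
    rw [abs_of_pos hpow] at h1
    have h2 : freqNorm k ≤ P.Rrho * 2 ^ j := by
      have := mul_le_mul_of_nonneg_right h1 (le_of_lt (zpow_pos two_pos j))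
      rw [mul_comm ((2:ℝ)^(-j)) _, mul_assoc, ← zpow_add₀ (two_ne_zero (α := ℝ))] at this
      simpa [freqNorm] using this
    exact le_trans h2 (mul_le_mul_of_nonneg_right P.hBrho (le_of_lt (zpow_pos two_pos j)))

lemma block_ne_lower {j : ℤ} (hj : 0 ≤ j) {a : Dist} {k : Freq}
    (h : L.block j a k ≠ 0) : P.r * 2 ^ j ≤ freqNorm k := by
  rw [LP.block, if_neg (by omega : ¬ j = -1)] at h
  have hrho : L.rho ((2 : ℝ) ^ (-j) • toR k) ≠ 0 :=
    fun h0 => h (by rw [h0, Complex.ofReal_zero, zero_mul])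
  have h1 : P.r ≤ enorm2 ((2 : ℝ) ^ (-j) • toR k) := by
    by_contra hcon
    exact hrho (P.rho_zero _ (Or.inl (not_le.mp hcon)))
  rw [enorm2_smul] at h1
  have hpow : (0 : ℝ) < (2 : ℝ) ^ (-j) := zpow_pos two_pos _
  rw [abs_of_pos hpow] at h1
  have := mul_le_mul_of_nonneg_right h1 (le_of_lt (zpow_pos two_pos j))
  calc P.r * 2 ^ j ≤ (2 : ℝ) ^ (-j) * enorm2 (toR k) * 2 ^ j := this
  _ = freqNorm k * ((2:ℝ) ^ (-j) * 2 ^ j) := by rw [freqNorm]; ring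
  _ = freqNorm k := by
      rw [← zpow_add₀ (two_ne_zero (α := ℝ)), neg_add_cancel, zpow_zero, mul_one]

lemma block_ne_zero_freq (P : Pack L) {j : ℤ} (hj : 0 ≤ j) {a : Dist} {k : Freq}
    (h : L.block j a k ≠ 0) : k ≠ 0 := by
  intro hk
  have h1 := block_ne_lower P hj h
  rw [hk, freqNorm_zero] at h1
  nlinarith [P.hr, zpow_pos (two_pos (α := ℝ)) j]

/-- Size of the finite square containing the support of the `j`-th block. -/
def Mn (i : ℤ) : ℕ := ⌈P.B⌉₊ * 2 ^ i.toNat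

lemma two_zpow_le_toNat (i : ℤ) (hi : -1 ≤ i) : (2 : ℝ) ^ i ≤ 2 ^ i.toNat := by
  have h1 : (2 : ℝ) ^ i ≤ (2 : ℝ) ^ (i.toNat : ℤ) :=
    zpow_le_zpow_right₀ one_le_two (Int.self_le_toNat i)
  rw [zpow_natCast] at h1
  exact h1

lemma B_two_zpow_le_Mn {i : ℤ} (hi : -1 ≤ i) : P.B * 2 ^ i ≤ (Mn P i : ℝ) := by
  rw [Mn]
  push_cast
  have h1 : P.B ≤ (⌈P.B⌉₊ : ℝ) := Nat.le_ceil _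
  have h2 : (2 : ℝ) ^ i ≤ 2 ^ i.toNat := two_zpow_le_toNat i hi
  have h3 : (0:ℝ) < 2 ^ i := zpow_pos two_pos i
  nlinarith [P.hB0]

lemma block_support_sqF {i : ℤ} (hi : -1 ≤ i) (a : Dist) :
    ∀ k ∉ sqF (Mn P i), L.block i a k = 0 := by
  intro k hk
  by_contra h
  exact hk (mem_sqF_of_freqNorm (le_trans (block_ne_upper P hi h) (B_two_zpow_le_Mn P hi)))

end PackSec

section L2Sec

lemma l2norm_nonneg (a : Dist) : 0 ≤ l2norm a := Real.sqrt_nonneg _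

lemma sum_sq_le_l2norm_sq {a : Dist} (ha : Summable fun k => ‖a k‖ ^ 2) (s : Finset Freq) :
    ∑ k ∈ s, ‖a k‖ ^ 2 ≤ l2norm a ^ 2 := by
  rw [l2norm, Real.sq_sqrt (tsum_nonneg fun _ => sq_nonneg _)]
  exact Summable.sum_le_tsum s (fun _ _ => sq_nonneg _) ha

lemma sum_sq_comp_le {a : Dist} (ha : Summable fun k => ‖a k‖ ^ 2) (s : Finset Freq)
    (φ : Freq → Freq) (hφ : Function.Injective φ) :
    ∑ p ∈ s, ‖a (φ p)‖ ^ 2 ≤ l2norm a ^ 2 := by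
  rw [← Finset.sum_image (f := fun q => ‖a q‖ ^ 2) (g := φ) (fun x _ y _ h => hφ h)]
  exact sum_sq_le_l2norm_sq ha _

lemma cs_conv {a b : Dist} (ha : Summable fun k => ‖a k‖ ^ 2)
    (hb : Summable fun k => ‖b k‖ ^ 2) (s : Finset Freq) (k : Freq) :
    ∑ p ∈ s, ‖a p‖ * ‖b (k - p)‖ ≤ l2norm a * l2norm b := by
  have hsq : (∑ p ∈ s, ‖a p‖ * ‖b (k - p)‖) ^ 2
      ≤ (∑ p ∈ s, ‖a p‖ ^ 2) * ∑ p ∈ s, ‖b (k - p)‖ ^ 2 :=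
    Finset.sum_mul_sq_le_sq_mul_sq s _ _
  have h1 : ∑ p ∈ s, ‖a p‖ ^ 2 ≤ l2norm a ^ 2 := sum_sq_le_l2norm_sq ha s
  have h2 : ∑ p ∈ s, ‖b (k - p)‖ ^ 2 ≤ l2norm b ^ 2 :=
    sum_sq_comp_le hb s (fun p => k - p) (fun x y h => sub_right_injective h)
  have hs1 : (0:ℝ) ≤ ∑ p ∈ s, ‖a p‖ * ‖b (k - p)‖ :=
    Finset.sum_nonneg fun _ _ => mul_nonneg (norm_nonneg _) (norm_nonneg _)
  have hs2 : (0:ℝ) ≤ l2norm a * l2norm b := mul_nonneg (l2norm_nonneg a) (l2norm_nonneg b)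
  nlinarith [sum_sq_le_l2norm_sq ha s, Finset.sum_nonneg (fun p (_ : p ∈ s) => sq_nonneg (‖b (k-p)‖)),
    Finset.sum_nonneg (fun p (_ : p ∈ s) => sq_nonneg (‖a p‖)), sq_nonneg (l2norm a), sq_nonneg (l2norm b)]

lemma sum_norm_le_card_l2 {a : Dist} (ha : Summable fun k => ‖a k‖ ^ 2) (s : Finset Freq) :
    ∑ k ∈ s, ‖a k‖ ≤ Real.sqrt s.card * l2norm a := by
  have hsq : (∑ k ∈ s, (1:ℝ) * ‖a k‖) ^ 2 ≤ (∑ k ∈ s, (1:ℝ) ^ 2) * ∑ k ∈ s, ‖a k‖ ^ 2 :=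
    Finset.sum_mul_sq_le_sq_mul_sq s _ _
  simp only [one_mul, one_pow, Finset.sum_const, nsmul_eq_mul, mul_one] at hsq
  have h1 : (∑ k ∈ s, ‖a k‖) ^ 2 ≤ (s.card : ℝ) * l2norm a ^ 2 := by
    refine le_trans hsq ?_
    exact mul_le_mul_of_nonneg_left (sum_sq_le_l2norm_sq ha s) (Nat.cast_nonneg _)
  have hs1 : (0:ℝ) ≤ ∑ k ∈ s, ‖a k‖ := Finset.sum_nonneg fun _ _ => norm_nonneg _
  have hs2 : (0:ℝ) ≤ Real.sqrt s.card * l2norm a :=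
    mul_nonneg (Real.sqrt_nonneg _) (l2norm_nonneg a)
  nlinarith [Real.sq_sqrt (Nat.cast_nonneg (α := ℝ) s.card), Real.sqrt_nonneg (s.card : ℝ),
    l2norm_nonneg a]

lemma Kop_norm_le (a : Dist) (k : Freq) : ‖Kop a k‖ ≤ ‖a k‖ := by
  rw [Kop]
  split_ifs with h
  · simp
  · have h1 : (1:ℝ) ≤ freqNorm k ^ 2 := by
      nlinarith [one_le_freqNorm h, freqNorm_nonneg k]
    rw [norm_div, Complex.norm_real, Real.norm_eq_abs, abs_of_nonneg (by positivity)]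
    exact div_le_self (norm_nonneg _) h1

lemma Kop_norm_le_inv_sq (a : Dist) {k : Freq} {c : ℝ} (hc : 0 < c)
    (hk : c ≤ freqNorm k) : ‖Kop a k‖ ≤ c⁻¹ ^ 2 * ‖a k‖ := by
  have hk0 : k ≠ 0 := by
    intro h
    rw [h, freqNorm_zero] at hk
    exact absurd hk (not_le.mpr hc)
  rw [Kop, if_neg hk0, norm_div, Complex.norm_real, Real.norm_eq_abs,
    abs_of_nonneg (by positivity)]
  rw [div_eq_inv_mul]
  refine mul_le_mul_of_nonneg_right ?_ (norm_nonneg _)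
  have h1 : c ^ 2 ≤ freqNorm k ^ 2 := by nlinarith [freqNorm_nonneg k]
  calc (freqNorm k ^ 2)⁻¹ ≤ (c ^ 2)⁻¹ := inv_anti₀ (by positivity) h1
  _ = c⁻¹ ^ 2 := by rw [inv_pow]

end L2Sec

section WtSec

lemma inv_two_zpow_sq (i : ℤ) : ((2:ℝ) ^ i)⁻¹ ^ 2 = (4:ℝ) ^ (-i) := by
  have h1 : ((2:ℝ) ^ i)⁻¹ = (2:ℝ) ^ (-i) := (zpow_neg 2 i).symm
  have h4 : (4:ℝ) = (2:ℝ) ^ (2:ℤ) := by norm_num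
  rw [h1, h4, ← zpow_natCast ((2:ℝ) ^ (-i)) 2, ← zpow_mul, ← zpow_mul]
  congr 1
  push_cast
  ring

variable {L : LP} (P : Pack L)

/-- Dyadic weight controlling the coefficients of `Δ_i (K g)`. -/
def Wt (i : ℤ) : ℝ :=
  if i < 0 then (if i = -1 then 1 else 0) else min 1 (P.r⁻¹ ^ 2 * (4:ℝ) ^ (-i))

lemma Wt_nonneg (i : ℤ) : 0 ≤ Wt P i := by
  rw [Wt]
  split_ifs
  · norm_num
  · norm_num
  · exact le_min zero_le_one (by positivity)

lemma Wt_le_one (i : ℤ) : Wt P i ≤ 1 := by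
  rw [Wt]
  split_ifs
  · norm_num
  · norm_num
  · exact min_le_left _ _

lemma Wt_le_geom {i : ℤ} (hi : 0 ≤ i) : Wt P i ≤ P.r⁻¹ ^ 2 * (4:ℝ) ^ (-i) := by
  rw [Wt, if_neg (by omega)]
  exact min_le_right _ _

lemma geom4_zpow_split (m : ℤ) (n : ℕ) : (4:ℝ) ^ (-(m + (n:ℤ))) = (4:ℝ) ^ (-m) * (4⁻¹:ℝ) ^ n := by
  rw [neg_add, zpow_add₀ (by norm_num : (4:ℝ) ≠ 0), zpow_neg (4:ℝ) (n:ℤ), zpow_natCast, ← inv_pow]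

lemma Wt_tail (m : ℤ) (hm : 0 ≤ m) :
    Summable (fun i : ℤ => if m ≤ i then Wt P i else 0) ∧
      (∑' i : ℤ, if m ≤ i then Wt P i else 0) ≤ P.r⁻¹ ^ 2 * (4/3) * (4:ℝ) ^ (-m) := by
  set F : ℤ → ℝ := fun i => if m ≤ i then Wt P i else 0 with hF
  have hFnonneg : ∀ i, 0 ≤ F i := by
    intro i
    by_cases h : m ≤ i
    · simp only [hF, if_pos h]
      exact Wt_nonneg P i
    · simp only [hF, if_neg h, le_refl]
  have hinj : Function.Injective (fun n : ℕ => m + (n : ℤ)) := by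
    intro a b h
    simpa using h
  have hsupp : ∀ i ∉ Set.range (fun n : ℕ => m + (n : ℤ)), F i = 0 := by
    intro i hi
    by_contra h
    apply hi
    have hmi : m ≤ i := by
      by_contra hmi
      exact h (by simp only [hF, if_neg hmi])
    exact ⟨(i - m).toNat, by show m + ((i - m).toNat : ℤ) = i; omega⟩
  have hGle : ∀ n : ℕ, F (m + (n:ℤ)) ≤ P.r⁻¹ ^ 2 * (4:ℝ) ^ (-m) * (4⁻¹:ℝ) ^ n := by
    intro n
    have h0 : (0:ℤ) ≤ m + n := by omega
    have h1 : F (m + (n:ℤ)) = Wt P (m + n) := by simp only [hF, if_pos (by omega : m ≤ m + (n:ℤ))]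
    rw [h1]
    calc Wt P (m + n) ≤ P.r⁻¹ ^ 2 * (4:ℝ) ^ (-(m + (n:ℤ))) := Wt_le_geom P h0
    _ = P.r⁻¹ ^ 2 * (4:ℝ) ^ (-m) * (4⁻¹:ℝ) ^ n := by rw [geom4_zpow_split]; ring
  have hgeo : Summable (fun n : ℕ => P.r⁻¹ ^ 2 * (4:ℝ) ^ (-m) * (4⁻¹:ℝ) ^ n) :=
    (summable_geometric_of_lt_one (by norm_num) (by norm_num)).mul_left _
  have hGsum : Summable (F ∘ fun n : ℕ => m + (n:ℤ)) :=
    Summable.of_nonneg_of_le (fun n => hFnonneg _) hGle hgeo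
  have hFsum : Summable F := (hinj.summable_iff hsupp).mp hGsum
  refine ⟨hFsum, ?_⟩
  have hsupp2 : Function.support F ⊆ Set.range (fun n : ℕ => m + (n:ℤ)) := by
    intro i hi
    by_contra hr
    exact hi (hsupp i hr)
  have h1 : ∑' i, F i = ∑' n : ℕ, F (m + (n:ℤ)) := (hinj.tsum_eq hsupp2).symm
  rw [h1]
  calc ∑' n : ℕ, F (m + (n:ℤ))
      ≤ ∑' n : ℕ, P.r⁻¹ ^ 2 * (4:ℝ) ^ (-m) * (4⁻¹:ℝ) ^ n := Summable.tsum_le_tsum hGle hGsum hgeo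
  _ = P.r⁻¹ ^ 2 * (4:ℝ) ^ (-m) * (1 - 4⁻¹)⁻¹ := by
      rw [tsum_mul_left, tsum_geometric_of_lt_one (by norm_num) (by norm_num)]
  _ = P.r⁻¹ ^ 2 * (4/3) * (4:ℝ) ^ (-m) := by
      norm_num
      ring

lemma Wt_summable : Summable (Wt P) ∧ (∑' i : ℤ, Wt P i) ≤ 1 + P.r⁻¹ ^ 2 * (4/3) := by
  have h0 := Wt_tail P 0 le_rfl
  have hsingle : Summable (fun i : ℤ => if i = -1 then (1:ℝ) else 0) :=
    summable_of_ne_finset_zero (s := {-1}) (fun i hi => if_neg (by simpa using hi))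
  have hsplit : ∀ i : ℤ, Wt P i = (if i = -1 then (1:ℝ) else 0) + (if 0 ≤ i then Wt P i else 0) := by
    intro i
    by_cases h0' : 0 ≤ i
    · rw [if_pos h0', if_neg (show ¬ i = -1 by omega), zero_add]
    · rw [if_neg h0', add_zero, Wt, if_pos (by omega)]
  have hsum : Summable (Wt P) :=
    (hsingle.add h0.1).congr (fun i => (hsplit i).symm)
  refine ⟨hsum, ?_⟩
  have h1 : ∑' i : ℤ, Wt P i
      = (∑' i : ℤ, if i = -1 then (1:ℝ) else 0) + ∑' i : ℤ, (if 0 ≤ i then Wt P i else 0) := by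
    calc ∑' i : ℤ, Wt P i
        = ∑' i : ℤ, ((if i = -1 then (1:ℝ) else 0) + (if 0 ≤ i then Wt P i else 0)) :=
          tsum_congr hsplit
    _ = _ := Summable.tsum_add hsingle h0.1
  rw [h1]
  have h2 : (∑' i : ℤ, if i = -1 then (1:ℝ) else 0) = 1 := by
    rw [tsum_eq_sum (s := {-1}) (fun i hi => if_neg (by simpa using hi))]
    simp
  rw [h2]
  have h3 := h0.2
  simp only [neg_zero, zpow_zero, mul_one] at h3
  linarith

end WtSec

section CoreSec

variable {L : LP} (P : Pack L)

/-- The summand of the resonant product. -/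
def resTermF (L : LP) (f w : Dist) (k : Freq) (ij : ℤ × ℤ) : ℂ :=
  if -1 ≤ ij.1 ∧ -1 ≤ ij.2 ∧ |ij.1 - ij.2| ≤ 1 then
    mulD (L.block ij.1 f) (L.block ij.2 w) k
  else 0

lemma reson_eq_tsum (f w : Dist) (k : Freq) :
    L.reson f w k = ∑' ij : ℤ × ℤ, resTermF L f w k ij := rfl

lemma mulD_block_eq_sum {i : ℤ} (hi : -1 ≤ i) (a w : Dist) (k : Freq) :
    mulD (L.block i a) w k = ∑ p ∈ sqF (Mn P i), L.block i a p * w (k - p) :=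
  tsum_eq_sum (fun p hp => by rw [block_support_sqF P hi a p hp, zero_mul])

lemma norm_block_Kop_le {i' : ℤ} (hi' : -1 ≤ i') (g : Dist) (q : Freq) :
    ‖L.block i' (Kop g) q‖ ≤ P.Cb * Wt P i' * ‖g q‖ := by
  by_cases h0 : L.block i' (Kop g) q = 0
  · rw [h0, norm_zero]
    have := Wt_nonneg P i'
    have := P.hCb0
    positivity
  · by_cases hi0 : 0 ≤ i'
    · have hlow : P.r * 2 ^ i' ≤ freqNorm q := block_ne_lower P hi0 h0
      have hc : (0:ℝ) < P.r * 2 ^ i' := mul_pos P.hr (zpow_pos two_pos i')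
      have h1 : ‖Kop g q‖ ≤ 1 * ‖g q‖ := by rw [one_mul]; exact Kop_norm_le g q
      have h2 : ‖Kop g q‖ ≤ (P.r⁻¹ ^ 2 * (4:ℝ) ^ (-i')) * ‖g q‖ := by
        have := Kop_norm_le_inv_sq g hc hlow
        have heq : (P.r * 2 ^ i')⁻¹ ^ 2 = P.r⁻¹ ^ 2 * (4:ℝ) ^ (-i') := by
          rw [mul_inv, mul_pow, inv_two_zpow_sq]
        rw [heq] at this
        exact this
      have h3 : ‖Kop g q‖ ≤ Wt P i' * ‖g q‖ := by
        rw [Wt, if_neg (by omega)]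
        rw [min_mul_of_nonneg _ _ (norm_nonneg (g q))]
        exact le_min h1 h2
      calc ‖L.block i' (Kop g) q‖ ≤ P.Cb * ‖Kop g q‖ := block_coeff_norm_le P i' _ q
      _ ≤ P.Cb * (Wt P i' * ‖g q‖) := mul_le_mul_of_nonneg_left h3 (le_of_lt P.hCb0)
      _ = P.Cb * Wt P i' * ‖g q‖ := by ring
    · have hi1 : i' = -1 := by omega
      have hW : Wt P i' = 1 := by rw [Wt, if_pos (by omega), if_pos hi1]
      rw [hW, mul_one]
      calc ‖L.block i' (Kop g) q‖ ≤ P.Cb * ‖Kop g q‖ := block_coeff_norm_le P i' _ q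
      _ ≤ P.Cb * ‖g q‖ := mul_le_mul_of_nonneg_left (Kop_norm_le g q) (le_of_lt P.hCb0)

lemma norm_resTermF_le {f g : Dist} (hf : Summable fun k => ‖f k‖ ^ 2)
    (hg : Summable fun k => ‖g k‖ ^ 2) (k : Freq) (ij : ℤ × ℤ) :
    ‖resTermF L f (Kop g) k ij‖ ≤
      (if -1 ≤ ij.1 ∧ -1 ≤ ij.2 ∧ |ij.1 - ij.2| ≤ 1 then
        (P.Cb ^ 2 * (l2norm f * l2norm g)) * Wt P ij.2 else 0) := by
  rw [resTermF]
  split_ifs with hcond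
  · obtain ⟨hi, hi', _⟩ := hcond
    rw [mulD_block_eq_sum P hi]
    refine le_trans (norm_sum_le _ _) ?_
    have hterm : ∀ p ∈ sqF (Mn P ij.1),
        ‖L.block ij.1 f p * L.block ij.2 (Kop g) (k - p)‖ ≤
          (P.Cb ^ 2 * Wt P ij.2) * (‖f p‖ * ‖g (k - p)‖) := by
      intro p _
      rw [norm_mul]
      have h1 := block_coeff_norm_le P ij.1 f p
      have h2 := norm_block_Kop_le P hi' g (k - p)
      have hb1 : (0:ℝ) ≤ ‖L.block ij.1 f p‖ := norm_nonneg _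
      have hb2 : (0:ℝ) ≤ ‖L.block ij.2 (Kop g) (k-p)‖ := norm_nonneg _
      have hcb : (0:ℝ) ≤ P.Cb := le_of_lt P.hCb0
      have hw : (0:ℝ) ≤ Wt P ij.2 := Wt_nonneg P ij.2
      have := mul_le_mul h1 h2 hb2 (by positivity : (0:ℝ) ≤ P.Cb * ‖f p‖)
      calc ‖L.block ij.1 f p‖ * ‖L.block ij.2 (Kop g) (k - p)‖
          ≤ P.Cb * ‖f p‖ * (P.Cb * Wt P ij.2 * ‖g (k - p)‖) := this
      _ = (P.Cb ^ 2 * Wt P ij.2) * (‖f p‖ * ‖g (k - p)‖) := by ring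
    refine le_trans (Finset.sum_le_sum hterm) ?_
    rw [← Finset.mul_sum]
    have hcs := cs_conv hf hg (sqF (Mn P ij.1)) k
    have hnn : (0:ℝ) ≤ P.Cb ^ 2 * Wt P ij.2 := by
      have := Wt_nonneg P ij.2
      positivity
    calc (P.Cb ^ 2 * Wt P ij.2) * ∑ p ∈ sqF (Mn P ij.1), ‖f p‖ * ‖g (k - p)‖
        ≤ (P.Cb ^ 2 * Wt P ij.2) * (l2norm f * l2norm g) :=
          mul_le_mul_of_nonneg_left hcs hnn
    _ = (P.Cb ^ 2 * (l2norm f * l2norm g)) * Wt P ij.2 := by ring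
  · rw [norm_zero]

lemma validPairs_sum_le (c : ℝ) (hc : 0 ≤ c) (V : ℤ → ℝ) (hV0 : ∀ i, 0 ≤ V i)
    (hVs : Summable V) (u : Finset (ℤ × ℤ)) :
    ∑ ij ∈ u, (if -1 ≤ ij.1 ∧ -1 ≤ ij.2 ∧ |ij.1 - ij.2| ≤ 1 then c * V ij.2 else 0)
      ≤ c * (3 * ∑' i : ℤ, V i) := by
  rw [← Finset.sum_filter]
  set u' := u.filter (fun ij : ℤ × ℤ => -1 ≤ ij.1 ∧ -1 ≤ ij.2 ∧ |ij.1 - ij.2| ≤ 1) with hu'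
  have himg : ∑ ij ∈ u', c * V ij.2
      = ∑ y ∈ u'.image (fun ij : ℤ × ℤ => (ij.1 - ij.2, ij.2)), c * V y.2 := by
    rw [Finset.sum_image]
    intro x _ y _ h
    rw [Prod.mk.injEq] at h
    obtain ⟨h1, h2⟩ := h
    exact Prod.ext (by omega) h2
  rw [himg]
  set T := u'.image Prod.snd with hT
  have hsub : u'.image (fun ij : ℤ × ℤ => (ij.1 - ij.2, ij.2)) ⊆ ({-1, 0, 1} : Finset ℤ) ×ˢ T := by
    intro y hy
    obtain ⟨x, hx, rfl⟩ := Finset.mem_image.mp hy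
    have hx' := Finset.mem_filter.mp hx
    rw [Finset.mem_product]
    constructor
    · have habs := abs_le.mp hx'.2.2.2
      simp only [Finset.mem_insert, Finset.mem_singleton]
      omega
    · exact Finset.mem_image.mpr ⟨x, hx, rfl⟩
  have h2 : ∑ y ∈ u'.image (fun ij : ℤ × ℤ => (ij.1 - ij.2, ij.2)), c * V y.2
      ≤ ∑ y ∈ ({-1, 0, 1} : Finset ℤ) ×ˢ T, c * V y.2 :=
    Finset.sum_le_sum_of_subset_of_nonneg hsub
      (fun y _ _ => mul_nonneg hc (hV0 y.2))
  refine le_trans h2 ?_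
  rw [Finset.sum_product]
  have h3 : ∀ d ∈ ({-1, 0, 1} : Finset ℤ), ∑ i ∈ T, c * V (d, i).2 ≤ c * ∑' i : ℤ, V i := by
    intro d _
    simp only
    rw [← Finset.mul_sum]
    exact mul_le_mul_of_nonneg_left (Summable.sum_le_tsum T (fun i _ => hV0 i) hVs) hc
  refine le_trans (Finset.sum_le_sum h3) ?_
  rw [Finset.sum_const]
  have : ({-1, 0, 1} : Finset ℤ).card = 3 := by decide
  rw [this]
  rw [nsmul_eq_mul]
  push_cast
  ring_nf
  exact le_refl _

lemma resTermF_norm_summable (P : Pack L) {f g : Dist} (hf : Summable fun k => ‖f k‖ ^ 2)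
    (hg : Summable fun k => ‖g k‖ ^ 2) (k : Freq) :
    Summable (fun ij : ℤ × ℤ => ‖resTermF L f (Kop g) k ij‖) := by
  set c := P.Cb ^ 2 * (l2norm f * l2norm g) with hc
  have hc0 : 0 ≤ c := by
    have := l2norm_nonneg f
    have := l2norm_nonneg g
    positivity
  have hWs := (Wt_summable P).1
  have hmaj : Summable (fun ij : ℤ × ℤ =>
      if -1 ≤ ij.1 ∧ -1 ≤ ij.2 ∧ |ij.1 - ij.2| ≤ 1 then c * Wt P ij.2 else 0) := by
    apply summable_of_sum_le (c := c * (3 * ∑' i : ℤ, Wt P i))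
    · intro ij
      dsimp only
      split_ifs
      · exact mul_nonneg hc0 (Wt_nonneg P _)
      · exact le_refl 0
    · intro u
      exact validPairs_sum_le c hc0 (Wt P) (Wt_nonneg P) hWs u
  exact Summable.of_nonneg_of_le (fun ij => norm_nonneg _)
    (fun ij => norm_resTermF_le P hf hg k ij) hmaj

lemma resTermF_summable (P : Pack L) {f g : Dist} (hf : Summable fun k => ‖f k‖ ^ 2)
    (hg : Summable fun k => ‖g k‖ ^ 2) (k : Freq) :
    Summable (fun ij : ℤ × ℤ => resTermF L f (Kop g) k ij) :=
  (resTermF_norm_summable P hf hg k).of_norm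

lemma reson_coeff_bound1 {f g : Dist} (hf : Summable fun k => ‖f k‖ ^ 2)
    (hg : Summable fun k => ‖g k‖ ^ 2) (k : Freq) :
    ‖L.reson f (Kop g) k‖ ≤
      (P.Cb ^ 2 * (l2norm f * l2norm g)) * (3 * (1 + P.r⁻¹ ^ 2 * (4/3))) := by
  set c := P.Cb ^ 2 * (l2norm f * l2norm g) with hc
  have hc0 : 0 ≤ c := by
    have := l2norm_nonneg f
    have := l2norm_nonneg g
    positivity
  rw [reson_eq_tsum]
  refine le_trans (norm_tsum_le_tsum_norm (resTermF_norm_summable P hf hg k)) ?_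
  have h1 : ∑' ij : ℤ × ℤ, ‖resTermF L f (Kop g) k ij‖ ≤ c * (3 * ∑' i : ℤ, Wt P i) := by
    apply Summable.tsum_le_of_sum_le (resTermF_norm_summable P hf hg k)
    intro u
    refine le_trans (Finset.sum_le_sum fun ij _ => norm_resTermF_le P hf hg k ij) ?_
    exact validPairs_sum_le c hc0 (Wt P) (Wt_nonneg P) (Wt_summable P).1 u
  refine le_trans h1 ?_
  have h2 : ∑' i : ℤ, Wt P i ≤ 1 + P.r⁻¹ ^ 2 * (4/3) := (Wt_summable P).2
  nlinarith [h2, hc0]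

end CoreSec

section CoreSec2

variable {L : LP} (P : Pack L)

lemma resTermF_vanish (f g : Dist) (k : Freq) {ij : ℤ × ℤ}
    (hk : 3 * P.B * 2 ^ ij.2 < freqNorm k) :
    resTermF L f (Kop g) k ij = 0 := by
  rw [resTermF]
  split_ifs with hvalid
  · obtain ⟨hi, hi', hd⟩ := hvalid
    rw [mulD]
    have hzero : ∀ p : Freq, L.block ij.1 f p * L.block ij.2 (Kop g) (k - p) = 0 := by
      intro p
      by_contra h
      have h1 : L.block ij.1 f p ≠ 0 := left_ne_zero_of_mul h
      have h2 : L.block ij.2 (Kop g) (k - p) ≠ 0 := right_ne_zero_of_mul h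
      have hup1 : freqNorm p ≤ P.B * 2 ^ ij.1 := block_ne_upper P hi h1
      have hup2 : freqNorm (k - p) ≤ P.B * 2 ^ ij.2 := block_ne_upper P hi' h2
      have htri : freqNorm k ≤ freqNorm p + freqNorm (k - p) := by
        have hk' : p + (k - p) = k := by rw [add_comm, sub_add_cancel]
        calc freqNorm k = freqNorm (p + (k - p)) := by rw [hk']
        _ ≤ freqNorm p + freqNorm (k - p) := freqNorm_triangle _ _
      have h2i : (2:ℝ) ^ ij.1 ≤ 2 * 2 ^ ij.2 := by
        have hle : ij.1 ≤ ij.2 + 1 := by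
          have := abs_le.mp hd
          omega
        calc (2:ℝ) ^ ij.1 ≤ (2:ℝ) ^ (ij.2 + 1) := zpow_le_zpow_right₀ one_le_two hle
        _ = 2 * 2 ^ ij.2 := by rw [zpow_add₀ (two_ne_zero (α := ℝ)), zpow_one]; ring
      nlinarith [P.hB0, zpow_pos (two_pos (α := ℝ)) ij.2]
    calc (∑' p : Freq, L.block ij.1 f p * L.block ij.2 (Kop g) (k - p))
        = ∑' _ : Freq, (0:ℂ) := tsum_congr hzero
    _ = 0 := tsum_zero
  · rfl

lemma reson_coeff_bound2 {f g : Dist} (hf : Summable fun k => ‖f k‖ ^ 2)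
    (hg : Summable fun k => ‖g k‖ ^ 2) (m : ℤ) (hm : 0 ≤ m) (k : Freq)
    (hk : 3 * P.B * 2 ^ (m - 1) < freqNorm k) :
    ‖L.reson f (Kop g) k‖ ≤
      (P.Cb ^ 2 * (l2norm f * l2norm g)) * (3 * (P.r⁻¹ ^ 2 * (4/3) * (4:ℝ) ^ (-m))) := by
  set c := P.Cb ^ 2 * (l2norm f * l2norm g) with hc
  have hc0 : 0 ≤ c := by
    have := l2norm_nonneg f
    have := l2norm_nonneg g
    have := P.hCb0
    positivity
  set V : ℤ → ℝ := fun i => if m ≤ i then Wt P i else 0 with hV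
  have hV0 : ∀ i, 0 ≤ V i := by
    intro i
    rw [hV]
    dsimp only
    split_ifs
    · exact Wt_nonneg P i
    · exact le_refl 0
  have hVs : Summable V := (Wt_tail P m hm).1
  have hmaj : ∀ ij : ℤ × ℤ, ‖resTermF L f (Kop g) k ij‖ ≤
      (if -1 ≤ ij.1 ∧ -1 ≤ ij.2 ∧ |ij.1 - ij.2| ≤ 1 then c * V ij.2 else 0) := by
    intro ij
    by_cases hvalid : -1 ≤ ij.1 ∧ -1 ≤ ij.2 ∧ |ij.1 - ij.2| ≤ 1
    · rw [if_pos hvalid]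
      by_cases hm' : m ≤ ij.2
      · have h1 := norm_resTermF_le P hf hg k ij
        rw [if_pos hvalid] at h1
        rw [hV]
        dsimp only
        rw [if_pos hm']
        exact h1
      · have hvan : resTermF L f (Kop g) k ij = 0 := by
          apply resTermF_vanish P f g k
          have h2 : (2:ℝ) ^ ij.2 ≤ 2 ^ (m - 1) :=
            zpow_le_zpow_right₀ one_le_two (by omega)
          nlinarith [P.hB0, zpow_pos (two_pos (α := ℝ)) ij.2]
        rw [hvan, norm_zero, hV]
        dsimp only
        rw [if_neg hm', mul_zero]
    · rw [if_neg hvalid, resTermF, if_neg hvalid, norm_zero]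
  rw [reson_eq_tsum]
  refine le_trans (norm_tsum_le_tsum_norm (resTermF_norm_summable P hf hg k)) ?_
  have h1 : ∑' ij : ℤ × ℤ, ‖resTermF L f (Kop g) k ij‖ ≤ c * (3 * ∑' i : ℤ, V i) := by
    apply Summable.tsum_le_of_sum_le (resTermF_norm_summable P hf hg k)
    intro u
    refine le_trans (Finset.sum_le_sum fun ij _ => hmaj ij) ?_
    exact validPairs_sum_le c hc0 V hV0 hVs u
  refine le_trans h1 ?_
  have h2 := (Wt_tail P m hm).2
  nlinarith [h2, hc0]

end CoreSec2

section SupBound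

variable {L : LP} (P : Pack L)

def Cone : ℝ := P.Cb ^ 2 * (3 * (1 + P.r⁻¹ ^ 2 * (4/3)))

def Ctwo : ℝ := P.Cb ^ 2 * (3 * (P.r⁻¹ ^ 2 * (4/3)))

def CsupA : ℝ := P.Cb * (2 * (⌈P.B⌉₊:ℝ) * 2 ^ P.D + 1) ^ 2 * Cone P

def CsupB : ℝ := P.Cb * (2 * (⌈P.B⌉₊:ℝ) + 1) ^ 2 * Ctwo P * (4:ℝ) ^ ((P.D:ℤ) - 1)

def Csup : ℝ := max (CsupA P) (CsupB P)

lemma Cone_nonneg : 0 ≤ Cone P := by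
  rw [Cone]; positivity

lemma Ctwo_nonneg : 0 ≤ Ctwo P := by
  rw [Ctwo]; positivity

lemma CsupA_nonneg : 0 ≤ CsupA P := by
  have h1 := Cone_nonneg P
  have h2 := P.hCb0
  rw [CsupA]; positivity

lemma CsupB_nonneg : 0 ≤ CsupB P := by
  have h1 := Ctwo_nonneg P
  have h2 := P.hCb0
  rw [CsupB]; positivity

lemma Csup_nonneg : 0 ≤ Csup P := le_trans (CsupA_nonneg P) (le_max_left _ _)

lemma supNorm_block_reson_le {f g : Dist} (hf : Summable fun k => ‖f k‖ ^ 2)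
    (hg : Summable fun k => ‖g k‖ ^ 2) {j : ℤ} (hj : -1 ≤ j) :
    supNorm (L.block j (L.reson f (Kop g))) ≤ Csup P * (l2norm f * l2norm g) := by
  set b := L.reson f (Kop g) with hb
  have hl2 : (0:ℝ) ≤ l2norm f * l2norm g := mul_nonneg (l2norm_nonneg f) (l2norm_nonneg g)
  have hsupp := block_support_sqF P hj b
  have hsum := supNorm_le_sum hsupp
  have hcardcast : ((sqF (Mn P j)).card : ℝ) = (2 * (Mn P j : ℝ) + 1) ^ 2 := by
    rw [card_sqF]
    push_cast
    ring
  by_cases hcase : j ≤ (P.D : ℤ)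
  · -- low frequencies: uniform coefficient bound
    have hU : ∀ k ∈ sqF (Mn P j), ‖L.block j b k‖ ≤ P.Cb * (Cone P * (l2norm f * l2norm g)) := by
      intro k _
      calc ‖L.block j b k‖ ≤ P.Cb * ‖b k‖ := block_coeff_norm_le P j b k
      _ ≤ P.Cb * (Cone P * (l2norm f * l2norm g)) := by
          refine mul_le_mul_of_nonneg_left ?_ (le_of_lt P.hCb0)
          refine le_trans (reson_coeff_bound1 P hf hg k) (le_of_eq ?_)
          rw [Cone]
          ring
    have h1 : supNorm (L.block j b) ≤
        ((sqF (Mn P j)).card : ℝ) * (P.Cb * (Cone P * (l2norm f * l2norm g))) := by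
      refine le_trans hsum ?_
      have := Finset.sum_le_card_nsmul (sqF (Mn P j)) _ _ hU
      rwa [nsmul_eq_mul] at this
    refine le_trans h1 ?_
    have hMle : (Mn P j : ℝ) ≤ (⌈P.B⌉₊:ℝ) * 2 ^ P.D := by
      rw [Mn]
      push_cast
      have h2 : (2:ℝ) ^ j.toNat ≤ 2 ^ P.D := by
        apply pow_le_pow_right₀ one_le_two
        omega
      nlinarith [Nat.cast_nonneg (α := ℝ) ⌈P.B⌉₊]
    have hcard : ((sqF (Mn P j)).card : ℝ) ≤ (2 * (⌈P.B⌉₊:ℝ) * 2 ^ P.D + 1) ^ 2 := by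
      rw [hcardcast]
      have h0 : (0:ℝ) ≤ 2 * (Mn P j : ℝ) + 1 := by positivity
      nlinarith [hMle]
    calc ((sqF (Mn P j)).card : ℝ) * (P.Cb * (Cone P * (l2norm f * l2norm g)))
        ≤ (2 * (⌈P.B⌉₊:ℝ) * 2 ^ P.D + 1) ^ 2 * (P.Cb * (Cone P * (l2norm f * l2norm g))) := by
          refine mul_le_mul_of_nonneg_right hcard ?_
          have := Cone_nonneg P
          have := P.hCb0
          positivity
    _ = CsupA P * (l2norm f * l2norm g) := by rw [CsupA]; ring
    _ ≤ Csup P * (l2norm f * l2norm g) :=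
        mul_le_mul_of_nonneg_right (le_max_left _ _) hl2
  · -- high frequencies: use the tail bound
    have hj0 : 0 ≤ j := by omega
    set m : ℤ := j - (P.D : ℤ) + 1 with hm
    have hm0 : 0 ≤ m := by omega
    have hscale : 3 * P.B * 2 ^ (m - 1) < P.r * 2 ^ j := by
      have e1 : (2:ℝ) ^ (m - 1) * 2 ^ (P.D:ℤ) = 2 ^ j := by
        rw [← zpow_add₀ (two_ne_zero (α := ℝ))]
        congr 1
        omega
      have hd6 : 6 * P.B ≤ P.r * 2 ^ ((P.D:ℕ):ℤ) := by
        rw [zpow_natCast]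
        exact P.hD
      have hp1 : (0:ℝ) < 2 ^ (m-1) := zpow_pos two_pos _
      have hp2 : (0:ℝ) < 2 ^ ((P.D:ℕ):ℤ) := zpow_pos two_pos _
      nlinarith [P.hB0, P.hr, mul_pos hp1 P.hB0]
    have hU : ∀ k ∈ sqF (Mn P j), ‖L.block j b k‖ ≤
        P.Cb * (Ctwo P * (4:ℝ) ^ (-m) * (l2norm f * l2norm g)) := by
      intro k _
      by_cases h0 : L.block j b k = 0
      · rw [h0, norm_zero]
        have := Ctwo_nonneg P
        have := P.hCb0
        positivity
      · have hlow : P.r * 2 ^ j ≤ freqNorm k := block_ne_lower P hj0 h0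
        have hkk : 3 * P.B * 2 ^ (m - 1) < freqNorm k := lt_of_lt_of_le hscale hlow
        calc ‖L.block j b k‖ ≤ P.Cb * ‖b k‖ := block_coeff_norm_le P j b k
        _ ≤ P.Cb * (Ctwo P * (4:ℝ) ^ (-m) * (l2norm f * l2norm g)) := by
            refine mul_le_mul_of_nonneg_left ?_ (le_of_lt P.hCb0)
            refine le_trans (reson_coeff_bound2 P hf hg m hm0 k hkk) (le_of_eq ?_)
            rw [Ctwo]
            ring
    have h1 : supNorm (L.block j b) ≤
        ((sqF (Mn P j)).card : ℝ) * (P.Cb * (Ctwo P * (4:ℝ) ^ (-m) * (l2norm f * l2norm g))) := by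
      refine le_trans hsum ?_
      have := Finset.sum_le_card_nsmul (sqF (Mn P j)) _ _ hU
      rwa [nsmul_eq_mul] at this
    refine le_trans h1 ?_
    have hpow4 : ((2:ℝ) ^ j.toNat) ^ 2 = (4:ℝ) ^ j := by
      rw [← pow_mul, ← zpow_natCast (2:ℝ) (j.toNat * 2)]
      have h4 : (4:ℝ) = (2:ℝ) ^ (2:ℤ) := by norm_num
      rw [h4, ← zpow_mul]
      congr 1
      omega
    have hcard : ((sqF (Mn P j)).card : ℝ) ≤ (2 * (⌈P.B⌉₊:ℝ) + 1) ^ 2 * (4:ℝ) ^ j := by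
      rw [hcardcast, ← hpow4]
      have hMle : (Mn P j : ℝ) = (⌈P.B⌉₊:ℝ) * 2 ^ j.toNat := by
        rw [Mn]
        push_cast
        ring
      rw [hMle]
      have h2 : (1:ℝ) ≤ 2 ^ j.toNat := one_le_pow₀ one_le_two
      nlinarith [Nat.cast_nonneg (α := ℝ) ⌈P.B⌉₊, h2]
    have h4combine : (4:ℝ) ^ j * (4:ℝ) ^ (-m) = (4:ℝ) ^ ((P.D:ℤ) - 1) := by
      rw [← zpow_add₀ (by norm_num : (4:ℝ) ≠ 0)]
      congr 1
      omega
    have hct := Ctwo_nonneg P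
    have hcb := P.hCb0
    have hpj : (0:ℝ) < (4:ℝ) ^ j := zpow_pos (by norm_num) _
    have hpm : (0:ℝ) < (4:ℝ) ^ (-m) := zpow_pos (by norm_num) _
    calc ((sqF (Mn P j)).card : ℝ) * (P.Cb * (Ctwo P * (4:ℝ) ^ (-m) * (l2norm f * l2norm g)))
        ≤ (2 * (⌈P.B⌉₊:ℝ) + 1) ^ 2 * (4:ℝ) ^ j *
            (P.Cb * (Ctwo P * (4:ℝ) ^ (-m) * (l2norm f * l2norm g))) := by
          refine mul_le_mul_of_nonneg_right hcard ?_
          positivity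
    _ = P.Cb * (2 * (⌈P.B⌉₊:ℝ) + 1) ^ 2 * Ctwo P * ((4:ℝ) ^ j * (4:ℝ) ^ (-m)) *
          (l2norm f * l2norm g) := by ring
    _ = CsupB P * (l2norm f * l2norm g) := by rw [h4combine, CsupB]
    _ ≤ Csup P * (l2norm f * l2norm g) :=
        mul_le_mul_of_nonneg_right (le_max_right _ _) hl2

end SupBound

section BesovSec

variable {L : LP} (P : Pack L)

/-- The `j`-th Besov term. -/
def bT (L : LP) (β : ℝ) (a : Dist) (j : ℕ) : ℝ :=
  (2 : ℝ) ^ (β * ((j : ℝ) - 1)) * supNorm (L.block ((j : ℤ) - 1) a)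

lemma besov_eq_iSup (β : ℝ) (a : Dist) : L.besov β a = ⨆ j : ℕ, bT L β a j := rfl

lemma memBesov_iff (β : ℝ) (a : Dist) :
    L.memBesov β a ↔ BddAbove (Set.range (bT L β a)) := Iff.rfl

lemma bT_nonneg (β : ℝ) (a : Dist) (j : ℕ) : 0 ≤ bT L β a j :=
  mul_nonneg (Real.rpow_nonneg (by norm_num) _) (supNorm_nonneg _)

lemma besov_nonneg (β : ℝ) (a : Dist) : 0 ≤ L.besov β a :=
  Real.iSup_nonneg (bT_nonneg β a)

lemma block_add (j : ℤ) (x y : Dist) (k : Freq) :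
    L.block j (x + y) k = L.block j x k + L.block j y k := by
  rw [LP.block, LP.block, LP.block]
  split_ifs <;> · simp only [Pi.add_apply]; ring

lemma block_neg (j : ℤ) (x : Dist) (k : Freq) :
    L.block j (-x) k = -(L.block j x k) := by
  rw [LP.block, LP.block]
  split_ifs <;> · simp only [Pi.neg_apply]; ring

lemma supNorm_block_add_le (P : Pack L) {j : ℤ} (hj : -1 ≤ j) (x y : Dist) :
    supNorm (L.block j (x + y)) ≤ supNorm (L.block j x) + supNorm (L.block j y) := by
  have hx := block_support_sqF P hj x
  have hy := block_support_sqF P hj y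
  have hxy := block_support_sqF P hj (x + y)
  refine Real.iSup_le (fun p => ?_)
    (add_nonneg (supNorm_nonneg _) (supNorm_nonneg _))
  have heval : eval (L.block j (x + y)) p
      = eval (L.block j x) p + eval (L.block j y) p := by
    rw [eval_eq_sum hxy, eval_eq_sum hx, eval_eq_sum hy, ← Finset.sum_add_distrib]
    refine Finset.sum_congr rfl fun k _ => ?_
    rw [block_add, add_mul]
  rw [heval]
  exact le_trans (norm_add_le _ _)
    (add_le_add (norm_eval_le_supNorm hx p) (norm_eval_le_supNorm hy p))

lemma supNorm_block_neg (j : ℤ) (x : Dist) :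
    supNorm (L.block j (-x)) = supNorm (L.block j x) := by
  rw [supNorm, supNorm]
  apply congrArg
  funext p
  have h1 : eval (L.block j (-x)) p = -(eval (L.block j x) p) := by
    rw [eval, eval, ← tsum_neg]
    apply tsum_congr
    intro k
    rw [block_neg]
    ring
  rw [h1, norm_neg]

lemma bT_add_le (P : Pack L) (β : ℝ) (x y : Dist) (j : ℕ) :
    bT L β (x + y) j ≤ bT L β x j + bT L β y j := by
  rw [bT, bT, bT, ← mul_add]
  exact mul_le_mul_of_nonneg_left
    (supNorm_block_add_le P (by omega : (-1:ℤ) ≤ (j:ℤ) - 1) x y)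
    (Real.rpow_nonneg (by norm_num) _)

lemma bT_neg (β : ℝ) (x : Dist) (j : ℕ) : bT L β (-x) j = bT L β x j := by
  rw [bT, bT, supNorm_block_neg]

lemma besov_neg (β : ℝ) (x : Dist) : L.besov β (-x) = L.besov β x := by
  rw [besov_eq_iSup, besov_eq_iSup]
  exact congrArg _ (funext (bT_neg β x))

lemma besov_add_le (P : Pack L) (β : ℝ) (x y : Dist)
    (hy : BddAbove (Set.range (bT L β y))) :
    L.besov β (x + y) ≤ L.besov β x + L.besov β y := by
  by_cases hx : BddAbove (Set.range (bT L β x))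
  · have hxy : ∀ j, bT L β (x + y) j ≤ L.besov β x + L.besov β y := by
      intro j
      refine le_trans (bT_add_le P β x y j) ?_
      exact add_le_add (le_ciSup hx j) (le_ciSup hy j)
    exact Real.iSup_le hxy (add_nonneg (besov_nonneg β x) (besov_nonneg β y))
  · have hxy : ¬ BddAbove (Set.range (bT L β (x + y))) := by
      intro hbdd
      apply hx
      obtain ⟨M, hM⟩ := hbdd
      obtain ⟨M', hM'⟩ := hy
      refine ⟨M + M', ?_⟩
      rintro _ ⟨j, rfl⟩
      have hxe : x = (x + y) + (-y) := by
        funext k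
        simp
      have h1 : bT L β x j ≤ bT L β (x + y) j + bT L β (-y) j := by
        have h2 := bT_add_le P β (x + y) (-y) j
        rw [← hxe] at h2
        exact h2
      rw [bT_neg] at h1
      refine le_trans h1 (add_le_add ?_ ?_)
      · exact hM ⟨j, rfl⟩
      · exact hM' ⟨j, rfl⟩
    rw [besov_eq_iSup, Real.iSup_of_not_bddAbove hxy,
      besov_eq_iSup, Real.iSup_of_not_bddAbove hx]
    rw [zero_add]
    exact besov_nonneg β y

lemma rpow_besov_factor_le {β : ℝ} (hβ1 : -2 ≤ β) (hβ2 : β ≤ 0) (j : ℕ) :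
    (2 : ℝ) ^ (β * ((j : ℝ) - 1)) ≤ 4 := by
  have h1 : β * ((j : ℝ) - 1) ≤ 2 := by
    have hj : (-1 : ℝ) ≤ (j : ℝ) - 1 := by
      have : (0:ℝ) ≤ (j:ℝ) := Nat.cast_nonneg j
      linarith
    nlinarith
  calc (2 : ℝ) ^ (β * ((j : ℝ) - 1)) ≤ (2 : ℝ) ^ (2 : ℝ) :=
        Real.rpow_le_rpow_of_exponent_le one_le_two h1
  _ = 4 := by
      rw [show (2:ℝ) = ((2:ℕ):ℝ) from by norm_num, Real.rpow_natCast]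
      norm_num

end BesovSec

section BesovBounds

variable {L : LP} (P : Pack L)

lemma bT_reson_le {f g : Dist} (hf : Summable fun k => ‖f k‖ ^ 2)
    (hg : Summable fun k => ‖g k‖ ^ 2) {β : ℝ} (hβ1 : -2 ≤ β) (hβ2 : β ≤ 0) (j : ℕ) :
    bT L β (L.reson f (Kop g)) j ≤ 4 * Csup P * (l2norm f * l2norm g) := by
  rw [bT]
  have h1 := supNorm_block_reson_le P hf hg (show (-1:ℤ) ≤ (j:ℤ) - 1 by omega)
  have h2 := rpow_besov_factor_le hβ1 hβ2 j
  have h3 : (0:ℝ) ≤ (2:ℝ) ^ (β * ((j:ℝ) - 1)) := Real.rpow_nonneg (by norm_num) _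
  have h4 := supNorm_nonneg (L.block ((j:ℤ) - 1) (L.reson f (Kop g)))
  have h5 := Csup_nonneg P
  have h6 : (0:ℝ) ≤ l2norm f * l2norm g := mul_nonneg (l2norm_nonneg f) (l2norm_nonneg g)
  nlinarith [mul_le_mul h2 h1 h4 (by norm_num : (0:ℝ) ≤ 4)]

lemma bdd_bT_reson (P : Pack L) {f g : Dist} (hf : Summable fun k => ‖f k‖ ^ 2)
    (hg : Summable fun k => ‖g k‖ ^ 2) {β : ℝ} (hβ1 : -2 ≤ β) (hβ2 : β ≤ 0) :
    BddAbove (Set.range (bT L β (L.reson f (Kop g)))) := by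
  refine ⟨4 * Csup P * (l2norm f * l2norm g), ?_⟩
  rintro _ ⟨j, rfl⟩
  exact bT_reson_le P hf hg hβ1 hβ2 j

lemma besov_reson_le {f g : Dist} (hf : Summable fun k => ‖f k‖ ^ 2)
    (hg : Summable fun k => ‖g k‖ ^ 2) {β : ℝ} (hβ1 : -2 ≤ β) (hβ2 : β ≤ 0) :
    L.besov β (L.reson f (Kop g)) ≤ 4 * Csup P * (l2norm f * l2norm g) := by
  rw [besov_eq_iSup]
  refine Real.iSup_le (fun j => bT_reson_le P hf hg hβ1 hβ2 j) ?_
  have h5 := Csup_nonneg P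
  have h6 : (0:ℝ) ≤ l2norm f * l2norm g := mul_nonneg (l2norm_nonneg f) (l2norm_nonneg g)
  positivity

def Cl2 : ℝ := 4 * (P.Cb * (2 * (⌈P.B⌉₊:ℝ) + 1))

lemma Cl2_nonneg : 0 ≤ Cl2 P := by
  have := P.hCb0
  rw [Cl2]; positivity

lemma supNorm_block_l2_le {a : Dist} (ha : Summable fun k => ‖a k‖ ^ 2) {j : ℤ}
    (hj : -1 ≤ j) :
    supNorm (L.block j a) ≤ P.Cb * (2 * (Mn P j : ℝ) + 1) * l2norm a := by
  have hsupp := block_support_sqF P hj a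
  refine le_trans (supNorm_le_sum hsupp) ?_
  have h1 : ∀ k ∈ sqF (Mn P j), ‖L.block j a k‖ ≤ P.Cb * ‖a k‖ :=
    fun k _ => block_coeff_norm_le P j a k
  refine le_trans (Finset.sum_le_sum h1) ?_
  rw [← Finset.mul_sum]
  have h2 := sum_norm_le_card_l2 ha (sqF (Mn P j))
  have h3 : Real.sqrt ((sqF (Mn P j)).card : ℝ) = 2 * (Mn P j : ℝ) + 1 := by
    rw [card_sqF]
    push_cast
    rw [show ((2:ℝ) * (Mn P j : ℝ) + 1) ^ 2 = (2 * (Mn P j : ℝ) + 1) * (2 * (Mn P j : ℝ) + 1) from sq (2 * (Mn P j : ℝ) + 1) ▸ by ring]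
    exact Real.sqrt_mul_self (by positivity)
  rw [h3] at h2
  calc P.Cb * ∑ k ∈ sqF (Mn P j), ‖a k‖
      ≤ P.Cb * ((2 * (Mn P j : ℝ) + 1) * l2norm a) :=
        mul_le_mul_of_nonneg_left h2 (le_of_lt P.hCb0)
  _ = P.Cb * (2 * (Mn P j : ℝ) + 1) * l2norm a := by ring

lemma bT_l2_le {a : Dist} (ha : Summable fun k => ‖a k‖ ^ 2) {β : ℝ}
    (hβ1 : -2 ≤ β) (hβ2 : β ≤ -1) (j : ℕ) :
    bT L β a j ≤ Cl2 P * l2norm a := by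
  rw [bT]
  set t : ℕ := ((j:ℤ) - 1).toNat with ht
  have hMn : (Mn P ((j:ℤ) - 1) : ℝ) = (⌈P.B⌉₊:ℝ) * 2 ^ t := by
    rw [Mn]
    push_cast
    ring
  have h2t : (1:ℝ) ≤ 2 ^ t := one_le_pow₀ one_le_two
  have hsup := supNorm_block_l2_le P ha (show (-1:ℤ) ≤ (j:ℤ) - 1 by omega)
  have hcard : (2 * (Mn P ((j:ℤ) - 1) : ℝ) + 1) ≤ (2 * (⌈P.B⌉₊:ℝ) + 1) * 2 ^ t := by
    rw [hMn]
    nlinarith [Nat.cast_nonneg (α := ℝ) ⌈P.B⌉₊]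
  have hkey : (2:ℝ) ^ (β * ((j:ℝ) - 1)) * (2:ℝ) ^ t ≤ 4 := by
    by_cases hj0 : j = 0
    · subst hj0
      have htt : t = 0 := by omega
      rw [htt, pow_zero, mul_one]
      exact rpow_besov_factor_le hβ1 (by linarith) 0
    · have hj1 : 1 ≤ j := Nat.one_le_iff_ne_zero.mpr hj0
      have htt : (t:ℝ) = (j:ℝ) - 1 := by
        have : t = j - 1 := by omega
        rw [this]
        push_cast [Nat.cast_sub hj1]
        ring
      have hpow : (2:ℝ) ^ t = (2:ℝ) ^ ((j:ℝ) - 1) := by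
        rw [← Real.rpow_natCast 2 t, htt]
      rw [hpow, ← Real.rpow_add two_pos]
      have hexp : β * ((j:ℝ) - 1) + ((j:ℝ) - 1) = (β + 1) * ((j:ℝ) - 1) := by ring
      rw [hexp]
      have hexp2 : (β + 1) * ((j:ℝ) - 1) ≤ 0 := by
        have h1 : β + 1 ≤ 0 := by linarith
        have h2 : (0:ℝ) ≤ (j:ℝ) - 1 := by
          have : (1:ℝ) ≤ (j:ℝ) := by exact_mod_cast hj1
          linarith
        exact mul_nonpos_of_nonpos_of_nonneg h1 h2
      calc (2:ℝ) ^ ((β + 1) * ((j:ℝ) - 1)) ≤ (2:ℝ) ^ (0:ℝ) :=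
            Real.rpow_le_rpow_of_exponent_le one_le_two hexp2
      _ = 1 := Real.rpow_zero 2
      _ ≤ 4 := by norm_num
  have h3 : (0:ℝ) ≤ (2:ℝ) ^ (β * ((j:ℝ) - 1)) := Real.rpow_nonneg (by norm_num) _
  have hl2 := l2norm_nonneg a
  have hcb := P.hCb0
  calc (2:ℝ) ^ (β * ((j:ℝ) - 1)) * supNorm (L.block ((j:ℤ) - 1) a)
      ≤ (2:ℝ) ^ (β * ((j:ℝ) - 1)) * (P.Cb * (2 * (Mn P ((j:ℤ) - 1) : ℝ) + 1) * l2norm a) :=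
        mul_le_mul_of_nonneg_left hsup h3
  _ ≤ (2:ℝ) ^ (β * ((j:ℝ) - 1)) * (P.Cb * ((2 * (⌈P.B⌉₊:ℝ) + 1) * 2 ^ t) * l2norm a) := by
      refine mul_le_mul_of_nonneg_left ?_ h3
      refine mul_le_mul_of_nonneg_right (mul_le_mul_of_nonneg_left hcard (le_of_lt hcb)) hl2
  _ = ((2:ℝ) ^ (β * ((j:ℝ) - 1)) * (2:ℝ) ^ t) * (P.Cb * (2 * (⌈P.B⌉₊:ℝ) + 1) * l2norm a) := by
      ring
  _ ≤ 4 * (P.Cb * (2 * (⌈P.B⌉₊:ℝ) + 1) * l2norm a) := by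
      refine mul_le_mul_of_nonneg_right hkey ?_
      positivity
  _ = Cl2 P * l2norm a := by rw [Cl2]; ring

lemma bdd_bT_l2 (P : Pack L) {a : Dist} (ha : Summable fun k => ‖a k‖ ^ 2) {β : ℝ}
    (hβ1 : -2 ≤ β) (hβ2 : β ≤ -1) :
    BddAbove (Set.range (bT L β a)) := by
  refine ⟨Cl2 P * l2norm a, ?_⟩
  rintro _ ⟨j, rfl⟩
  exact bT_l2_le P ha hβ1 hβ2 j

lemma besov_l2_le {a : Dist} (ha : Summable fun k => ‖a k‖ ^ 2) {β : ℝ}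
    (hβ1 : -2 ≤ β) (hβ2 : β ≤ -1) :
    L.besov β a ≤ Cl2 P * l2norm a := by
  rw [besov_eq_iSup]
  refine Real.iSup_le (fun j => bT_l2_le P ha hβ1 hβ2 j) ?_
  exact mul_nonneg (Cl2_nonneg P) (l2norm_nonneg a)

end BesovBounds

section PositivitySec

lemma tsum_ofReal {ι : Type*} (h : ι → ℝ) :
    ∑' i, ((h i : ℝ) : ℂ) = ((∑' i, h i : ℝ) : ℂ) := by
  by_cases hs : Summable h
  · exact (Complex.ofRealCLM.map_tsum hs).symm
  · have hs' : ¬ Summable (fun i => ((h i : ℝ) : ℂ)) := by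
      intro hcon
      apply hs
      have := hcon.map Complex.reCLM Complex.reCLM.continuous
      simpa [Function.comp_def] using this
    rw [tsum_eq_zero_of_not_summable hs, tsum_eq_zero_of_not_summable hs', Complex.ofReal_zero]

variable {L : LP} (P : Pack L)

/-- The scalar coefficient of a Littlewood–Paley block. -/
def blockCoeff (L : LP) (i : ℤ) (k : Freq) : ℝ :=
  if i = -1 then L.chi (toR k) else L.rho ((2 : ℝ) ^ (-i) • toR k)

lemma block_eq_coeff (i : ℤ) (a : Dist) (k : Freq) :
    L.block i a k = (blockCoeff L i k : ℂ) * a k := by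
  rw [LP.block, blockCoeff]
  split_ifs <;> rfl

lemma blockCoeff_nonneg (i : ℤ) (k : Freq) : 0 ≤ blockCoeff L i k := by
  rw [blockCoeff]
  split_ifs
  · exact L.chi_nonneg _
  · exact L.rho_nonneg _

lemma blockCoeff_neg (i : ℤ) (k : Freq) : blockCoeff L i (-k) = blockCoeff L i k := by
  rw [blockCoeff, blockCoeff]
  split_ifs
  · exact L.chi_radial _ _ (by rw [toR_neg]; simp [enorm2])
  · exact L.rho_radial _ _ (by rw [toR_neg, smul_neg]; simp [enorm2])

lemma chi_at_zero (P : Pack L) : L.chi 0 = 1 := by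
  have hpart := L.partition 0
  have hrho : ∀ j : ℕ, L.rho ((2 : ℝ) ^ (-(j:ℤ)) • (0 : ℝ × ℝ)) = 0 := by
    intro j
    rw [smul_zero]
    exact P.rho_zero 0 (Or.inl (by rw [enorm2_zero]; exact P.hr))
  rw [tsum_congr hrho, tsum_zero, add_zero] at hpart
  exact hpart

lemma reson_self_zero_nonneg (P : Pack L) {h : Dist} (hh : IsZeroMeanL2 h) :
    ∃ c : ℝ, 0 ≤ c ∧ L.reson h (Kop h) 0 = (c : ℂ) := by
  obtain ⟨h0, hsum, hreal⟩ := hh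
  have hterm : ∀ ij : ℤ × ℤ, ∃ T : ℝ, 0 ≤ T ∧ resTermF L h (Kop h) 0 ij = (T : ℂ) := by
    intro ij
    rw [resTermF]
    split_ifs with hvalid
    · obtain ⟨hi, hi', _⟩ := hvalid
      rw [mulD_block_eq_sum P hi]
      have hpt : ∀ p : Freq, ∃ t : ℝ, 0 ≤ t ∧
          L.block ij.1 h p * L.block ij.2 (Kop h) (0 - p) = (t : ℂ) := by
        intro p
        by_cases hp : p = 0
        · refine ⟨0, le_refl 0, ?_⟩
          rw [hp, block_eq_coeff, h0, mul_zero, zero_mul, Complex.ofReal_zero]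
        · set c1 := blockCoeff L ij.1 p with hc1
          set c2 := blockCoeff L ij.2 (-p) with hc2
          refine ⟨c1 * c2 * Complex.normSq (h p) / freqNorm p ^ 2, ?_, ?_⟩
          · have := blockCoeff_nonneg (L := L) ij.1 p
            have := blockCoeff_nonneg (L := L) ij.2 (-p)
            have := Complex.normSq_nonneg (h p)
            have h1 : (0:ℝ) ≤ freqNorm p ^ 2 := sq_nonneg _
            positivity
          · rw [zero_sub, block_eq_coeff, block_eq_coeff, Kop,
              if_neg (neg_ne_zero.mpr hp), freqNorm_neg, ← hreal p]
            have hconj : h p * star (h p) = ((Complex.normSq (h p) : ℝ) : ℂ) := by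
              rw [Complex.star_def, Complex.mul_conj]
            calc (c1 : ℂ) * h p * ((c2 : ℂ) * (star (h p) / ((freqNorm p ^ 2 : ℝ) : ℂ)))
                = (c1 : ℂ) * (c2 : ℂ) / ((freqNorm p ^ 2 : ℝ) : ℂ) * (h p * star (h p)) := by
                  ring
            _ = (c1 : ℂ) * (c2 : ℂ) / ((freqNorm p ^ 2 : ℝ) : ℂ) *
                  ((Complex.normSq (h p) : ℝ) : ℂ) := by rw [hconj]
            _ = ((c1 * c2 * Complex.normSq (h p) / freqNorm p ^ 2 : ℝ) : ℂ) := by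
                  push_cast
                  ring
      choose t ht using hpt
      refine ⟨∑ p ∈ sqF (Mn P ij.1), t p, ?_, ?_⟩
      · exact Finset.sum_nonneg fun p _ => (ht p).1
      · rw [Complex.ofReal_sum]
        exact Finset.sum_congr rfl fun p _ => (ht p).2
    · exact ⟨0, le_refl 0, by rw [Complex.ofReal_zero]⟩
  choose T hT using hterm
  refine ⟨∑' ij : ℤ × ℤ, T ij, tsum_nonneg fun ij => (hT ij).1, ?_⟩
  rw [reson_eq_tsum]
  calc (∑' ij : ℤ × ℤ, resTermF L h (Kop h) 0 ij)
      = ∑' ij : ℤ × ℤ, ((T ij : ℝ) : ℂ) := tsum_congr fun ij => (hT ij).2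
  _ = _ := tsum_ofReal T

end PositivitySec

section ConstDSec

variable {L : LP} (P : Pack L)

lemma constD_zero_eq : constD 0 = (0 : Dist) := by
  funext k
  rw [constD]
  split_ifs <;> simp

lemma block_constD_support (c : ℝ) (j : ℤ) :
    ∀ k ∉ ({(0 : Freq)} : Finset Freq), L.block j (constD c) k = 0 := by
  intro k hk
  have hk0 : k ≠ 0 := by simpa using hk
  rw [block_eq_coeff, constD, if_neg hk0, mul_zero]

lemma blockCoeff_at_zero_le_one (P : Pack L) (j : ℤ) : blockCoeff L j 0 ≤ 1 := by
  rw [blockCoeff, toR_zero]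
  split_ifs
  · rw [chi_at_zero P]
  · rw [smul_zero, P.rho_zero 0 (Or.inl (by rw [enorm2_zero]; exact P.hr))]
    norm_num

lemma supNorm_block_constD_le (P : Pack L) (c : ℝ) (j : ℤ) :
    supNorm (L.block j (constD c)) ≤ |c| := by
  refine le_trans (supNorm_le_sum (block_constD_support c j)) ?_
  rw [Finset.sum_singleton, block_eq_coeff, constD, if_pos rfl, norm_mul,
    Complex.norm_real, Complex.norm_real, Real.norm_eq_abs, Real.norm_eq_abs,
    abs_of_nonneg (blockCoeff_nonneg j 0)]
  have h1 := blockCoeff_at_zero_le_one P j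
  nlinarith [abs_nonneg c, blockCoeff_nonneg (L := L) j 0]

lemma bT_constD_le (P : Pack L) (c : ℝ) {β : ℝ} (hβ1 : -2 ≤ β) (hβ2 : β ≤ 0) (j : ℕ) :
    bT L β (constD c) j ≤ 4 * |c| := by
  rw [bT]
  have h1 := supNorm_block_constD_le P c ((j:ℤ) - 1)
  have h2 := rpow_besov_factor_le hβ1 hβ2 j
  have h3 : (0:ℝ) ≤ (2:ℝ) ^ (β * ((j:ℝ) - 1)) := Real.rpow_nonneg (by norm_num) _
  nlinarith [supNorm_nonneg (L.block ((j:ℤ) - 1) (constD c)), abs_nonneg c]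

end ConstDSec

section BilinearSec

variable {L : LP} (P : Pack L)

lemma Kop_add (x y : Dist) : ∀ k, Kop (x + y) k = Kop x k + Kop y k := by
  intro k
  rw [Kop, Kop, Kop]
  split_ifs
  · rw [add_zero]
  · rw [Pi.add_apply, add_div]

lemma mulD_block_add_left (P : Pack L) {i : ℤ} (hi : -1 ≤ i) (x y w : Dist) (k : Freq) :
    mulD (L.block i (x + y)) w k = mulD (L.block i x) w k + mulD (L.block i y) w k := by
  rw [mulD_block_eq_sum P hi, mulD_block_eq_sum P hi, mulD_block_eq_sum P hi,
    ← Finset.sum_add_distrib]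
  refine Finset.sum_congr rfl fun p _ => ?_
  rw [block_add, add_mul]

lemma mulD_block_add_right (P : Pack L) {i : ℤ} (hi : -1 ≤ i) (f : Dist) (v w : Dist) (k : Freq) :
    mulD (L.block i f) (fun q => v q + w q) k
      = mulD (L.block i f) v k + mulD (L.block i f) w k := by
  rw [mulD_block_eq_sum P hi, mulD_block_eq_sum P hi, mulD_block_eq_sum P hi,
    ← Finset.sum_add_distrib]
  refine Finset.sum_congr rfl fun p _ => ?_
  ring

lemma reson_add_left (P : Pack L) {x y g : Dist} (hx : Summable fun k => ‖x k‖ ^ 2)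
    (hy : Summable fun k => ‖y k‖ ^ 2) (hg : Summable fun k => ‖g k‖ ^ 2) (k : Freq) :
    L.reson (x + y) (Kop g) k = L.reson x (Kop g) k + L.reson y (Kop g) k := by
  rw [reson_eq_tsum, reson_eq_tsum, reson_eq_tsum,
    ← Summable.tsum_add (resTermF_summable P hx hg k) (resTermF_summable P hy hg k)]
  refine tsum_congr fun ij => ?_
  rw [resTermF, resTermF, resTermF]
  split_ifs with hvalid
  · exact mulD_block_add_left P hvalid.1 x y _ k
  · rw [add_zero]

lemma reson_add_right (P : Pack L) {f x y : Dist} (hf : Summable fun k => ‖f k‖ ^ 2)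
    (hx : Summable fun k => ‖x k‖ ^ 2) (hy : Summable fun k => ‖y k‖ ^ 2) (k : Freq) :
    L.reson f (Kop (x + y)) k = L.reson f (Kop x) k + L.reson f (Kop y) k := by
  rw [reson_eq_tsum, reson_eq_tsum, reson_eq_tsum,
    ← Summable.tsum_add (resTermF_summable P hf hx k) (resTermF_summable P hf hy k)]
  refine tsum_congr fun ij => ?_
  rw [resTermF, resTermF, resTermF]
  split_ifs with hvalid
  · have hblk : L.block ij.2 (Kop (x + y))
        = fun q => L.block ij.2 (Kop x) q + L.block ij.2 (Kop y) q := by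
      funext q
      have h1 : Kop (x + y) = Kop x + Kop y := funext (Kop_add x y)
      rw [h1, block_add]
    rw [hblk]
    exact mulD_block_add_right P hvalid.1 f _ _ k
  · rw [add_zero]

lemma reson_decomp (P : Pack L) {h θ : Dist} (hh : Summable fun k => ‖h k‖ ^ 2)
    (hθ : Summable fun k => ‖θ k‖ ^ 2) (hd : Summable fun k => ‖(h - θ) k‖ ^ 2) (k : Freq) :
    L.reson h (Kop h) k - L.reson θ (Kop θ) k
      = L.reson (h - θ) (Kop h) k + L.reson θ (Kop (h - θ)) k := by
  have he1 : (h - θ) + θ = h := by funext q; simp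
  have h1 : L.reson h (Kop h) k
      = L.reson (h - θ) (Kop h) k + L.reson θ (Kop h) k := by
    have := reson_add_left P hd hθ hh k
    rwa [he1] at this
  have h2 : L.reson θ (Kop h) k
      = L.reson θ (Kop (h - θ)) k + L.reson θ (Kop θ) k := by
    have := reson_add_right P hθ hd hθ k
    rwa [he1] at this
  rw [h1, h2]
  ring

end BilinearSec

section TruncSec

/-- Truncation to frequencies `|k| ≤ N`. -/
def truncF (N : ℕ) (h : Dist) : Dist := fun k => if freqNorm k ≤ N then h k else 0

lemma norm_coeff_le_l2norm {a : Dist} (ha : Summable fun k => ‖a k‖ ^ 2) (k : Freq) :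
    ‖a k‖ ≤ l2norm a := by
  have h1 : ‖a k‖ ^ 2 ≤ ∑' q, ‖a q‖ ^ 2 := Summable.le_tsum ha k fun j _ => sq_nonneg _
  rw [l2norm, ← Real.sqrt_sq (norm_nonneg (a k))]
  exact Real.sqrt_le_sqrt h1

lemma truncF_summable {h : Dist} (hh : Summable fun k => ‖h k‖ ^ 2) (N : ℕ) :
    Summable fun k => ‖truncF N h k‖ ^ 2 := by
  refine Summable.of_nonneg_of_le (fun k => sq_nonneg _) (fun k => ?_) hh
  rw [truncF]
  split_ifs
  · exact le_refl _
  · simp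

lemma sub_truncF_summable {h : Dist} (hh : Summable fun k => ‖h k‖ ^ 2) (N : ℕ) :
    Summable fun k => ‖(h - truncF N h) k‖ ^ 2 := by
  refine Summable.of_nonneg_of_le (fun k => sq_nonneg _) (fun k => ?_) hh
  rw [Pi.sub_apply, truncF]
  split_ifs
  · simp
  · rw [sub_zero]

lemma truncF_smooth {h : Dist} (hh : IsZeroMeanL2 h) (N : ℕ) :
    IsSmoothZeroMean (truncF N h) := by
  obtain ⟨h0, hsum, hreal⟩ := hh
  refine ⟨?_, ?_, ?_⟩
  · rw [truncF]
    split_ifs <;> simp [h0]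
  · intro k
    rw [truncF, truncF, freqNorm_neg]
    split_ifs
    · exact hreal k
    · rw [star_zero]
  · intro n
    refine ⟨l2norm h * (1 + N) ^ n, ?_⟩
    intro k
    rw [truncF]
    split_ifs with hk
    · have h1 : ‖h k‖ ≤ l2norm h := norm_coeff_le_l2norm hsum k
      have h2 : (1 + freqNorm k) ^ n ≤ (1 + (N:ℝ)) ^ n := by
        apply pow_le_pow_left₀ (by nlinarith [freqNorm_nonneg k])
        linarith
      have h3 : (0:ℝ) ≤ 1 + freqNorm k := by nlinarith [freqNorm_nonneg k]
      nlinarith [norm_nonneg (h k), pow_nonneg h3 n, l2norm_nonneg h,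
        pow_nonneg (by linarith : (0:ℝ) ≤ 1 + (N:ℝ)) n]
    · rw [norm_zero, zero_mul]
      have := l2norm_nonneg h
      positivity

lemma freqNorm_le_natAbs (k : Freq) : freqNorm k ≤ (k.1.natAbs + k.2.natAbs : ℕ) := by
  have h1 : freqNorm k ≤ |(k.1:ℝ)| + |(k.2:ℝ)| := by
    rw [freqNorm, enorm2]
    rw [← Real.sqrt_sq (by positivity : (0:ℝ) ≤ |(k.1:ℝ)| + |(k.2:ℝ)|)]
    apply Real.sqrt_le_sqrt
    have e1 : (toR k).1 = (k.1:ℝ) := rfl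
    have e2 : (toR k).2 = (k.2:ℝ) := rfl
    rw [e1, e2]
    nlinarith [abs_nonneg ((k.1:ℝ)), abs_nonneg ((k.2:ℝ)), sq_abs ((k.1:ℝ)), sq_abs ((k.2:ℝ)),
      mul_nonneg (abs_nonneg ((k.1:ℝ))) (abs_nonneg ((k.2:ℝ)))]
  refine le_trans h1 (le_of_eq ?_)
  push_cast
  rw [Nat.cast_natAbs, Nat.cast_natAbs]
  norm_num

lemma truncF_tail_small {h : Dist} (hh : Summable fun k => ‖h k‖ ^ 2) {ε : ℝ} (hε : 0 < ε) :
    ∃ N : ℕ, l2norm (h - truncF N h) < ε := by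
  set S : Freq → ℝ := fun k => ‖h k‖ ^ 2 with hS
  set t := ∑' k, S k with ht
  have htend := Metric.tendsto_nhds.mp hh.hasSum (ε ^ 2) (by positivity)
  obtain ⟨u₀, hu₀⟩ := htend.exists
  set N : ℕ := u₀.sup (fun k => k.1.natAbs + k.2.natAbs) with hN
  refine ⟨N, ?_⟩
  have hmem : ∀ k ∈ u₀, freqNorm k ≤ N := by
    intro k hk
    refine le_trans (freqNorm_le_natAbs k) ?_
    exact_mod_cast Nat.cast_le.mpr (Finset.le_sup (f := fun k : Freq => k.1.natAbs + k.2.natAbs) hk)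
  set headS : Freq → ℝ := fun k => if freqNorm k ≤ N then S k else 0 with hhead
  set tailS : Freq → ℝ := fun k => if freqNorm k ≤ N then 0 else S k with htail
  have hsplit : ∀ k, S k = headS k + tailS k := by
    intro k
    rw [hhead, htail]
    dsimp only
    split_ifs <;> simp
  have hheadsum : Summable headS := by
    refine Summable.of_nonneg_of_le (fun k => ?_) (fun k => ?_) hh
    · rw [hhead]; dsimp only; split_ifs; exacts [sq_nonneg _, le_refl 0]
    · rw [hhead]; dsimp only; split_ifs; exacts [le_refl _, sq_nonneg _]
  have htailsum : Summable tailS := by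
    refine Summable.of_nonneg_of_le (fun k => ?_) (fun k => ?_) hh
    · rw [htail]; dsimp only; split_ifs; exacts [le_refl 0, sq_nonneg _]
    · rw [htail]; dsimp only; split_ifs; exacts [sq_nonneg _, le_refl _]
  have hts : t = (∑' k, headS k) + ∑' k, tailS k := by
    rw [ht, ← Summable.tsum_add hheadsum htailsum]
    exact tsum_congr hsplit
  have hhead_ge : ∑ k ∈ u₀, S k ≤ ∑' k, headS k := by
    have h1 : ∑ k ∈ u₀, S k = ∑ k ∈ u₀, headS k := by
      refine Finset.sum_congr rfl fun k hk => ?_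
      rw [hhead]
      dsimp only
      rw [if_pos (hmem k hk)]
    rw [h1]
    refine Summable.sum_le_tsum u₀ (fun k _ => ?_) hheadsum
    rw [hhead]; dsimp only; split_ifs; exacts [sq_nonneg _, le_refl 0]
  have hdist : |∑ k ∈ u₀, S k - t| < ε ^ 2 := by
    have := hu₀
    rwa [Real.dist_eq] at this
  have htail_lt : ∑' k, tailS k < ε ^ 2 := by
    have h1 : t - ∑ k ∈ u₀, S k < ε ^ 2 := by
      cases abs_lt.mp hdist
      linarith
    linarith [hhead_ge, hts.ge, hts.le]
  have hdiff : ∀ k, ‖(h - truncF N h) k‖ ^ 2 = tailS k := by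
    intro k
    rw [Pi.sub_apply, truncF, htail]
    dsimp only
    split_ifs
    · simp
    · rw [sub_zero]
  rw [l2norm]
  have h2 : ∑' k, ‖(h - truncF N h) k‖ ^ 2 = ∑' k, tailS k := tsum_congr hdiff
  rw [h2]
  rw [show ε = Real.sqrt (ε ^ 2) from (Real.sqrt_sq hε.le).symm]
  exact Real.sqrt_lt_sqrt (tsum_nonneg fun k => by
    rw [htail]; dsimp only; split_ifs; exacts [le_refl 0, sq_nonneg _]) htail_lt

lemma l2norm_truncF_le {h : Dist} (hh : Summable fun k => ‖h k‖ ^ 2) (N : ℕ) :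
    l2norm (truncF N h) ≤ l2norm h := by
  rw [l2norm, l2norm]
  apply Real.sqrt_le_sqrt
  refine Summable.tsum_le_tsum (fun k => ?_) (truncF_summable hh N) hh
  rw [truncF]
  split_ifs
  · exact le_refl _
  · simp

end TruncSec

section FinalHelpers

variable {L : LP}

lemma supNorm_zero' {u : Dist} (hu : ∀ k, u k = 0) : supNorm u = 0 := by
  have heval : ∀ x : ℝ × ℝ, ‖eval u x‖ = 0 := by
    intro x
    have : eval u x = 0 := by
      rw [eval]
      calc (∑' k : Freq, u k * Complex.exp (Complex.I * (((k.1 : ℝ) * x.1 + (k.2 : ℝ) * x.2 : ℝ) : ℂ)))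
          = ∑' _ : Freq, (0:ℂ) := tsum_congr fun k => by rw [hu k, zero_mul]
      _ = 0 := tsum_zero
    rw [this, norm_zero]
  rw [supNorm]
  simp only [heval]
  exact ciSup_const

lemma besov_zero' (β : ℝ) {u : Dist} (hu : ∀ k, u k = 0) : L.besov β u = 0 := by
  rw [besov_eq_iSup]
  have hbT : ∀ j : ℕ, bT L β u j = 0 := by
    intro j
    rw [bT, supNorm_zero', mul_zero]
    intro k
    rw [block_eq_coeff, hu k, mul_zero]
  simp only [hbT]
  exact ciSup_const

lemma reson_zero_left (w : Dist) (k : Freq) : L.reson 0 w k = 0 := by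
  rw [reson_eq_tsum]
  have : ∀ ij : ℤ × ℤ, resTermF L 0 w k ij = 0 := by
    intro ij
    rw [resTermF]
    split_ifs
    · rw [mulD]
      calc (∑' p : Freq, L.block ij.1 0 p * L.block ij.2 w (k - p))
          = ∑' _ : Freq, (0:ℂ) := tsum_congr fun p => by
            rw [block_eq_coeff, Pi.zero_apply, mul_zero, zero_mul]
      _ = 0 := tsum_zero
    · rfl
  calc (∑' ij : ℤ × ℤ, resTermF L 0 w k ij) = ∑' _ : ℤ × ℤ, (0:ℂ) := tsum_congr this
  _ = 0 := tsum_zero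

end FinalHelpers

end GPAM


/-- **Lemma 3.12 (the constant cannot be dropped)**: for `α ∈ (2/3,1)`, the closure in
`ℋ^α` of `{(h, h∘Kh) : h ∈ ℋ}` is strictly contained in `𝒳^α`: it is a subset,
`(0,-1) ∈ 𝒳^α`, but no sequence `(h_n, h_n∘Kh_n)` converges to `(0,-1)` in `ℋ^α`. -/
theorem strict_inclusion_without_constants (L : GPAM.LP) (α : ℝ)
    (hα : 2 / 3 < α) (hα' : α < 1) :
    (GPAM.clos L α
        {Ξ | ∃ h : GPAM.Dist, GPAM.IsZeroMeanL2 h ∧ Ξ = (h, L.reson h (GPAM.Kop h))}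
      ⊆ GPAM.Xspace L α) ∧
    ((0 : GPAM.Dist), GPAM.constD (-1)) ∈ GPAM.Xspace L α ∧
    ((0 : GPAM.Dist), GPAM.constD (-1)) ∉
      GPAM.clos L α
        {Ξ | ∃ h : GPAM.Dist, GPAM.IsZeroMeanL2 h ∧ Ξ = (h, L.reson h (GPAM.Kop h))} := by
  obtain ⟨P⟩ := GPAM.exists_pack L
  have hβ1a : (-2:ℝ) ≤ α - 2 := by linarith
  have hβ1b : α - 2 ≤ -1 := by linarith
  have hβ2a : (-2:ℝ) ≤ 2 * α - 2 := by linarith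
  have hβ2b : 2 * α - 2 ≤ 0 := by linarith
  refine ⟨?_, ?_, ?_⟩
  · -- Part 1 : inclusion into 𝒳^α
    intro Ξ hΞ δ hδ
    obtain ⟨Ξ', hΞ'S, hlt⟩ := hΞ (δ/2) (by positivity)
    obtain ⟨h, hh, rfl⟩ := hΞ'S
    have hsum : Summable fun k => ‖h k‖ ^ 2 := hh.2.1
    have hCl0 := GPAM.Cl2_nonneg P
    have hCs0 := GPAM.Csup_nonneg P
    have hl2h := GPAM.l2norm_nonneg h
    have hden0 : (0:ℝ) < GPAM.Cl2 P + 4 * GPAM.Csup P * (2 * GPAM.l2norm h + 1) + 1 := by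
      nlinarith [mul_nonneg hCs0 hl2h]
    set ε : ℝ := δ / (2 * (GPAM.Cl2 P + 4 * GPAM.Csup P * (2 * GPAM.l2norm h + 1) + 1)) with hε
    have hε0 : 0 < ε := by
      rw [hε]
      positivity
    obtain ⟨N, hN⟩ := GPAM.truncF_tail_small hsum hε0
    have hθsm := GPAM.truncF_smooth hh N
    have hθsum := GPAM.truncF_summable hsum N
    have hdsum := GPAM.sub_truncF_summable hsum N
    have hθle := GPAM.l2norm_truncF_le hsum N
    have hdn := GPAM.l2norm_nonneg (h - GPAM.truncF N h)
    have hθn := GPAM.l2norm_nonneg (GPAM.truncF N h)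
    refine ⟨GPAM.lift L (GPAM.truncF N h) 0, ⟨GPAM.truncF N h, 0, hθsm, rfl⟩, ?_⟩
    have e1 : Ξ.1 - (GPAM.lift L (GPAM.truncF N h) 0).1
        = (Ξ.1 - h) + (h - GPAM.truncF N h) := by
      funext k
      simp only [GPAM.lift, Pi.sub_apply, Pi.add_apply]
      ring
    have e2 : Ξ.2 - (GPAM.lift L (GPAM.truncF N h) 0).2
        = (Ξ.2 - L.reson h (GPAM.Kop h)) +
          (L.reson (h - GPAM.truncF N h) (GPAM.Kop h)
            + L.reson (GPAM.truncF N h) (GPAM.Kop (h - GPAM.truncF N h))) := by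
      funext k
      have h0 : (GPAM.lift L (GPAM.truncF N h) 0).2 k
          = L.reson (GPAM.truncF N h) (GPAM.Kop (GPAM.truncF N h)) k - GPAM.constD 0 k := rfl
      have hc0 : GPAM.constD (0:ℝ) k = 0 := by
        rw [GPAM.constD]
        split_ifs <;> simp
      have hd := GPAM.reson_decomp P hsum hθsum hdsum k
      simp only [Pi.sub_apply, Pi.add_apply, h0, hc0, sub_zero]
      linear_combination hd
    have hb1 : L.besov (α - 2) (Ξ.1 - (GPAM.lift L (GPAM.truncF N h) 0).1) ≤
        L.besov (α - 2) (Ξ.1 - h) + GPAM.Cl2 P * GPAM.l2norm (h - GPAM.truncF N h) := by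
      rw [e1]
      refine le_trans (GPAM.besov_add_le P _ _ _ (GPAM.bdd_bT_l2 P hdsum hβ1a hβ1b)) ?_
      exact add_le_add (le_refl _) (GPAM.besov_l2_le P hdsum hβ1a hβ1b)
    have hb2 : L.besov (2 * α - 2) (Ξ.2 - (GPAM.lift L (GPAM.truncF N h) 0).2) ≤
        L.besov (2 * α - 2) (Ξ.2 - L.reson h (GPAM.Kop h)) +
          (4 * GPAM.Csup P * (GPAM.l2norm (h - GPAM.truncF N h) * GPAM.l2norm h)
            + 4 * GPAM.Csup P *
              (GPAM.l2norm (GPAM.truncF N h) * GPAM.l2norm (h - GPAM.truncF N h))) := by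
      rw [e2]
      have hbddAB : BddAbove (Set.range (GPAM.bT L (2*α-2)
          (L.reson (h - GPAM.truncF N h) (GPAM.Kop h)
            + L.reson (GPAM.truncF N h) (GPAM.Kop (h - GPAM.truncF N h))))) := by
        refine ⟨4 * GPAM.Csup P * (GPAM.l2norm (h - GPAM.truncF N h) * GPAM.l2norm h)
          + 4 * GPAM.Csup P *
            (GPAM.l2norm (GPAM.truncF N h) * GPAM.l2norm (h - GPAM.truncF N h)), ?_⟩
        rintro _ ⟨j, rfl⟩
        refine le_trans (GPAM.bT_add_le P _ _ _ j) (add_le_add ?_ ?_)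
        · exact GPAM.bT_reson_le P hdsum hsum hβ2a hβ2b j
        · exact GPAM.bT_reson_le P hθsum hdsum hβ2a hβ2b j
      refine le_trans (GPAM.besov_add_le P _ _ _ hbddAB) ?_
      refine add_le_add (le_refl _) ?_
      refine le_trans
        (GPAM.besov_add_le P _ _ _ (GPAM.bdd_bT_reson P hθsum hdsum hβ2a hβ2b)) ?_
      exact add_le_add (GPAM.besov_reson_le P hdsum hsum hβ2a hβ2b)
        (GPAM.besov_reson_le P hθsum hdsum hβ2a hβ2b)
    have hstep : GPAM.Cl2 P * GPAM.l2norm (h - GPAM.truncF N h)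
        + (4 * GPAM.Csup P * (GPAM.l2norm (h - GPAM.truncF N h) * GPAM.l2norm h)
            + 4 * GPAM.Csup P *
              (GPAM.l2norm (GPAM.truncF N h) * GPAM.l2norm (h - GPAM.truncF N h)))
        ≤ δ / 2 := by
      have hcoefle : GPAM.Cl2 P + 4 * GPAM.Csup P * GPAM.l2norm h
          + 4 * GPAM.Csup P * GPAM.l2norm (GPAM.truncF N h)
          ≤ GPAM.Cl2 P + 4 * GPAM.Csup P * (2 * GPAM.l2norm h + 1) + 1 := by
        nlinarith [mul_le_mul_of_nonneg_left hθle (by positivity : (0:ℝ) ≤ 4 * GPAM.Csup P),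
          mul_nonneg hCs0 hl2h]
      have hεd : ε * (2 * (GPAM.Cl2 P + 4 * GPAM.Csup P * (2 * GPAM.l2norm h + 1) + 1)) = δ := by
        rw [hε]
        field_simp
      nlinarith [hN, hε0, hcoefle, hdn,
        mul_le_mul_of_nonneg_right hcoefle hdn,
        mul_le_mul_of_nonneg_left hN.le
          (by nlinarith [mul_nonneg hCs0 hl2h, mul_nonneg hCs0 hθn] :
            (0:ℝ) ≤ GPAM.Cl2 P + 4 * GPAM.Csup P * GPAM.l2norm h
              + 4 * GPAM.Csup P * GPAM.l2norm (GPAM.truncF N h))]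
    have hmid : GPAM.hDist L α Ξ (h, L.reson h (GPAM.Kop h))
        = L.besov (α - 2) (Ξ.1 - h) + L.besov (2 * α - 2) (Ξ.2 - L.reson h (GPAM.Kop h)) := rfl
    rw [hmid] at hlt
    have hgoal : GPAM.hDist L α Ξ (GPAM.lift L (GPAM.truncF N h) 0)
        = L.besov (α - 2) (Ξ.1 - (GPAM.lift L (GPAM.truncF N h) 0).1)
          + L.besov (2 * α - 2) (Ξ.2 - (GPAM.lift L (GPAM.truncF N h) 0).2) := rfl
    rw [hgoal]
    linarith
  · -- Part 2 : (0, -1) ∈ 𝒳^α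
    intro δ hδ
    refine ⟨GPAM.lift L (0 : GPAM.Dist) 1, ⟨0, 1, ?_, rfl⟩, ?_⟩
    · refine ⟨rfl, ⟨fun k => by simp, fun n => ⟨0, fun k => by simp⟩⟩⟩
    · have hz1 : ∀ k, (((0 : GPAM.Dist), GPAM.constD (-1)).1
          - (GPAM.lift L (0 : GPAM.Dist) 1).1) k = 0 := by
        intro k
        simp [GPAM.lift]
      have hz2 : ∀ k, (((0 : GPAM.Dist), GPAM.constD (-1)).2
          - (GPAM.lift L (0 : GPAM.Dist) 1).2) k = 0 := by
        intro k
        have h0 : (GPAM.lift L (0 : GPAM.Dist) 1).2 k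
            = L.reson 0 (GPAM.Kop 0) k - GPAM.constD 1 k := rfl
        simp only [Pi.sub_apply, h0, GPAM.reson_zero_left]
        rw [GPAM.constD, GPAM.constD]
        split_ifs <;> norm_num
      have : GPAM.hDist L α ((0 : GPAM.Dist), GPAM.constD (-1))
          (GPAM.lift L (0 : GPAM.Dist) 1) = 0 := by
        rw [GPAM.hDist, GPAM.besov_zero' _ hz1, GPAM.besov_zero' _ hz2, add_zero]
      rw [this]
      exact hδ
  · -- Part 3 : (0, -1) is not in the closure without constants
    intro hmem
    obtain ⟨Ξ', hΞ'S, hlt⟩ := hmem 1 one_pos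
    obtain ⟨h, hh, rfl⟩ := hΞ'S
    have hsum : Summable fun k => ‖h k‖ ^ 2 := hh.2.1
    have hbsum : GPAM.constD (-1) - L.reson h (GPAM.Kop h)
        = GPAM.constD (-1) + (-(L.reson h (GPAM.Kop h))) := by
      funext k
      simp [sub_eq_add_neg]
    have hbdd : BddAbove (Set.range (GPAM.bT L (2*α-2)
        (GPAM.constD (-1) - L.reson h (GPAM.Kop h)))) := by
      refine ⟨4 * |(-1:ℝ)| + 4 * GPAM.Csup P * (GPAM.l2norm h * GPAM.l2norm h), ?_⟩
      rintro _ ⟨j, rfl⟩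
      rw [hbsum]
      refine le_trans (GPAM.bT_add_le P _ _ _ j) (add_le_add ?_ ?_)
      · exact GPAM.bT_constD_le P (-1) hβ2a hβ2b j
      · rw [GPAM.bT_neg]
        exact GPAM.bT_reson_le P hsum hsum hβ2a hβ2b j
    obtain ⟨c, hc0, hcres⟩ := GPAM.reson_self_zero_nonneg P hh
    have hb0 : (GPAM.constD (-1) - L.reson h (GPAM.Kop h)) 0 = ((-1 - c : ℝ) : ℂ) := by
      rw [Pi.sub_apply, GPAM.constD, if_pos rfl, hcres]
      push_cast
      ring
    have hnormb0 : (1:ℝ) ≤ ‖(GPAM.constD (-1) - L.reson h (GPAM.Kop h)) 0‖ := by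
      rw [hb0, Complex.norm_real, Real.norm_eq_abs, abs_of_nonpos (by linarith)]
      linarith
    have hblock : L.block (-1) (GPAM.constD (-1) - L.reson h (GPAM.Kop h)) 0
        = (GPAM.constD (-1) - L.reson h (GPAM.Kop h)) 0 := by
      rw [GPAM.block_eq_coeff, GPAM.blockCoeff, if_pos rfl, GPAM.toR_zero,
        GPAM.chi_at_zero P]
      simp
    have hsup : (1:ℝ) ≤ GPAM.supNorm
        (L.block (-1) (GPAM.constD (-1) - L.reson h (GPAM.Kop h))) := by
      refine le_trans hnormb0 ?_
      rw [← hblock]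
      exact GPAM.coeff_zero_le_supNorm
        (GPAM.block_support_sqF P (by norm_num) (GPAM.constD (-1) - L.reson h (GPAM.Kop h)))
    have hbT0 : (1:ℝ) ≤ GPAM.bT L (2*α-2) (GPAM.constD (-1) - L.reson h (GPAM.Kop h)) 0 := by
      rw [GPAM.bT]
      have hfac : (1:ℝ) ≤ (2:ℝ) ^ ((2*α-2) * (((0:ℕ):ℝ) - 1)) := by
        rw [← Real.rpow_zero 2]
        apply Real.rpow_le_rpow_of_exponent_le one_le_two
        push_cast
        nlinarith
      have hidx : ((0:ℕ):ℤ) - 1 = -1 := by norm_num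
      rw [hidx]
      nlinarith [hsup, hfac,
        GPAM.supNorm_nonneg (L.block (-1) (GPAM.constD (-1) - L.reson h (GPAM.Kop h)))]
    have hbes : (1:ℝ) ≤ L.besov (2*α-2) (GPAM.constD (-1) - L.reson h (GPAM.Kop h)) := by
      rw [GPAM.besov_eq_iSup]
      exact le_trans hbT0 (le_ciSup hbdd 0)
    have hges : (0:ℝ) ≤ L.besov (α-2) ((0:GPAM.Dist) - h) := GPAM.besov_nonneg _ _
    have hdd : GPAM.hDist L α ((0 : GPAM.Dist), GPAM.constD (-1)) (h, L.reson h (GPAM.Kop h))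
        = L.besov (α - 2) ((0:GPAM.Dist) - h)
          + L.besov (2 * α - 2) (GPAM.constD (-1) - L.reson h (GPAM.Kop h)) := rfl
    rw [hdd] at hlt
    linarith
end
end
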